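/- arXiv:1411.2707 — 8 statements merged into one kernel-verified Lean document; each statement's English description precedes it below -/
import Mathlib

section
/- The kernel q_n of Q^n, where Q = (P+P²)/2, satisfies improved sub-Gaussian estimates: there exist constants c', C' > 0 such that for all x, y ∈ Γ, q_n(x,y) ≤ (C'/V(n^{1/γ})) exp(−(d(x,y)^γ/(C'n))^{1/(γ−1)}) for all n ≥ 1, and q_n(x,y) ≥ (c'/V(n^{1/γ})) exp(−(d(x,y)^γ/(c'n))^{1/(γ−1)}) for all n ≥ max(1, d(x,y)) (in particular the lower bound holds for q_n itself, not only for q_n + q_{n+1}). -/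
/-!
Since `Q = P (I + P) / 2`, the binomial theorem gives `2ⁿ q_n = ∑_{j ≤ n} C(n, j) p_{n+j}`.
All the times `n + j` lie in `[n, 2n]`, so by monotonicity of `V` each `p_{n+j}` obeys the
sub-Gaussian upper bound at time `n` with the constant doubled, and averaging against the binomial
weights (which sum to `2ⁿ`) gives the upper bound. For the lower bound, Pascal's rule regroups the
sum as `∑_{j < n} C(n-1, j) (p_{n+j} + p_{n+j+1})`; each pair is bounded below by the assumed
estimate for `p_m + p_{m+1}` at time `m = n + j`, which volume doubling brings back to time `n`.
-/

open scoped BigOperators ENNReal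
open Filter Classical

noncomputable section

/-- The kernel (with respect to the measure `μ`) of the `n`-th power of the Markov operator
whose kernel with respect to `μ` is `k`. -/
def iterKernel {Γ : Type*} (μ : Γ → ℝ) (k : Γ → Γ → ℝ) : ℕ → Γ → Γ → ℝ
  | 0 => fun x y => if x = y then 1 / μ x else 0
  | n + 1 => fun x y => ∑' z : Γ, iterKernel μ k n x z * k z y * μ z

open Function Finset

theorem sum_range_choose_succ_mul {R : Type*} [NonAssocSemiring R] (n : ℕ) (a : ℕ → R) :
    ∑ j ∈ range (n + 2), ((n + 1).choose j : R) * a j =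
      ∑ j ∈ range (n + 1), (n.choose j : R) * (a j + a (j + 1)) := by
  rw [sum_choose_succ_mul (fun j _ => a j), ← sum_add_distrib]
  simp only [mul_add]

section IterKernel

variable {Γ : Type*} {μ : Γ → ℝ} {k : Γ → Γ → ℝ}

theorem iterKernel_support_finite (hk : ∀ z, (support (k z)).Finite) (n : ℕ) (x : Γ) :
    (support (iterKernel μ k n x)).Finite := by
  induction n with
  | zero =>
    refine (Set.finite_singleton x).subset fun y hy => ?_
    by_contra hxy
    exact hy (if_neg (Ne.symm hxy))
  | succ n ih =>
    refine (ih.biUnion fun z _ => hk z).subset fun y hy => ?_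
    by_contra hy'
    simp only [Set.mem_iUnion, mem_support, not_exists, not_not] at hy'
    have hterm (z : Γ) : iterKernel μ k n x z * k z y * μ z = 0 := by
      by_cases hz : iterKernel μ k n x z = 0
      · simp [hz]
      · simp [hy' z hz]
    exact hy (by simp only [iterKernel, hterm, tsum_zero])

theorem summable_iterKernel_mul (hk : ∀ z, (support (k z)).Finite) (n : ℕ) (x : Γ)
    (f : Γ → ℝ) : Summable fun z => iterKernel μ k n x z * f z :=
  summable_of_hasFiniteSupport <|
    (iterKernel_support_finite hk n x).subset (support_mul_subset_left _ _)

theorem iterKernel_add (hμ : ∀ x, μ x ≠ 0) (hk : ∀ z, (support (k z)).Finite) (a b : ℕ)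
    (x y : Γ) :
    iterKernel μ k (a + b) x y = ∑' z, iterKernel μ k a x z * iterKernel μ k b z y * μ z := by
  induction b generalizing y with
  | zero =>
    rw [tsum_eq_single y fun z hzy => by simp [iterKernel, hzy]]
    simp [iterKernel, hμ y]
  | succ b ih =>
    have hsupp : (support (uncurry fun u z =>
        iterKernel μ k a x u * μ u * (iterKernel μ k b u z * k z y * μ z))).Finite := by
      refine ((iterKernel_support_finite (μ := μ) hk a x).biUnion fun u _ =>
        (Set.finite_singleton u).prod (iterKernel_support_finite (μ := μ) hk b u)).subset ?_
      rintro ⟨u, z⟩ h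
      simp only [mem_support, uncurry_apply_pair, mul_ne_zero_iff] at h
      exact Set.mem_biUnion h.1.1 (Set.mk_mem_prod rfl h.2.1.1)
    calc iterKernel μ k (a + (b + 1)) x y
        = ∑' z, (∑' u, iterKernel μ k a x u * iterKernel μ k b u z * μ u) * k z y * μ z := by
          simp only [← ih]; rfl
      _ = ∑' z, ∑' u, iterKernel μ k a x u * μ u * (iterKernel μ k b u z * k z y * μ z) := by
          simp only [← tsum_mul_right]
          exact tsum_congr fun z => tsum_congr fun u => by ring
      _ = ∑' u, ∑' z, iterKernel μ k a x u * μ u * (iterKernel μ k b u z * k z y * μ z) :=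
          (summable_of_hasFiniteSupport hsupp).tsum_comm
      _ = ∑' u, iterKernel μ k a x u * iterKernel μ k (b + 1) u y * μ u :=
          tsum_congr fun u => by rw [tsum_mul_left, iterKernel]; ring

theorem two_pow_mul_iterKernel_half_add (hμ : ∀ x, μ x ≠ 0) (hk : ∀ z, (support (k z)).Finite)
    (n : ℕ) (x y : Γ) :
    2 ^ n * iterKernel μ (fun x y => (iterKernel μ k 1 x y + iterKernel μ k 2 x y) / 2) n x y =
      ∑ j ∈ range (n + 1), (n.choose j : ℝ) * iterKernel μ k (n + j) x y := by
  induction n generalizing y with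
  | zero => simp [iterKernel]
  | succ n ih =>
    have hsum (j i : ℕ) : Summable fun z =>
        iterKernel μ k (n + j) x z * iterKernel μ k i z y * μ z := by
      simpa only [mul_assoc] using summable_iterKernel_mul (μ := μ) hk (n + j) x _
    calc 2 ^ (n + 1) * iterKernel μ
            (fun x y => (iterKernel μ k 1 x y + iterKernel μ k 2 x y) / 2) (n + 1) x y
        = ∑' z, (2 ^ n * iterKernel μ
            (fun x y => (iterKernel μ k 1 x y + iterKernel μ k 2 x y) / 2) n x z) *
              (iterKernel μ k 1 z y + iterKernel μ k 2 z y) * μ z := by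
          rw [iterKernel, ← tsum_mul_left]
          exact tsum_congr fun z => by ring
      _ = ∑' z, ∑ j ∈ range (n + 1), (n.choose j : ℝ) *
            (iterKernel μ k (n + j) x z * iterKernel μ k 1 z y * μ z +
              iterKernel μ k (n + j) x z * iterKernel μ k 2 z y * μ z) := by
          refine tsum_congr fun z => ?_
          rw [ih, sum_mul, sum_mul]
          exact sum_congr rfl fun j _ => by ring
      _ = ∑ j ∈ range (n + 1), (n.choose j : ℝ) *
            (iterKernel μ k (n + j + 1) x y + iterKernel μ k (n + j + 2) x y) := by
          rw [Summable.tsum_finsetSum fun j _ => ((hsum j 1).add (hsum j 2)).mul_left _]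
          refine sum_congr rfl fun j _ => ?_
          rw [tsum_mul_left, (hsum j 1).tsum_add (hsum j 2), ← iterKernel_add hμ hk,
            ← iterKernel_add hμ hk]
      _ = ∑ j ∈ range (n + 2), ((n + 1).choose j : ℝ) * iterKernel μ k (n + 1 + j) x y := by
          rw [sum_range_choose_succ_mul]
          refine sum_congr rfl fun j _ => ?_
          rw [show n + 1 + j = n + j + 1 by omega, show n + 1 + (j + 1) = n + j + 2 by omega]

end IterKernel

theorem sum_range_choose_mul_le {R : Type*} [Semiring R] [PartialOrder R] [IsOrderedRing R]
    {n : ℕ} {a : ℕ → R} {B : R} (h : ∀ j ≤ n, a j ≤ B) :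
    ∑ j ∈ range (n + 1), (n.choose j : R) * a j ≤ 2 ^ n * B :=
  calc ∑ j ∈ range (n + 1), (n.choose j : R) * a j
      ≤ ∑ j ∈ range (n + 1), (n.choose j : R) * B :=
        sum_le_sum fun j hj => mul_le_mul_of_nonneg_left
          (h j (Nat.lt_succ_iff.1 (mem_range.1 hj))) (Nat.cast_nonneg _)
    _ = 2 ^ n * B := by rw [← sum_mul, ← Nat.cast_sum, Nat.sum_range_choose, Nat.cast_pow,
          Nat.cast_ofNat]

theorem pow_mul_le_sum_range_choose_mul {R : Type*} [Semiring R] [PartialOrder R]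
    [IsOrderedRing R] {n : ℕ} {a : ℕ → R} {L : R} (h : ∀ j ≤ n, L ≤ a j + a (j + 1)) :
    2 ^ n * L ≤ ∑ j ∈ range (n + 2), ((n + 1).choose j : R) * a j :=
  calc 2 ^ n * L = ∑ j ∈ range (n + 1), (n.choose j : R) * L := by
        rw [← sum_mul, ← Nat.cast_sum, Nat.sum_range_choose, Nat.cast_pow, Nat.cast_ofNat]
    _ ≤ ∑ j ∈ range (n + 1), (n.choose j : R) * (a j + a (j + 1)) :=
        sum_le_sum fun j hj => mul_le_mul_of_nonneg_left
          (h j (Nat.lt_succ_iff.1 (mem_range.1 hj))) (Nat.cast_nonneg _)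
    _ = _ := (sum_range_choose_succ_mul n a).symm

theorem Real.exp_neg_rpow_div_le {a s s' e : ℝ} (ha : 0 ≤ a) (he : 0 ≤ e) (hs : 0 < s)
    (hss' : s ≤ s') : Real.exp (-((a / s) ^ e)) ≤ Real.exp (-((a / s') ^ e)) :=
  Real.exp_le_exp.2 <| neg_le_neg <| Real.rpow_le_rpow (div_nonneg ha (hs.trans_le hss').le)
    (div_le_div_of_nonneg_left ha hs hss') he

-- The right-hand sides of the estimates in `improved_subgaussian_Q` unfold to this.
def subGaussianBound (V : ℝ → ℝ) (γ K t r : ℝ) : ℝ :=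
  K / V (t ^ (1 / γ)) * Real.exp (-((r ^ γ / (K * t)) ^ (1 / (γ - 1))))

section SubGaussianBound

variable {V : ℝ → ℝ} {γ K t t' r : ℝ}

theorem apply_rpow_le_mul_of_le_two_mul {C_D : ℝ} (hVmono : MonotoneOn V (Set.Ici 0))
    (hdoub : ∀ r : ℝ, 0 < r → V (2 * r) ≤ C_D * V r) (hγ : 1 ≤ γ) (ht : 0 < t) (htt' : t ≤ t')
    (ht't : t' ≤ 2 * t) : V (t' ^ (1 / γ)) ≤ C_D * V (t ^ (1 / γ)) := by
  have hγ' : 0 ≤ 1 / γ := by positivity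
  have hroot : t' ^ (1 / γ) ≤ 2 * t ^ (1 / γ) :=
    calc t' ^ (1 / γ) ≤ (2 * t) ^ (1 / γ) := Real.rpow_le_rpow (ht.le.trans htt') ht't hγ'
      _ = 2 ^ (1 / γ) * t ^ (1 / γ) := Real.mul_rpow zero_le_two ht.le
      _ ≤ 2 * t ^ (1 / γ) := by
        gcongr
        exact Real.rpow_le_self_of_one_le one_le_two ((div_le_one (by linarith)).2 hγ)
  exact (hVmono (Real.rpow_nonneg (ht.le.trans htt') _) (Set.mem_Ici.2 (by positivity))
    hroot).trans (hdoub _ (by positivity))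

theorem subGaussianBound_le_of_le_two_mul (hVpos : ∀ r : ℝ, 0 ≤ r → 0 < V r)
    (hVmono : MonotoneOn V (Set.Ici 0)) (hγ : 1 ≤ γ) (hK : 0 < K) (ht : 0 < t) (htt' : t ≤ t')
    (ht't : t' ≤ 2 * t) (hr : 0 ≤ r) :
    subGaussianBound V γ K t' r ≤ subGaussianBound V γ (2 * K) t r := by
  have hVt : 0 < V (t ^ (1 / γ)) := hVpos _ (by positivity)
  have hVtt' : V (t ^ (1 / γ)) ≤ V (t' ^ (1 / γ)) :=
    hVmono (Set.mem_Ici.2 (by positivity)) (Real.rpow_nonneg (ht.le.trans htt') _)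
      (Real.rpow_le_rpow ht.le htt' (by positivity))
  have hprefactor : K / V (t' ^ (1 / γ)) ≤ 2 * K / V (t ^ (1 / γ)) :=
    (div_le_div_of_nonneg_left hK.le hVt hVtt').trans (by gcongr; linarith)
  exact mul_le_mul hprefactor (Real.exp_neg_rpow_div_le (Real.rpow_nonneg hr _)
    (one_div_nonneg.2 (by linarith)) (mul_pos hK (ht.trans_le htt')) (by nlinarith))
    (Real.exp_nonneg _) (by positivity)

theorem subGaussianBound_div_le_of_le_two_mul {C_D : ℝ} (hVpos : ∀ r : ℝ, 0 ≤ r → 0 < V r)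
    (hVmono : MonotoneOn V (Set.Ici 0)) (hdoub : ∀ r : ℝ, 0 < r → V (2 * r) ≤ C_D * V r)
    (hC_D : 1 ≤ C_D) (hγ : 1 ≤ γ) (hK : 0 < K) (ht : 0 < t) (htt' : t ≤ t')
    (ht't : t' ≤ 2 * t) (hr : 0 ≤ r) :
    subGaussianBound V γ (K / C_D) t r ≤ subGaussianBound V γ K t' r := by
  have hprefactor : K / C_D / V (t ^ (1 / γ)) ≤ K / V (t' ^ (1 / γ)) := by
    rw [div_div]
    exact div_le_div_of_nonneg_left hK.le (hVpos _ (Real.rpow_nonneg (ht.le.trans htt') _))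
      (apply_rpow_le_mul_of_le_two_mul hVmono hdoub hγ ht htt' ht't)
  exact mul_le_mul hprefactor (Real.exp_neg_rpow_div_le (Real.rpow_nonneg hr _)
    (one_div_nonneg.2 (by linarith)) (by positivity)
    (mul_le_mul (div_le_self hK.le hC_D) htt' ht.le hK.le)) (Real.exp_nonneg _)
    (div_nonneg hK.le (hVpos _ (Real.rpow_nonneg (ht.le.trans htt') _)).le)

theorem subGaussianBound_le_mul_of_le {K' : ℝ} (hVpos : ∀ r : ℝ, 0 ≤ r → 0 < V r)
    (hγ : 1 ≤ γ) (hK' : 0 < K') (hK'K : K' ≤ K) (ht : 0 < t) (hr : 0 ≤ r) :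
    subGaussianBound V γ K' t r ≤ K' / K * subGaussianBound V γ K t r := by
  have hK : 0 < K := hK'.trans_le hK'K
  have hVt : 0 < V (t ^ (1 / γ)) := hVpos _ (by positivity)
  have hprefactor : K' / K * (K / V (t ^ (1 / γ))) = K' / V (t ^ (1 / γ)) := by field_simp
  rw [subGaussianBound, subGaussianBound, ← mul_assoc, hprefactor]
  exact mul_le_mul_of_nonneg_left (Real.exp_neg_rpow_div_le (Real.rpow_nonneg hr _)
    (one_div_nonneg.2 (by linarith)) (by positivity) (by gcongr)) (by positivity)

end SubGaussianBound

theorem improved_subgaussian_Q_general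
    {Γ : Type*}
    (G : SimpleGraph Γ)
    (hlocfin : ∀ x : Γ, {y : Γ | G.Adj x y}.Finite)
    -- edge weights
    (w : Γ → Γ → ℝ)
    (hw_nonneg : ∀ x y, 0 ≤ w x y)
    (hw_pos : ∀ x y, 0 < w x y ↔ G.Adj x y)
    -- vertex measure
    (μ : Γ → ℝ)
    -- (count): μ comparable to the counting measure
    (Cμ : ℝ) (hCμ : 1 ≤ Cμ) (hcount : ∀ x, Cμ⁻¹ ≤ μ x ∧ μ x ≤ Cμ)
    -- volume of balls and uniform volume doubling
    (V : ℝ → ℝ) (hVpos : ∀ r : ℝ, 0 ≤ r → 0 < V r)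
    (hVmono : StrictMonoOn V (Set.Ici (0 : ℝ)))
    (C_D : ℝ) (hC_D : 1 < C_D)
    (hdoub : ∀ r : ℝ, 0 < r → V (2 * r) ≤ C_D * V r)
    -- the heat kernel of the natural random walk
    (p : ℕ → Γ → Γ → ℝ)
    (hp : ∀ n, p n = iterKernel μ (fun x y => w x y / (μ x * μ y)) n)
    -- sub-Gaussian estimates with escape time exponent γ
    (γ : ℝ) (hγ : 1 < γ)
    (c C : ℝ) (hc : 0 < c) (hC : 0 < C)
    (hsubgU : ∀ (n : ℕ) (x y : Γ), 1 ≤ n →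
      p n x y ≤ C / V ((n : ℝ) ^ (1 / γ)) *
        Real.exp (-(((G.dist x y : ℝ) ^ γ / (C * n)) ^ (1 / (γ - 1)))))
    (hsubgL : ∀ (n : ℕ) (x y : Γ), 1 ≤ n → G.dist x y ≤ n →
      c / V ((n : ℝ) ^ (1 / γ)) *
        Real.exp (-(((G.dist x y : ℝ) ^ γ / (c * n)) ^ (1 / (γ - 1))))
        ≤ p n x y + p (n + 1) x y)
    -- Q = (P + P²)/2 and its iterated kernels q_n
    (q : ℕ → Γ → Γ → ℝ)
    (hq : ∀ n, q n = iterKernel μ (fun x y => (p 1 x y + p 2 x y) / 2) n) :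
    ∃ c' C' : ℝ, 0 < c' ∧ 0 < C' ∧
      (∀ (n : ℕ) (x y : Γ), 1 ≤ n →
        q n x y ≤ C' / V ((n : ℝ) ^ (1 / γ)) *
          Real.exp (-(((G.dist x y : ℝ) ^ γ / (C' * n)) ^ (1 / (γ - 1))))) ∧
      (∀ (n : ℕ) (x y : Γ), 1 ≤ n → G.dist x y ≤ n →
        c' / V ((n : ℝ) ^ (1 / γ)) *
          Real.exp (-(((G.dist x y : ℝ) ^ γ / (c' * n)) ^ (1 / (γ - 1)))) ≤ q n x y) := by
  have hμ (x : Γ) : μ x ≠ 0 := ((inv_pos.2 (by linarith)).trans_le (hcount x).1).ne'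
  have hk (x : Γ) : (support fun y => w x y / (μ x * μ y)).Finite :=
    (hlocfin x).subset fun y hy =>
      (hw_pos x y).1 ((hw_nonneg x y).lt_of_ne' (div_ne_zero_iff.1 hy).1)
  have hbinom (n : ℕ) (x y : Γ) :
      2 ^ n * q n x y = ∑ j ∈ range (n + 1), (n.choose j : ℝ) * p (n + j) x y := by
    simp only [hq, hp, two_pow_mul_iterKernel_half_add hμ hk]
  have hd (x y : Γ) : (0 : ℝ) ≤ G.dist x y := Nat.cast_nonneg _
  have htime {n j : ℕ} (hj : j ≤ n) : ((n + j : ℕ) : ℝ) ≤ 2 * (n : ℝ) := by norm_cast; omega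
  refine ⟨c / C_D / 2, 2 * C, by positivity, by positivity, fun n x y hn => ?_,
    fun n x y hn hxy => ?_⟩
  · have hsum := sum_range_choose_mul_le (n := n) (a := fun j => p (n + j) x y)
      (B := subGaussianBound V γ (2 * C) n (G.dist x y)) fun j hj =>
        (hsubgU (n + j) x y (by omega)).trans <|
          subGaussianBound_le_of_le_two_mul hVpos hVmono.monotoneOn hγ.le hC
            (by exact_mod_cast hn) (by simp) (htime hj) (hd x y)
    rw [← hbinom] at hsum
    exact le_of_mul_le_mul_left hsum (by positivity)
  · obtain ⟨m, rfl⟩ : ∃ m, n = m + 1 := ⟨n - 1, by omega⟩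
    have hsum := pow_mul_le_sum_range_choose_mul (n := m) (a := fun j => p (m + 1 + j) x y)
      (L := subGaussianBound V γ (c / C_D) (m + 1 : ℕ) (G.dist x y)) fun j hj =>
        (subGaussianBound_div_le_of_le_two_mul hVpos hVmono.monotoneOn hdoub hC_D.le hγ.le hc
            (by positivity) (by simp) (htime (by omega)) (hd x y)).trans <|
          hsubgL (m + 1 + j) x y (by omega) (by omega)
    have hq_lower : subGaussianBound V γ (c / C_D) (m + 1 : ℕ) (G.dist x y) ≤ 2 * q (m + 1) x y :=
      le_of_mul_le_mul_left (hsum.trans_eq (by rw [← hbinom]; ring)) (by positivity)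
    calc subGaussianBound V γ (c / C_D / 2) (m + 1 : ℕ) (G.dist x y)
        ≤ c / C_D / 2 / (c / C_D) * subGaussianBound V γ (c / C_D) (m + 1 : ℕ) (G.dist x y) :=
          subGaussianBound_le_mul_of_le hVpos hγ.le (by positivity)
            (half_le_self (by positivity)) (by positivity) (hd x y)
      _ = subGaussianBound V γ (c / C_D) (m + 1 : ℕ) (G.dist x y) / 2 := by field_simp
      _ ≤ q (m + 1) x y := by linarith

/-- Lemma 2.3: the kernel `q_n` of `Q^n`, `Q = (P+P²)/2`, satisfies improved sub-Gaussian
estimates (the lower bound holds for `q_n` itself). -/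
theorem improved_subgaussian_Q
    {Γ : Type*} [Countable Γ] [Infinite Γ]
    (G : SimpleGraph Γ) (hconn : G.Connected)
    (hlocfin : ∀ x : Γ, {y : Γ | G.Adj x y}.Finite)
    -- edge weights
    (w : Γ → Γ → ℝ) (hw_symm : ∀ x y, w x y = w y x)
    (hw_nonneg : ∀ x y, 0 ≤ w x y)
    (hw_pos : ∀ x y, 0 < w x y ↔ G.Adj x y)
    -- vertex measure
    (μ : Γ → ℝ) (hμ : ∀ x, μ x = ∑' y : Γ, w x y)
    -- (count): μ comparable to the counting measure
    (Cμ : ℝ) (hCμ : 1 ≤ Cμ) (hcount : ∀ x, Cμ⁻¹ ≤ μ x ∧ μ x ≤ Cμ)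
    -- volume of balls and uniform volume doubling
    (Vb : Γ → ℝ → ℝ)
    (hVb : ∀ x r, Vb x r = ∑' y : {y : Γ // (G.dist x y : ℝ) ≤ r}, μ (y : Γ))
    (V : ℝ → ℝ) (hVpos : ∀ r : ℝ, 0 ≤ r → 0 < V r)
    (hVmono : StrictMonoOn V (Set.Ici (0 : ℝ)))
    (hVcont : ContinuousOn V (Set.Ici (0 : ℝ)))
    (C_D C_h : ℝ) (hC_D : 1 < C_D) (hC_h : 1 < C_h)
    (hdoub : ∀ r : ℝ, 0 < r → V (2 * r) ≤ C_D * V r)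
    (hhom : ∀ (x : Γ) (r : ℝ), 0 < r → C_h⁻¹ * V r ≤ Vb x r ∧ Vb x r ≤ C_h * V r)
    -- the heat kernel of the natural random walk
    (p : ℕ → Γ → Γ → ℝ)
    (hp : ∀ n, p n = iterKernel μ (fun x y => w x y / (μ x * μ y)) n)
    -- sub-Gaussian estimates with escape time exponent γ
    (γ : ℝ) (hγ : 1 < γ)
    (c C : ℝ) (hc : 0 < c) (hC : 0 < C)
    (hsubgU : ∀ (n : ℕ) (x y : Γ), 1 ≤ n →
      p n x y ≤ C / V ((n : ℝ) ^ (1 / γ)) *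
        Real.exp (-(((G.dist x y : ℝ) ^ γ / (C * n)) ^ (1 / (γ - 1)))))
    (hsubgL : ∀ (n : ℕ) (x y : Γ), 1 ≤ n → G.dist x y ≤ n →
      c / V ((n : ℝ) ^ (1 / γ)) *
        Real.exp (-(((G.dist x y : ℝ) ^ γ / (c * n)) ^ (1 / (γ - 1))))
        ≤ p n x y + p (n + 1) x y)
    -- Q = (P + P²)/2 and its iterated kernels q_n
    (q : ℕ → Γ → Γ → ℝ)
    (hq : ∀ n, q n = iterKernel μ (fun x y => (p 1 x y + p 2 x y) / 2) n) :
    ∃ c' C' : ℝ, 0 < c' ∧ 0 < C' ∧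
      (∀ (n : ℕ) (x y : Γ), 1 ≤ n →
        q n x y ≤ C' / V ((n : ℝ) ^ (1 / γ)) *
          Real.exp (-(((G.dist x y : ℝ) ^ γ / (C' * n)) ^ (1 / (γ - 1))))) ∧
      (∀ (n : ℕ) (x y : Γ), 1 ≤ n → G.dist x y ≤ n →
        c' / V ((n : ℝ) ^ (1 / γ)) *
          Real.exp (-(((G.dist x y : ℝ) ^ γ / (c' * n)) ^ (1 / (γ - 1)))) ≤ q n x y) :=
  improved_subgaussian_Q_general G hlocfin w hw_nonneg hw_pos μ Cμ hCμ hcount V hVpos hVmono C_D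
    hC_D hdoub p hp γ hγ c C hc hC hsubgU hsubgL q hq
end
end

section
/- There exists a constant C₁ > 0 such that ‖f − f_R‖₂² ≤ C₁ (R/k)^γ E_{Q^{2⌊k^γ⌋}}(f, f) for all f ∈ ℓ²(Γ,μ), all integers k ≥ 1 and all real R with k ≤ R. -/
/-!
Cauchy–Schwarz on balls gives `|f x - f_R x|² ≤ V(x,R)⁻¹ ∑_{y ∈ B(x,R)} |f x - f y|² μ y`.
Writing `Q^(n+1) = 2^-(n+1) P^(n+1) (1 + P)^n (1 + P)` and expanding `(1 + P)^n` binomially shows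
that `q_(n+1)` is an average of the sums `(p_m + p_(m+1)) / 2` with `n < m ≤ 2n + 1`; for
`n + 1 = 2N ≍ R^γ` the sub-Gaussian lower bound and volume doubling bound each of them below by
`c / V(R)` on `B(x,R)`. Hence `‖f - f_R‖² ≲ ∑_{x,y} |f x - f y|² q_(2N)(x,y) μ x μ y`, which is
`2 E_(Q^2N)(f)`.
Finally, `Q` being self-adjoint, `i ↦ ‖Q^(m i) f‖²` is convex, so that
`E_(Q^2mj)(f) = ‖f‖² - ‖Q^(m j) f‖² ≤ j (‖f‖² - ‖Q^m f‖²) = j E_(Q^2m)(f)`; take `m = ⌊k^γ⌋` and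
`j = ⌈(R/k)^γ⌉ ≤ 2 (R/k)^γ`, so that `N = m j ≍ R^γ`.
-/

open scoped BigOperators ENNReal
open Filter Classical

noncomputable section

/-- The Dirichlet form `E_S(f,f) = ⟨(I - S)f, f⟩` in `ℓ²(Γ,μ)` of the Markov operator `S`
whose kernel with respect to `μ` is `s`. -/
def dirichletForm {Γ : Type*} (μ : Γ → ℝ) (s : Γ → Γ → ℝ) (f : Γ → ℝ) : ℝ :=
  ∑' x : Γ, (f x - ∑' y : Γ, s x y * f y * μ y) * f x * μ x

/-- The `μ`-average `f_R(x)` of `f` over the ball `B(x,R)`. -/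
def ballAvg {Γ : Type*} (G : SimpleGraph Γ) (μ : Γ → ℝ) (f : Γ → ℝ) (R : ℝ) (x : Γ) : ℝ :=
  (∑' y : {y : Γ // (G.dist x y : ℝ) ≤ R}, f (y : Γ) * μ (y : Γ)) /
    (∑' y : {y : Γ // (G.dist x y : ℝ) ≤ R}, μ (y : Γ))

namespace PseudoPoincare

open Finset Function

variable {Γ : Type*} {μ : Γ → ℝ} {s : Γ → Γ → ℝ}

structure IsSymmMarkovKernel (μ : Γ → ℝ) (s : Γ → Γ → ℝ) : Prop where
  symm : ∀ x y, s x y = s y x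
  nonneg : ∀ x y, 0 ≤ s x y
  finite_support : ∀ x, (support (s x)).Finite
  tsum_mul_eq_one : ∀ x, ∑' y, s x y * μ y = 1

def markovOp (μ : Γ → ℝ) (s : Γ → Γ → ℝ) (f : Γ → ℝ) (x : Γ) : ℝ :=
  ∑' y, s x y * f y * μ y

lemma summable_of_row {x : Γ} (hx : (support (s x)).Finite) {F : Γ → ℝ}
    (hF : ∀ y, s x y = 0 → F y = 0) : Summable F :=
  summable_of_hasFiniteSupport <| hx.subset fun y hy h0 => hy (hF y h0)

lemma tsum_comm_of_finite_left {F : Γ → Γ → ℝ} (hA : {z | ∃ y, F z y ≠ 0}.Finite)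
    (hrow : ∀ z, Summable (F z)) : ∑' y, ∑' z, F z y = ∑' z, ∑' y, F z y := by
  have hsupp : ∀ g : Γ → ℝ, (∀ z, (∀ y, F z y = 0) → g z = 0) → support g ⊆ hA.toFinset := by
    intro g hg z hz
    exact hA.mem_toFinset.2 (by_contra fun h => hz (hg z fun y => by_contra fun hy => h ⟨y, hy⟩))
  rw [tsum_congr fun y => tsum_eq_sum' (hsupp (F · y) fun z h => h y),
    Summable.tsum_finsetSum fun z _ => hrow z,
    tsum_eq_sum' (hsupp _ fun z h => by simp [h])]

lemma markovOp_single (k : Γ → Γ → ℝ) (y : Γ) (c : ℝ) (x : Γ) :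
    markovOp μ k (Pi.single y c) x = k x y * c * μ y :=
  (tsum_eq_single y fun z hz => by simp [hz]).trans (by simp)

lemma iterKernel_nonneg (hμ : ∀ x, 0 ≤ μ x) (hs : ∀ x y, 0 ≤ s x y) (n : ℕ) (x y : Γ) :
    0 ≤ iterKernel μ s n x y := by
  induction n generalizing y with
  | zero => simp only [iterKernel]; split_ifs <;> simp [hμ]
  | succ n ih => exact tsum_nonneg fun z => mul_nonneg (mul_nonneg (ih z) (hs z y)) (hμ z)

lemma finite_support_iterKernel (hfin : ∀ x, (support (s x)).Finite) (n : ℕ) (x : Γ) :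
    (support (iterKernel μ s n x)).Finite := by
  induction n with
  | zero =>
    refine (Set.finite_singleton x).subset fun y hy => ?_
    by_contra h
    exact hy (if_neg fun e => h e.symm)
  | succ n ih =>
    refine (ih.biUnion fun z _ => hfin z).subset fun y hy => ?_
    by_contra h
    simp only [Set.mem_iUnion, mem_support, not_exists] at h
    refine hy ((tsum_congr fun z => ?_).trans tsum_zero)
    by_cases hz : iterKernel μ s n x z = 0
    · simp [hz]
    · simp [not_not.1 (h z hz)]

lemma markovOp_iterKernel (hμ : ∀ x, μ x ≠ 0) (hfin : ∀ x, (support (s x)).Finite)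
    (n : ℕ) : markovOp μ (iterKernel μ s n) = (markovOp μ s)^[n] := by
  induction n with
  | zero =>
    funext f x
    refine (tsum_eq_single x fun y hy => by simp [iterKernel, Ne.symm hy]).trans ?_
    simp [iterKernel, mul_right_comm _ (f x), hμ x]
  | succ n ih =>
    funext f x
    rw [iterate_succ_apply, ← ih]
    have hrow : ∀ z, Summable fun y => iterKernel μ s n x z * μ z * (s z y * f y * μ y) :=
      fun z => (summable_of_row (hfin z) fun y h => by simp [h]).mul_left _
    calc markovOp μ (iterKernel μ s (n + 1)) f x
        = ∑' y, ∑' z, iterKernel μ s n x z * μ z * (s z y * f y * μ y) := by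
          refine tsum_congr fun y => ?_
          simp only [iterKernel, ← tsum_mul_right]
          exact tsum_congr fun z => by ring
      _ = ∑' z, ∑' y, iterKernel μ s n x z * μ z * (s z y * f y * μ y) :=
          tsum_comm_of_finite_left ((finite_support_iterKernel hfin n x).subset
            fun z ⟨y, hy⟩ h0 => hy (by rw [h0]; ring)) hrow
      _ = markovOp μ (iterKernel μ s n) (markovOp μ s f) x := by
          simp only [markovOp, tsum_mul_left]
          exact tsum_congr fun z => by ring

lemma iterKernel_eq_iterate (hμ : ∀ x, μ x ≠ 0) (hfin : ∀ x, (support (s x)).Finite)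
    (n : ℕ) (x y : Γ) : iterKernel μ s n x y = (markovOp μ s)^[n] (Pi.single y (μ y)⁻¹) x := by
  rw [← markovOp_iterKernel hμ hfin, markovOp_single, inv_mul_cancel_right₀ (hμ y)]

lemma iterKernel_one (hμ : ∀ x, μ x ≠ 0) (hfin : ∀ x, (support (s x)).Finite) :
    iterKernel μ s 1 = s := by
  ext x y
  rw [iterKernel_eq_iterate hμ hfin, iterate_one, markovOp_single, inv_mul_cancel_right₀ (hμ y)]

lemma iterKernel_add (hμ : ∀ x, μ x ≠ 0) (hfin : ∀ x, (support (s x)).Finite) (a b : ℕ)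
    (x y : Γ) : iterKernel μ s (a + b) x y =
      ∑' z, iterKernel μ s a x z * iterKernel μ s b z y * μ z := by
  simp only [iterKernel_eq_iterate hμ hfin _ _ y, iterate_add_apply]
  rw [← markovOp_iterKernel hμ hfin a]
  rfl

lemma markovOp_const (hs : IsSymmMarkovKernel μ s) (c : ℝ) :
    markovOp μ s (fun _ => c) = fun _ => c :=
  funext fun x => by
    simp only [markovOp, mul_comm (s x _) c, mul_assoc, tsum_mul_left, hs.tsum_mul_eq_one, mul_one]

lemma isSymmMarkovKernel_iterKernel (hμ : ∀ x, 0 < μ x) (hs : IsSymmMarkovKernel μ s)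
    (n : ℕ) : IsSymmMarkovKernel μ (iterKernel μ s n) := by
  have hμ0 : ∀ x, μ x ≠ 0 := fun x => (hμ x).ne'
  refine ⟨fun x y => ?_, iterKernel_nonneg (fun x => (hμ x).le) hs.nonneg n,
    finite_support_iterKernel hs.finite_support n, fun x => ?_⟩
  · induction n generalizing x y with
    | zero =>
      by_cases h : x = y
      · rw [h]
      · simp [iterKernel, h, Ne.symm h]
    | succ n ih =>
      change _ = ∑' z, iterKernel μ s n y z * s z x * μ z
      rw [Nat.add_comm, iterKernel_add hμ0 hs.finite_support,
        iterKernel_one hμ0 hs.finite_support]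
      exact tsum_congr fun z => by rw [hs.symm, ih]; ring
  · have h := congrFun (Function.iterate_fixed (markovOp_const hs 1) n) x
    simpa only [← markovOp_iterKernel hμ0 hs.finite_support, markovOp, mul_one] using h

lemma IsSymmMarkovKernel.half_add {k₁ k₂ : Γ → Γ → ℝ} (h₁ : IsSymmMarkovKernel μ k₁)
    (h₂ : IsSymmMarkovKernel μ k₂) :
    IsSymmMarkovKernel μ fun x y => (k₁ x y + k₂ x y) / 2 where
  symm x y := by rw [h₁.symm, h₂.symm]
  nonneg x y := by have := h₁.nonneg x y; have := h₂.nonneg x y; positivity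
  finite_support x := ((h₁.finite_support x).union (h₂.finite_support x)).subset
    fun y hy => by by_contra h; simp_all
  tsum_mul_eq_one x := by
    have hsum : ∀ k : Γ → Γ → ℝ, IsSymmMarkovKernel μ k →
        Summable fun y => k x y * μ y := fun k hk =>
      summable_of_row (hk.finite_support x) fun y h => by simp [h]
    simp only [add_div, add_mul]
    rw [Summable.tsum_add ((hsum _ h₁).div_const 2 |>.congr fun y => by ring)
      ((hsum _ h₂).div_const 2 |>.congr fun y => by ring)]
    simp only [div_mul_eq_mul_div, tsum_div_const, h₁.tsum_mul_eq_one, h₂.tsum_mul_eq_one]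
    norm_num

/-- The kernel of `Q = (P + P²) / 2`, where `P` has kernel `s`. -/
def halfAddSqKernel (μ : Γ → ℝ) (s : Γ → Γ → ℝ) : Γ → Γ → ℝ :=
  fun x y => (iterKernel μ s 1 x y + iterKernel μ s 2 x y) / 2

lemma isSymmMarkovKernel_halfAddSqKernel (hμ : ∀ x, 0 < μ x) (hs : IsSymmMarkovKernel μ s) :
    IsSymmMarkovKernel μ (halfAddSqKernel μ s) :=
  (isSymmMarkovKernel_iterKernel hμ hs 1).half_add (isSymmMarkovKernel_iterKernel hμ hs 2)

def markovEnd (μ : Γ → ℝ) (hfin : ∀ x, (support (s x)).Finite) :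
    Module.End ℝ (Γ → ℝ) where
  toFun := markovOp μ s
  map_add' f g := funext fun x => by
    simp only [markovOp, Pi.add_apply, mul_add, add_mul]
    exact Summable.tsum_add (summable_of_row (hfin x) fun y h => by simp [h])
      (summable_of_row (hfin x) fun y h => by simp [h])
  map_smul' c f := funext fun x => by
    simp only [markovOp, Pi.smul_apply, smul_eq_mul, RingHom.id_apply, ← tsum_mul_left]
    exact tsum_congr fun y => by ring

lemma markovEnd_apply (hfin : ∀ x, (support (s x)).Finite) (f : Γ → ℝ) :
    markovEnd μ hfin f = markovOp μ s f :=
  rfl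

lemma markovEnd_pow_apply (hμ : ∀ x, μ x ≠ 0) (hfin : ∀ x, (support (s x)).Finite) (n : ℕ)
    (f : Γ → ℝ) : (markovEnd μ hfin ^ n) f = markovOp μ (iterKernel μ s n) f := by
  rw [Module.End.pow_apply, markovOp_iterKernel hμ hfin]
  rfl

lemma iterKernel_eq_pow_apply (hμ : ∀ x, μ x ≠ 0) (hfin : ∀ x, (support (s x)).Finite)
    (n : ℕ) (x y : Γ) : iterKernel μ s n x y = (markovEnd μ hfin ^ n) (Pi.single y (μ y)⁻¹) x := by
  rw [markovEnd_pow_apply hμ hfin, markovOp_single, inv_mul_cancel_right₀ (hμ y)]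

lemma markovEnd_halfAddSqKernel (hμ : ∀ x, μ x ≠ 0) (hfin : ∀ x, (support (s x)).Finite)
    (hfin' : ∀ x, (support (halfAddSqKernel μ s x)).Finite) :
    markovEnd μ hfin' = (2⁻¹ : ℝ) • (markovEnd μ hfin + markovEnd μ hfin ^ 2) := by
  ext f x
  have h₁ := markovEnd_pow_apply hμ hfin 1 f
  rw [pow_one] at h₁
  simp only [LinearMap.smul_apply, LinearMap.add_apply, h₁, markovEnd_pow_apply hμ hfin 2,
    Pi.smul_apply, Pi.add_apply, smul_eq_mul]
  have hsum : ∀ n, Summable fun y => iterKernel μ s n x y * f y * μ y := fun n =>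
    summable_of_row (finite_support_iterKernel (μ := μ) hfin n x) fun y h => by simp [h]
  simp only [markovEnd_apply, markovOp, halfAddSqKernel, ← Summable.tsum_add (hsum 1) (hsum 2),
    ← tsum_mul_left]
  exact tsum_congr fun y => by ring

lemma half_smul_add_sq_pow_succ {A : Type*} [Ring A] [Algebra ℝ A] (T : A) (n : ℕ) :
    ((2⁻¹ : ℝ) • (T + T ^ 2)) ^ (n + 1) = (2⁻¹ : ℝ) ^ (n + 1) •
      ∑ i ∈ range (n + 1), (n.choose i : ℝ) • (T ^ (n + 1 + i) + T ^ (n + 2 + i)) := by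
  have hcomm : Commute T (T + 1) := (Commute.refl T).add_right (Commute.one_right T)
  have hfac : T + T ^ 2 = T * (T + 1) := by noncomm_ring
  rw [smul_pow, hfac, hcomm.mul_pow, pow_succ (T + 1), (Commute.one_right T).add_pow,
    Finset.sum_mul, Finset.mul_sum]
  congr 1
  refine Finset.sum_congr rfl fun i _ => ?_
  rw [one_pow, mul_one, ← nsmul_eq_mul', smul_mul_assoc, mul_smul_comm, Nat.cast_smul_eq_nsmul,
    ← mul_assoc, ← pow_add, mul_add, mul_one, ← pow_succ, add_comm]
  ring_nf

lemma iterKernel_halfAddSqKernel_succ (hμ : ∀ x, 0 < μ x) (hs : IsSymmMarkovKernel μ s)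
    (n : ℕ) (x y : Γ) :
    iterKernel μ (halfAddSqKernel μ s) (n + 1) x y = (2⁻¹ : ℝ) ^ (n + 1) *
      ∑ i ∈ range (n + 1),
        (n.choose i : ℝ) * (iterKernel μ s (n + 1 + i) x y + iterKernel μ s (n + 2 + i) x y) := by
  have hμ0 : ∀ x, μ x ≠ 0 := fun x => (hμ x).ne'
  have hQ := isSymmMarkovKernel_halfAddSqKernel hμ hs
  rw [iterKernel_eq_pow_apply hμ0 hQ.finite_support,
    markovEnd_halfAddSqKernel hμ0 hs.finite_support hQ.finite_support, half_smul_add_sq_pow_succ]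
  simp only [LinearMap.smul_apply, LinearMap.sum_apply, Finset.sum_apply, LinearMap.add_apply,
    Pi.smul_apply, Pi.add_apply, smul_eq_mul, ← iterKernel_eq_pow_apply hμ0 hs.finite_support]

lemma half_le_iterKernel_halfAddSqKernel_succ (hμ : ∀ x, 0 < μ x)
    (hs : IsSymmMarkovKernel μ s) {n : ℕ} {x y : Γ} {L : ℝ}
    (hL : ∀ i ≤ n, L ≤ iterKernel μ s (n + 1 + i) x y + iterKernel μ s (n + 2 + i) x y) :
    L / 2 ≤ iterKernel μ (halfAddSqKernel μ s) (n + 1) x y := by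
  rw [iterKernel_halfAddSqKernel_succ hμ hs]
  calc L / 2 = (2⁻¹ : ℝ) ^ (n + 1) * ∑ i ∈ range (n + 1), (n.choose i : ℝ) * L := by
        rw [← Finset.sum_mul, ← Nat.cast_sum, Nat.sum_range_choose, pow_succ, inv_pow]
        push_cast
        field_simp
    _ ≤ _ := by
        gcongr with i hi
        exact hL i (Nat.lt_succ_iff.1 (Finset.mem_range.1 hi))

lemma tsum_eq_sum_of_row {x : Γ} (hx : (support (s x)).Finite) {F : Γ → ℝ}
    (hF : ∀ y, s x y = 0 → F y = 0) : ∑' y, F y = ∑ y ∈ hx.toFinset, F y :=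
  tsum_eq_sum' fun y hy => hx.mem_toFinset.2 fun h => hy (hF y h)

lemma two_mul_mul_le_add_sq (a b : ℝ) : 2 * (a * b) ≤ a ^ 2 + b ^ 2 := by
  nlinarith [sq_nonneg (a - b)]

lemma summable_mul_mul_of_sq (hμ : ∀ x, 0 ≤ μ x) {f g : Γ → ℝ}
    (hf : Summable fun x => f x ^ 2 * μ x) (hg : Summable fun x => g x ^ 2 * μ x) :
    Summable fun x => f x * g x * μ x :=
  Summable.of_norm_bounded (hf.add hg) fun x => by
    rw [Real.norm_eq_abs, abs_mul, abs_mul, abs_of_nonneg (hμ x), ← add_mul]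
    have := two_mul_mul_le_add_sq |f x| |g x|
    rw [sq_abs, sq_abs] at this
    nlinarith [hμ x, abs_nonneg (f x), abs_nonneg (g x)]

lemma two_mul_tsum_mul_le (hμ : ∀ x, 0 ≤ μ x) {f g : Γ → ℝ}
    (hf : Summable fun x => f x ^ 2 * μ x) (hg : Summable fun x => g x ^ 2 * μ x) :
    2 * ∑' x, f x * g x * μ x ≤ ∑' x, f x ^ 2 * μ x + ∑' x, g x ^ 2 * μ x := by
  rw [← tsum_mul_left, ← Summable.tsum_add hf hg]
  exact Summable.tsum_le_tsum (fun x => by nlinarith [two_mul_mul_le_add_sq (f x) (g x), hμ x])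
    ((summable_mul_mul_of_sq hμ hf hg).mul_left 2) (hf.add hg)

lemma summable_kernel_prod (hμ : ∀ x, 0 ≤ μ x) (hs : IsSymmMarkovKernel μ s) {h : Γ → ℝ}
    (h0 : ∀ x, 0 ≤ h x) (hh : Summable fun x => h x * μ x) :
    Summable fun p : Γ × Γ => s p.1 p.2 * h p.1 * μ p.1 * μ p.2 := by
  refine (summable_prod_of_nonneg fun p => ?_).2 ⟨fun x => ?_, hh.congr fun x => ?_⟩
  · have := hs.nonneg p.1 p.2; have := h0 p.1; have := hμ p.1; have := hμ p.2
    positivity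
  · exact summable_of_row (hs.finite_support x) fun y h => by simp [h]
  · rw [← congrFun (markovOp_const hs (h x * μ x)) x]
    exact tsum_congr fun y => by ring

lemma hasSum_markovOp_mul (hμ : ∀ x, 0 ≤ μ x) (hs : IsSymmMarkovKernel μ s) {h : Γ → ℝ}
    (h0 : ∀ x, 0 ≤ h x) (hh : Summable fun x => h x * μ x) :
    HasSum (fun x => markovOp μ s h x * μ x) (∑' x, h x * μ x) := by
  have hH := summable_kernel_prod hμ hs h0 hh
  have hH' : Summable fun p : Γ × Γ => s p.1 p.2 * h p.2 * μ p.2 * μ p.1 :=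
    hH.prod_symm.congr fun p => by simp only [Prod.fst_swap, Prod.snd_swap, hs.symm p.2]
  have hrow : ∀ x, HasSum (fun y => s x y * h y * μ y * μ x) (markovOp μ s h x * μ x) :=
    fun x => (summable_of_row (hs.finite_support x) fun y h => by simp [h]).hasSum.mul_right (μ x)
  convert hH'.hasSum.prod_fiberwise hrow using 1
  calc ∑' x, h x * μ x = ∑' x, ∑' y, s x y * h x * μ x * μ y := tsum_congr fun x => by
        rw [← congrFun (markovOp_const hs (h x * μ x)) x]
        exact tsum_congr fun y => by ring
    _ = ∑' p : Γ × Γ, s p.1 p.2 * h p.1 * μ p.1 * μ p.2 := (hH.tsum_prod' fun x =>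
        summable_of_row (hs.finite_support x) fun y h => by simp [h]).symm
    _ = ∑' p : Γ × Γ, s p.1 p.2 * h p.2 * μ p.2 * μ p.1 := by
        rw [← (Equiv.prodComm Γ Γ).tsum_eq]
        exact tsum_congr fun p => by simp [hs.symm p.2]

lemma tsum_markovOp_mul_comm (hμ : ∀ x, 0 ≤ μ x) (hs : IsSymmMarkovKernel μ s)
    {f g : Γ → ℝ} (hf : Summable fun x => f x ^ 2 * μ x) (hg : Summable fun x => g x ^ 2 * μ x) :
    ∑' x, markovOp μ s f x * g x * μ x = ∑' x, f x * markovOp μ s g x * μ x := by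
  set H : Γ → Γ → ℝ := fun x y => s x y * f y * μ y * (g x * μ x)
  have hF := summable_kernel_prod hμ hs (fun y => sq_nonneg (f y)) hf
  have hG := summable_kernel_prod hμ hs (fun x => sq_nonneg (g x)) hg
  have hH : Summable (uncurry H) := by
    refine Summable.of_norm_bounded (hF.prod_symm.add hG) fun ⟨x, y⟩ => ?_
    have hw : 0 ≤ s x y * μ x * μ y := by
      have := hs.nonneg x y; have := hμ x; have := hμ y; positivity
    have h2 := mul_le_mul_of_nonneg_left (two_mul_mul_le_add_sq |f y| |g x|) hw
    rw [sq_abs, sq_abs] at h2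
    change |H x y| ≤ s y x * f y ^ 2 * μ y * μ x + s x y * g x ^ 2 * μ x * μ y
    simp only [H, abs_mul, abs_of_nonneg (hs.nonneg x y), abs_of_nonneg (hμ x),
      abs_of_nonneg (hμ y), hs.symm y x]
    nlinarith [mul_nonneg hw (mul_nonneg (abs_nonneg (f y)) (abs_nonneg (g x)))]
  calc ∑' x, markovOp μ s f x * g x * μ x = ∑' x, ∑' y, H x y := tsum_congr fun x => by
        simp only [H, markovOp, ← tsum_mul_right, mul_assoc]
    _ = ∑' y, ∑' x, H x y := (hH.tsum_comm'
        (fun x => summable_of_row (hs.finite_support x) fun y h => by simp [H, h])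
        (fun y => summable_of_row (hs.finite_support y) fun x h => by simp [H, hs.symm x, h])).symm
    _ = ∑' y, f y * markovOp μ s g y * μ y := tsum_congr fun y => by
        simp only [H, markovOp, ← tsum_mul_left, ← tsum_mul_right]
        exact tsum_congr fun x => by rw [hs.symm]; ring

lemma markovOp_sq_le (hμ : ∀ x, 0 ≤ μ x) (hs : IsSymmMarkovKernel μ s) (f : Γ → ℝ) (x : Γ) :
    markovOp μ s f x ^ 2 ≤ markovOp μ s (fun y => f y ^ 2) x := by
  have hx := hs.finite_support x
  have hw : ∑ y ∈ hx.toFinset, s x y * μ y = 1 := by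
    rw [← tsum_eq_sum_of_row hx fun y h => by simp [h], hs.tsum_mul_eq_one]
  rw [markovOp, markovOp, tsum_eq_sum_of_row hx fun y h => by simp [h],
    tsum_eq_sum_of_row hx fun y h => by simp [h], ← one_mul (∑ y ∈ _, _ * _ ^ 2 * _), ← hw]
  exact sum_sq_le_sum_mul_sum_of_sq_le_mul _
    (fun y _ => mul_nonneg (hs.nonneg x y) (hμ y))
    (fun y _ => mul_nonneg (mul_nonneg (hs.nonneg x y) (sq_nonneg _)) (hμ y))
    fun y _ => le_of_eq (by ring)

lemma summable_markovOp_sq (hμ : ∀ x, 0 ≤ μ x) (hs : IsSymmMarkovKernel μ s) {f : Γ → ℝ}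
    (hf : Summable fun x => f x ^ 2 * μ x) : Summable fun x => markovOp μ s f x ^ 2 * μ x :=
  (hasSum_markovOp_mul hμ hs (fun y => sq_nonneg (f y)) hf).summable.of_nonneg_of_le
    (fun x => mul_nonneg (sq_nonneg _) (hμ x))
    fun x => mul_le_mul_of_nonneg_right (markovOp_sq_le hμ hs f x) (hμ x)

lemma dirichletForm_eq (hμ : ∀ x, 0 ≤ μ x) (hs : IsSymmMarkovKernel μ s) {f : Γ → ℝ}
    (hf : Summable fun x => f x ^ 2 * μ x) :
    dirichletForm μ s f = ∑' x, f x ^ 2 * μ x - ∑' x, markovOp μ s f x * f x * μ x := by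
  rw [dirichletForm, ← Summable.tsum_sub hf
    (summable_mul_mul_of_sq hμ (summable_markovOp_sq hμ hs hf) hf)]
  exact tsum_congr fun x => by rw [markovOp]; ring

lemma hasSum_energy (hμ : ∀ x, 0 ≤ μ x) (hs : IsSymmMarkovKernel μ s) {f : Γ → ℝ}
    (hf : Summable fun x => f x ^ 2 * μ x) :
    HasSum (fun x => (∑' y, (f x - f y) ^ 2 * s x y * μ y) * μ x) (2 * dirichletForm μ s f) := by
  have hrow : ∀ x, (∑' y, (f x - f y) ^ 2 * s x y * μ y) * μ x =
      f x ^ 2 * μ x - 2 * (markovOp μ s f x * f x * μ x) +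
        markovOp μ s (fun y => f y ^ 2) x * μ x := fun x => by
    have hsum : ∀ F : Γ → ℝ, Summable fun y => s x y * F y * μ y := fun F =>
      summable_of_row (hs.finite_support x) fun y h => by simp [h]
    have hc := congrFun (markovOp_const hs (f x ^ 2)) x
    rw [markovOp] at hc
    rw [markovOp, markovOp, ← hc, tsum_congr fun y => (by ring : (f x - f y) ^ 2 * s x y * μ y =
      s x y * f x ^ 2 * μ y - 2 * f x * (s x y * f y * μ y) + s x y * f y ^ 2 * μ y),
      Summable.tsum_add ((hsum _).sub ((hsum _).mul_left _)) (hsum _),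
      Summable.tsum_sub (hsum _) ((hsum _).mul_left _), tsum_mul_left]
    ring
  have h := (hf.hasSum.sub ((summable_mul_mul_of_sq hμ (summable_markovOp_sq hμ hs hf)
    hf).hasSum.mul_left 2)).add (hasSum_markovOp_mul hμ hs (fun y => sq_nonneg (f y)) hf)
  rw [funext hrow, dirichletForm_eq hμ hs hf,
    show ∀ a b : ℝ, 2 * (a - b) = a - 2 * b + a from fun a b => by ring]
  exact h

lemma dirichletForm_nonneg (hμ : ∀ x, 0 ≤ μ x) (hs : IsSymmMarkovKernel μ s) {f : Γ → ℝ}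
    (hf : Summable fun x => f x ^ 2 * μ x) : 0 ≤ dirichletForm μ s f := by
  have := (hasSum_energy hμ hs hf).nonneg fun x =>
    mul_nonneg (tsum_nonneg fun y => by have := hs.nonneg x y; have := hμ y; positivity) (hμ x)
  linarith

lemma dirichletForm_iterKernel_two_mul (hμ : ∀ x, 0 < μ x) (hs : IsSymmMarkovKernel μ s)
    {f : Γ → ℝ} (hf : Summable fun x => f x ^ 2 * μ x) (n : ℕ) :
    dirichletForm μ (iterKernel μ s (2 * n)) f =
      ∑' x, f x ^ 2 * μ x - ∑' x, (markovOp μ s)^[n] f x ^ 2 * μ x := by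
  have hμ' : ∀ x, 0 ≤ μ x := fun x => (hμ x).le
  have hsn := isSymmMarkovKernel_iterKernel hμ hs n
  have hT := markovOp_iterKernel (fun x => (hμ x).ne') hs.finite_support n
  rw [dirichletForm_eq hμ' (isSymmMarkovKernel_iterKernel hμ hs _) hf,
    markovOp_iterKernel (fun x => (hμ x).ne') hs.finite_support, two_mul, iterate_add_apply, ← hT,
    tsum_markovOp_mul_comm hμ' hsn (summable_markovOp_sq hμ' hsn hf) hf]
  simp only [sq, hT]

lemma sub_le_mul_sub_of_antitone {A : ℕ → ℝ} (h : ∀ i, A (i + 1) - A (i + 2) ≤ A i - A (i + 1))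
    (j : ℕ) : A 0 - A j ≤ j * (A 0 - A 1) := by
  have hanti : Antitone fun i => A i - A (i + 1) := antitone_nat_of_succ_le h
  rw [← Finset.sum_range_sub' A j]
  calc ∑ i ∈ range j, (A i - A (i + 1)) ≤ ∑ _i ∈ range j, (A 0 - A 1) :=
        sum_le_sum fun i _ => hanti (Nat.zero_le i)
    _ = j * (A 0 - A 1) := by simp [mul_sub]

lemma dirichletForm_iterKernel_mul_le (hμ : ∀ x, 0 < μ x) (hs : IsSymmMarkovKernel μ s)
    {f : Γ → ℝ} (hf : Summable fun x => f x ^ 2 * μ x) (m j : ℕ) :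
    dirichletForm μ (iterKernel μ s (2 * (m * j))) f ≤
      j * dirichletForm μ (iterKernel μ s (2 * m)) f := by
  have hμ' : ∀ x, 0 ≤ μ x := fun x => (hμ x).le
  have hsm := isSymmMarkovKernel_iterKernel hμ hs m
  set T := markovOp μ (iterKernel μ s m)
  have hT : T = (markovOp μ s)^[m] := markovOp_iterKernel (fun x => (hμ x).ne') hs.finite_support m
  set A : ℕ → ℝ := fun i => ∑' x, T^[i] f x ^ 2 * μ x
  have hA : ∀ i, dirichletForm μ (iterKernel μ s (2 * (m * i))) f = A 0 - A i := fun i => by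
    rw [dirichletForm_iterKernel_two_mul hμ hs hf, iterate_mul, ← hT]
    rfl
  have hl2 : ∀ i, Summable fun x => T^[i] f x ^ 2 * μ x := fun i => by
    induction i with
    | zero => exact hf
    | succ i ih => rw [iterate_succ_apply']; exact summable_markovOp_sq hμ' hsm ih
  rw [hA, ← mul_one m, hA]
  refine sub_le_mul_sub_of_antitone (fun i => ?_) j
  have hmid : A (i + 1) = ∑' x, T^[i] f x * T^[i + 2] f x * μ x := by
    have h : ∑' x, T (T^[i] f) x * T^[i + 1] f x * μ x =
        ∑' x, T^[i] f x * T (T^[i + 1] f) x * μ x :=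
      tsum_markovOp_mul_comm hμ' hsm (hl2 i) (hl2 (i + 1))
    rw [← iterate_succ_apply' T, ← iterate_succ_apply' T] at h
    simpa only [A, sq] using h
  have hconv : 2 * A (i + 1) ≤ A i + A (i + 2) := by
    rw [hmid]
    exact two_mul_tsum_mul_le hμ' (hl2 i) (hl2 (i + 2))
  linarith

lemma finite_setOf_exists_walk_length_le {G : SimpleGraph Γ}
    (hlocfin : ∀ x, {y | G.Adj x y}.Finite) (r : ℕ) (x : Γ) :
    {y | ∃ w : G.Walk x y, w.length ≤ r}.Finite := by
  induction r generalizing x with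
  | zero =>
    refine (Set.finite_singleton x).subset ?_
    rintro y ⟨w, hw⟩
    cases w with
    | nil => rfl
    | cons => simp at hw
  | succ r ih =>
    refine (((hlocfin x).biUnion fun z _ => ih z).insert x).subset ?_
    rintro y ⟨w, hw⟩
    cases w with
    | nil => exact Set.mem_insert _ _
    | cons h w => exact Set.mem_insert_of_mem _ (Set.mem_biUnion h ⟨w, by simpa using hw⟩)

lemma finite_setOf_dist_le {G : SimpleGraph Γ} (hconn : G.Connected)
    (hlocfin : ∀ x, {y | G.Adj x y}.Finite) (x : Γ) (R : ℝ) :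
    {y | (G.dist x y : ℝ) ≤ R}.Finite :=
  (finite_setOf_exists_walk_length_le hlocfin ⌊R⌋₊ x).subset fun y hy =>
    let ⟨w, hw⟩ := hconn.exists_walk_length_eq_dist x y
    ⟨w, hw ▸ Nat.le_floor hy⟩

lemma tsum_subtype_eq_sum {P : Γ → Prop} (hP : {y | P y}.Finite) (g : Γ → ℝ) :
    ∑' y : {y // P y}, g y = ∑ y ∈ hP.toFinset, g y := by
  rw [← Finset.tsum_subtype', hP.coe_toFinset]
  rfl

lemma sq_sub_div_le {ι : Type*} (t : Finset ι) (w g : ι → ℝ) (hw : ∀ i ∈ t, 0 ≤ w i)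
    (hW : 0 < ∑ i ∈ t, w i) (a : ℝ) :
    (a - (∑ i ∈ t, g i * w i) / ∑ i ∈ t, w i) ^ 2 ≤
      (∑ i ∈ t, (a - g i) ^ 2 * w i) / ∑ i ∈ t, w i := by
  have hdiff : a - (∑ i ∈ t, g i * w i) / ∑ i ∈ t, w i =
      (∑ i ∈ t, (a - g i) * w i) / ∑ i ∈ t, w i := by
    field_simp
    simp only [sub_mul, sum_sub_distrib, mul_sum]
  have hCS := sum_sq_le_sum_mul_sum_of_sq_le_mul t hw
    (fun i hi => mul_nonneg (sq_nonneg (a - g i)) (hw i hi)) (r := fun i => (a - g i) * w i)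
    fun i _ => le_of_eq (by ring)
  rw [hdiff, div_pow, div_le_div_iff₀ (by positivity) hW]
  nlinarith

lemma sq_sub_ballAvg_le (hμ : ∀ x, 0 < μ x) {G : SimpleGraph Γ} (hconn : G.Connected)
    (hlocfin : ∀ x, {y | G.Adj x y}.Finite) {R : ℝ} (hR : 0 ≤ R) (f : Γ → ℝ) (x : Γ) :
    (f x - ballAvg G μ f R x) ^ 2 ≤
      (∑' y : {y // (G.dist x y : ℝ) ≤ R}, (f x - f y) ^ 2 * μ y) /
        ∑' y : {y // (G.dist x y : ℝ) ≤ R}, μ y := by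
  have hB := finite_setOf_dist_le hconn hlocfin x R
  rw [ballAvg, tsum_subtype_eq_sum hB fun y => f y * μ y,
    tsum_subtype_eq_sum hB fun y => (f x - f y) ^ 2 * μ y, tsum_subtype_eq_sum hB μ]
  refine sq_sub_div_le _ μ f (fun y _ => (hμ y).le) ?_ (f x)
  exact sum_pos (fun y _ => hμ y) ⟨x, hB.mem_toFinset.2 (by simpa using hR)⟩

lemma tsum_sq_sub_ballAvg_le (hμ : ∀ x, 0 < μ x) {G : SimpleGraph Γ} (hconn : G.Connected)
    (hlocfin : ∀ x, {y | G.Adj x y}.Finite) {K : Γ → Γ → ℝ} (hK : IsSymmMarkovKernel μ K)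
    {R A : ℝ} (hR : 0 ≤ R) (hA : 0 ≤ A)
    (hlow : ∀ x y, (G.dist x y : ℝ) ≤ R →
      (∑' z : {z // (G.dist x z : ℝ) ≤ R}, μ z)⁻¹ ≤ A * K x y)
    {f : Γ → ℝ} (hf : Summable fun x => f x ^ 2 * μ x) :
    ∑' x, (f x - ballAvg G μ f R x) ^ 2 * μ x ≤ 2 * A * dirichletForm μ K f := by
  have hμ' : ∀ x, 0 ≤ μ x := fun x => (hμ x).le
  have hE := hasSum_energy hμ' hK hf
  have hpt : ∀ x, (f x - ballAvg G μ f R x) ^ 2 * μ x ≤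
      A * ((∑' y, (f x - f y) ^ 2 * K x y * μ y) * μ x) := fun x => by
    rw [← mul_assoc]
    refine mul_le_mul_of_nonneg_right ((sq_sub_ballAvg_le hμ hconn hlocfin hR f x).trans ?_) (hμ' x)
    have hB := finite_setOf_dist_le hconn hlocfin x R
    have hnn : ∀ y, 0 ≤ (f x - f y) ^ 2 * K x y * μ y := fun y => by
      have := hK.nonneg x y; have := hμ' y; positivity
    calc (∑' y : {y // (G.dist x y : ℝ) ≤ R}, (f x - f y) ^ 2 * μ y) /
          ∑' y : {y // (G.dist x y : ℝ) ≤ R}, μ y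
        = ∑ y ∈ hB.toFinset, (f x - f y) ^ 2 * μ y *
            (∑' z : {z // (G.dist x z : ℝ) ≤ R}, μ z)⁻¹ := by
          rw [tsum_subtype_eq_sum hB fun y => (f x - f y) ^ 2 * μ y, div_eq_mul_inv, sum_mul]
      _ ≤ ∑ y ∈ hB.toFinset, A * ((f x - f y) ^ 2 * K x y * μ y) := sum_le_sum fun y hy =>
          (mul_le_mul_of_nonneg_left (hlow x y (hB.mem_toFinset.1 hy))
            (mul_nonneg (sq_nonneg _) (hμ' y))).trans_eq (by ring)
      _ ≤ A * ∑' y, (f x - f y) ^ 2 * K x y * μ y := by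
          rw [← mul_sum]
          exact mul_le_mul_of_nonneg_left (Summable.sum_le_tsum _ (fun y _ => hnn y)
            (summable_of_row (hK.finite_support x) fun y h => by simp [h])) hA
  calc ∑' x, (f x - ballAvg G μ f R x) ^ 2 * μ x
      ≤ ∑' x, A * ((∑' y, (f x - f y) ^ 2 * K x y * μ y) * μ x) :=
        Summable.tsum_le_tsum hpt ((hE.summable.mul_left A).of_nonneg_of_le
          (fun x => mul_nonneg (sq_nonneg _) (hμ' x)) hpt) (hE.summable.mul_left A)
    _ = 2 * A * dirichletForm μ K f := by rw [tsum_mul_left, hE.tsum_eq]; ring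


lemma isSymmMarkovKernel_of_weights (hμ : ∀ x, 0 < μ x) {w : Γ → Γ → ℝ}
    (hw_symm : ∀ x y, w x y = w y x) (hw_nonneg : ∀ x y, 0 ≤ w x y)
    (hw_fin : ∀ x, (support (w x)).Finite) (hμw : ∀ x, μ x = ∑' y, w x y) :
    IsSymmMarkovKernel μ fun x y => w x y / (μ x * μ y) where
  symm x y := by rw [hw_symm, mul_comm]
  nonneg x y := div_nonneg (hw_nonneg x y) (mul_pos (hμ x) (hμ y)).le
  finite_support x := (hw_fin x).subset fun y hy h0 => hy (by simp [h0])
  tsum_mul_eq_one x := by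
    simp only [div_mul_eq_mul_div, mul_div_mul_right _ _ (hμ _).ne', tsum_div_const, ← hμw,
      div_self (hμ x).ne']

lemma half_le_floor {a : ℝ} (ha : 1 ≤ a) : a / 2 ≤ ⌊a⌋₊ := by
  have h1 : (1 : ℝ) ≤ ⌊a⌋₊ := by exact_mod_cast Nat.le_floor (by simpa using ha)
  have h2 := Nat.sub_one_lt_floor a
  rcases le_total a 2 with h | h <;> linarith

lemma floor_rpow_mul_ceil_bounds {k R γ : ℝ} (hk : 1 ≤ k) (hkR : k ≤ R) (hγ : 0 ≤ γ) :
    R ^ γ ≤ 2 * ((⌊k ^ γ⌋₊ * ⌈(R / k) ^ γ⌉₊ : ℕ) : ℝ) ∧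
      ((⌊k ^ γ⌋₊ * ⌈(R / k) ^ γ⌉₊ : ℕ) : ℝ) ≤ 2 * R ^ γ ∧
      (⌈(R / k) ^ γ⌉₊ : ℝ) ≤ 2 * (R / k) ^ γ := by
  have hk0 : 0 < k := by linarith
  have hkγ : 1 ≤ k ^ γ := Real.one_le_rpow hk hγ
  have hRkγ : 1 ≤ (R / k) ^ γ := Real.one_le_rpow ((one_le_div hk0).2 hkR) hγ
  have hceil := Nat.ceil_le_two_mul (a := (R / k) ^ γ) (by linarith)
  have := half_le_floor hkγ
  have := Nat.floor_le (a := k ^ γ) (by linarith)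
  have := Nat.le_ceil ((R / k) ^ γ)
  rw [← mul_div_cancel₀ R hk0.ne', Real.mul_rpow hk0.le (div_nonneg (by linarith) hk0.le),
    mul_div_cancel_left₀ _ hk0.ne']
  push_cast
  exact ⟨by nlinarith, by nlinarith, hceil⟩

lemma doubling_pow {V : ℝ → ℝ} {C_D : ℝ} (hC_D : 0 ≤ C_D)
    (hdoub : ∀ r : ℝ, 0 < r → V (2 * r) ≤ C_D * V r) {r : ℝ} (hr : 0 < r) (k : ℕ) :
    V (2 ^ k * r) ≤ C_D ^ k * V r := by
  induction k with
  | zero => simp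
  | succ k ih =>
    calc V (2 ^ (k + 1) * r) = V (2 * (2 ^ k * r)) := by ring_nf
      _ ≤ C_D * V (2 ^ k * r) := hdoub _ (by positivity)
      _ ≤ C_D ^ (k + 1) * V r := by
        rw [pow_succ', mul_assoc]
        exact mul_le_mul_of_nonneg_left ih hC_D

lemma subGaussian_lower_le {V : ℝ → ℝ} (hVpos : ∀ r : ℝ, 0 ≤ r → 0 < V r)
    (hVmono : MonotoneOn V (Set.Ici 0)) {C_D : ℝ} (hC_D : 0 ≤ C_D)
    (hdoub : ∀ r : ℝ, 0 < r → V (2 * r) ≤ C_D * V r) {γ c : ℝ} (hγ : 1 < γ) (hc : 0 < c)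
    {R d n : ℝ} (hR : 1 ≤ R) (hd0 : 0 ≤ d) (hd : d ≤ R) (hn : R ^ γ ≤ n)
    (hn' : n ≤ 8 * R ^ γ) :
    c * Real.exp (-((1 / c) ^ (1 / (γ - 1)))) / (C_D ^ 3 * V R) ≤
      c / V (n ^ (1 / γ)) * Real.exp (-((d ^ γ / (c * n)) ^ (1 / (γ - 1)))) := by
  have hR0 : 0 < R := by linarith
  have hRγ : 0 < R ^ γ := Real.rpow_pos_of_pos hR0 γ
  have hn0 : 0 < n := hRγ.trans_le hn
  have hradius : n ^ (1 / γ) ≤ 2 ^ 3 * R := by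
    have h8 : (8 : ℝ) ≤ 8 ^ γ := Real.self_le_rpow_of_one_le (by norm_num) hγ.le
    calc n ^ (1 / γ) ≤ ((2 ^ 3 * R) ^ γ) ^ γ⁻¹ := by
          rw [one_div]
          refine Real.rpow_le_rpow hn0.le (hn'.trans ?_) (by positivity)
          rw [Real.mul_rpow (by norm_num) hR0.le]
          norm_num
          nlinarith
      _ = 2 ^ 3 * R := Real.rpow_rpow_inv (by positivity) (by positivity)
  have hV : V (n ^ (1 / γ)) ≤ C_D ^ 3 * V R :=
    (hVmono (Set.mem_Ici.2 (by positivity)) (Set.mem_Ici.2 (by positivity)) hradius).trans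
      (doubling_pow hC_D hdoub hR0 3)
  have hexp : d ^ γ / (c * n) ≤ 1 / c := by
    rw [div_le_div_iff₀ (by positivity) hc, one_mul]
    nlinarith [Real.rpow_le_rpow hd0 hd (by linarith : 0 ≤ γ)]
  have hVn := hVpos (n ^ (1 / γ)) (by positivity)
  have hγ1 : 0 < γ - 1 := by linarith
  rw [mul_comm c, mul_div_assoc, mul_comm]
  gcongr ?_ * ?_
  · exact div_le_div_of_nonneg_left hc.le hVn hV
  · exact Real.exp_le_exp.2 (neg_le_neg (Real.rpow_le_rpow (by positivity) hexp (by positivity)))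

lemma iterKernel_halfAddSqKernel_lower (hμ : ∀ x, 0 < μ x) (hs : IsSymmMarkovKernel μ s)
    {G : SimpleGraph Γ} {V : ℝ → ℝ} (hVpos : ∀ r : ℝ, 0 ≤ r → 0 < V r)
    (hVmono : MonotoneOn V (Set.Ici 0)) {C_D : ℝ} (hC_D : 0 ≤ C_D)
    (hdoub : ∀ r : ℝ, 0 < r → V (2 * r) ≤ C_D * V r) {γ c : ℝ} (hγ : 1 < γ) (hc : 0 < c)
    (hsubgL : ∀ (n : ℕ) (x y : Γ), 1 ≤ n → G.dist x y ≤ n →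
      c / V ((n : ℝ) ^ (1 / γ)) *
        Real.exp (-(((G.dist x y : ℝ) ^ γ / (c * n)) ^ (1 / (γ - 1))))
        ≤ iterKernel μ s n x y + iterKernel μ s (n + 1) x y)
    {N : ℕ} {R : ℝ} (hR : 1 ≤ R) (hN : R ^ γ ≤ 2 * N) (hN' : (N : ℝ) ≤ 2 * R ^ γ)
    {x y : Γ} (hxy : (G.dist x y : ℝ) ≤ R) :
    c * Real.exp (-((1 / c) ^ (1 / (γ - 1)))) / (C_D ^ 3 * V R) / 2 ≤
      iterKernel μ (halfAddSqKernel μ s) (2 * N) x y := by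
  have hRγ : R ≤ R ^ γ := Real.self_le_rpow_of_one_le hR hγ.le
  obtain ⟨n, hn⟩ : ∃ n, 2 * N = n + 1 := ⟨2 * N - 1, by
    have : 0 < N := by exact_mod_cast (show (0 : ℝ) < N by linarith)
    omega⟩
  have hn' : (2 * N : ℝ) = n + 1 := by exact_mod_cast hn
  rw [hn]
  refine half_le_iterKernel_halfAddSqKernel_succ hμ hs fun i hi => ?_
  have hi' : (i : ℝ) ≤ n := by exact_mod_cast hi
  have hi0 : (0 : ℝ) ≤ i := i.cast_nonneg
  have hdist : (G.dist x y : ℝ) ≤ (n + 1 + i : ℕ) := by push_cast; linarith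
  have h := hsubgL (n + 1 + i) x y (by omega) (by exact_mod_cast hdist)
  rw [show n + 1 + i + 1 = n + 2 + i by ring] at h
  exact (subGaussian_lower_le hVpos hVmono hC_D hdoub hγ hc hR (Nat.cast_nonneg _) hxy
    (by push_cast; linarith) (by push_cast; linarith)).trans h

lemma exists_inv_ballVolume_le_iterKernel (hμ : ∀ x, 0 < μ x) (hs : IsSymmMarkovKernel μ s)
    {G : SimpleGraph Γ} {V : ℝ → ℝ} (hVpos : ∀ r : ℝ, 0 ≤ r → 0 < V r)
    (hVmono : MonotoneOn V (Set.Ici 0)) {C_D C_h : ℝ} (hC_D : 0 < C_D) (hC_h : 0 < C_h)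
    (hdoub : ∀ r : ℝ, 0 < r → V (2 * r) ≤ C_D * V r)
    (hhom : ∀ x (r : ℝ), 0 < r → C_h⁻¹ * V r ≤ ∑' z : {z // (G.dist x z : ℝ) ≤ r}, μ z)
    {γ c : ℝ} (hγ : 1 < γ) (hc : 0 < c)
    (hsubgL : ∀ (n : ℕ) (x y : Γ), 1 ≤ n → G.dist x y ≤ n →
      c / V ((n : ℝ) ^ (1 / γ)) *
        Real.exp (-(((G.dist x y : ℝ) ^ γ / (c * n)) ^ (1 / (γ - 1))))
        ≤ iterKernel μ s n x y + iterKernel μ s (n + 1) x y) :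
    ∃ A > 0, ∀ (N : ℕ) (R : ℝ), 1 ≤ R → R ^ γ ≤ 2 * N → (N : ℝ) ≤ 2 * R ^ γ →
      ∀ x y, (G.dist x y : ℝ) ≤ R → (∑' z : {z // (G.dist x z : ℝ) ≤ R}, μ z)⁻¹ ≤
        A * iterKernel μ (halfAddSqKernel μ s) (2 * N) x y := by
  set e := Real.exp (-((1 / c) ^ (1 / (γ - 1))))
  have he : 0 < e := Real.exp_pos _
  refine ⟨2 * C_h * C_D ^ 3 / (c * e), by positivity, fun N R hR hN hN' x y hxy => ?_⟩
  have hVR := hVpos R (by linarith)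
  calc (∑' z : {z // (G.dist x z : ℝ) ≤ R}, μ z)⁻¹ ≤ (C_h⁻¹ * V R)⁻¹ :=
        inv_anti₀ (by positivity) (hhom x R (by linarith))
    _ = 2 * C_h * C_D ^ 3 / (c * e) * (c * e / (C_D ^ 3 * V R) / 2) := by
        field_simp
    _ ≤ _ := by
        gcongr
        exact iterKernel_halfAddSqKernel_lower hμ hs hVpos hVmono hC_D.le hdoub hγ hc hsubgL hR
          hN hN' hxy

end PseudoPoincare

open PseudoPoincare in
theorem pseudo_poincare_iterated_Q_general
    {Γ : Type*}
    (G : SimpleGraph Γ) (hconn : G.Connected)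
    (hlocfin : ∀ x : Γ, {y : Γ | G.Adj x y}.Finite)
    -- edge weights
    (w : Γ → Γ → ℝ) (hw_symm : ∀ x y, w x y = w y x)
    (hw_nonneg : ∀ x y, 0 ≤ w x y)
    (hw_pos : ∀ x y, 0 < w x y ↔ G.Adj x y)
    -- vertex measure
    (μ : Γ → ℝ) (hμ : ∀ x, μ x = ∑' y : Γ, w x y)
    -- (count): μ comparable to the counting measure
    (Cμ : ℝ) (hCμ : 1 ≤ Cμ) (hcount : ∀ x, Cμ⁻¹ ≤ μ x ∧ μ x ≤ Cμ)
    -- volume of balls and uniform volume doubling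
    (Vb : Γ → ℝ → ℝ)
    (hVb : ∀ x r, Vb x r = ∑' y : {y : Γ // (G.dist x y : ℝ) ≤ r}, μ (y : Γ))
    (V : ℝ → ℝ) (hVpos : ∀ r : ℝ, 0 ≤ r → 0 < V r)
    (hVmono : StrictMonoOn V (Set.Ici (0 : ℝ)))
    (C_D C_h : ℝ) (hC_D : 1 < C_D) (hC_h : 1 < C_h)
    (hdoub : ∀ r : ℝ, 0 < r → V (2 * r) ≤ C_D * V r)
    (hhom : ∀ (x : Γ) (r : ℝ), 0 < r → C_h⁻¹ * V r ≤ Vb x r ∧ Vb x r ≤ C_h * V r)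
    -- the heat kernel of the natural random walk
    (p : ℕ → Γ → Γ → ℝ)
    (hp : ∀ n, p n = iterKernel μ (fun x y => w x y / (μ x * μ y)) n)
    -- sub-Gaussian estimates with escape time exponent γ
    (γ : ℝ) (hγ : 1 < γ)
    (c : ℝ) (hc : 0 < c)
    (hsubgL : ∀ (n : ℕ) (x y : Γ), 1 ≤ n → G.dist x y ≤ n →
      c / V ((n : ℝ) ^ (1 / γ)) *
        Real.exp (-(((G.dist x y : ℝ) ^ γ / (c * n)) ^ (1 / (γ - 1))))
        ≤ p n x y + p (n + 1) x y)
    -- Q = (P + P²)/2 and its iterated kernels q_n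
    (q : ℕ → Γ → Γ → ℝ)
    (hq : ∀ n, q n = iterKernel μ (fun x y => (p 1 x y + p 2 x y) / 2) n)
    :
    ∃ C₁ : ℝ, 0 < C₁ ∧ ∀ f : Γ → ℝ,
      Summable (fun x : Γ => f x ^ 2 * μ x) →
      ∀ (k : ℕ) (R : ℝ), 1 ≤ k → (k : ℝ) ≤ R →
      (∑' x : Γ, (f x - ballAvg G μ f R x) ^ 2 * μ x) ≤
        C₁ * (R / k) ^ γ * dirichletForm μ (q (2 * ⌊(k : ℝ) ^ γ⌋₊)) f := by
  have hμ0 : ∀ x, 0 < μ x := fun x => (inv_pos.2 (by linarith)).trans_le (hcount x).1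
  have hP := isSymmMarkovKernel_of_weights hμ0 hw_symm hw_nonneg
    (fun x => (hlocfin x).subset fun y hy => (hw_pos x y).1 ((hw_nonneg x y).lt_of_ne' hy)) hμ
  obtain rfl : p = iterKernel μ (fun x y => w x y / (μ x * μ y)) := funext hp
  obtain rfl : q = iterKernel μ (halfAddSqKernel μ _) := funext hq
  set Q := halfAddSqKernel μ fun x y => w x y / (μ x * μ y)
  have hQ : IsSymmMarkovKernel μ Q := isSymmMarkovKernel_halfAddSqKernel hμ0 hP
  obtain ⟨A, hA, hlow⟩ := exists_inv_ballVolume_le_iterKernel hμ0 hP hVpos hVmono.monotoneOn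
    (by linarith) (by linarith) hdoub (fun x r hr => hVb x r ▸ (hhom x r hr).1) hγ hc hsubgL
  refine ⟨4 * A, by positivity, fun f hf k R hk hkR => ?_⟩
  obtain ⟨hN, hN', hj⟩ :=
    floor_rpow_mul_ceil_bounds (γ := γ) (by exact_mod_cast hk) hkR (by linarith)
  set m := ⌊(k : ℝ) ^ γ⌋₊
  set j := ⌈(R / k) ^ γ⌉₊
  have hR : (1 : ℝ) ≤ R := le_trans (by exact_mod_cast hk) hkR
  calc ∑' x, (f x - ballAvg G μ f R x) ^ 2 * μ x
      ≤ 2 * A * dirichletForm μ (iterKernel μ Q (2 * (m * j))) f :=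
        tsum_sq_sub_ballAvg_le hμ0 hconn hlocfin (isSymmMarkovKernel_iterKernel hμ0 hQ _)
          (by linarith) hA.le (hlow _ R hR hN hN') hf
    _ ≤ 2 * A * (j * dirichletForm μ (iterKernel μ Q (2 * m)) f) := by
        gcongr
        exact dirichletForm_iterKernel_mul_le hμ0 hQ hf m j
    _ ≤ 2 * A * (2 * (R / k) ^ γ * dirichletForm μ (iterKernel μ Q (2 * m)) f) := by
        gcongr
        exact dirichletForm_nonneg (fun x => (hμ0 x).le) (isSymmMarkovKernel_iterKernel hμ0 hQ _)
          hf
    _ = 4 * A * (R / k) ^ γ * dirichletForm μ (iterKernel μ Q (2 * m)) f := by ring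

/-- Lemma 2.5: pseudo-Poincaré inequality for iterated powers of `Q`. -/
theorem pseudo_poincare_iterated_Q
    {Γ : Type*} [Countable Γ] [Infinite Γ]
    (G : SimpleGraph Γ) (hconn : G.Connected)
    (hlocfin : ∀ x : Γ, {y : Γ | G.Adj x y}.Finite)
    -- edge weights
    (w : Γ → Γ → ℝ) (hw_symm : ∀ x y, w x y = w y x)
    (hw_nonneg : ∀ x y, 0 ≤ w x y)
    (hw_pos : ∀ x y, 0 < w x y ↔ G.Adj x y)
    -- vertex measure
    (μ : Γ → ℝ) (hμ : ∀ x, μ x = ∑' y : Γ, w x y)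
    -- (count): μ comparable to the counting measure
    (Cμ : ℝ) (hCμ : 1 ≤ Cμ) (hcount : ∀ x, Cμ⁻¹ ≤ μ x ∧ μ x ≤ Cμ)
    -- volume of balls and uniform volume doubling
    (Vb : Γ → ℝ → ℝ)
    (hVb : ∀ x r, Vb x r = ∑' y : {y : Γ // (G.dist x y : ℝ) ≤ r}, μ (y : Γ))
    (V : ℝ → ℝ) (hVpos : ∀ r : ℝ, 0 ≤ r → 0 < V r)
    (hVmono : StrictMonoOn V (Set.Ici (0 : ℝ)))
    (hVcont : ContinuousOn V (Set.Ici (0 : ℝ)))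
    (C_D C_h : ℝ) (hC_D : 1 < C_D) (hC_h : 1 < C_h)
    (hdoub : ∀ r : ℝ, 0 < r → V (2 * r) ≤ C_D * V r)
    (hhom : ∀ (x : Γ) (r : ℝ), 0 < r → C_h⁻¹ * V r ≤ Vb x r ∧ Vb x r ≤ C_h * V r)
    -- the heat kernel of the natural random walk
    (p : ℕ → Γ → Γ → ℝ)
    (hp : ∀ n, p n = iterKernel μ (fun x y => w x y / (μ x * μ y)) n)
    -- sub-Gaussian estimates with escape time exponent γ
    (γ : ℝ) (hγ : 1 < γ)
    (c C : ℝ) (hc : 0 < c) (hC : 0 < C)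
    (hsubgU : ∀ (n : ℕ) (x y : Γ), 1 ≤ n →
      p n x y ≤ C / V ((n : ℝ) ^ (1 / γ)) *
        Real.exp (-(((G.dist x y : ℝ) ^ γ / (C * n)) ^ (1 / (γ - 1)))))
    (hsubgL : ∀ (n : ℕ) (x y : Γ), 1 ≤ n → G.dist x y ≤ n →
      c / V ((n : ℝ) ^ (1 / γ)) *
        Real.exp (-(((G.dist x y : ℝ) ^ γ / (c * n)) ^ (1 / (γ - 1))))
        ≤ p n x y + p (n + 1) x y)
    -- Q = (P + P²)/2 and its iterated kernels q_n
    (q : ℕ → Γ → Γ → ℝ)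
    (hq : ∀ n, q n = iterKernel μ (fun x y => (p 1 x y + p 2 x y) / 2) n)
    :
    ∃ C₁ : ℝ, 0 < C₁ ∧ ∀ f : Γ → ℝ,
      Summable (fun x : Γ => f x ^ 2 * μ x) →
      ∀ (k : ℕ) (R : ℝ), 1 ≤ k → (k : ℝ) ≤ R →
      (∑' x : Γ, (f x - ballAvg G μ f R x) ^ 2 * μ x) ≤
        C₁ * (R / k) ^ γ * dirichletForm μ (q (2 * ⌊(k : ℝ) ^ γ⌋₊)) f :=
  pseudo_poincare_iterated_Q_general G hconn hlocfin w hw_symm hw_nonneg hw_pos μ hμ Cμ hCμ hcount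
    Vb hVb V hVpos hVmono C_D C_h hC_D hC_h hdoub hhom p hp γ hγ c hc hsubgL q hq
end
end

section
/- Let φ : [0,∞) → [1,∞) be a continuous function that is regularly varying of index β > 0, and let γ > 1. Define η : [0,∞) → (0,∞) by η(t) = t^γ / ∫₀^t s^{γ−1}/φ(s) ds for t > 0 and η(0) = γφ(0). Then: (a) η is continuous, positive, and regularly varying of index min(β,γ) (i.e. η(λt)/η(t) → λ^{min(β,γ)} as t → ∞ for every λ > 0); (b) there exists C₁ > 0 such that η(x) ≤ C₁ φ(x) for all x ≥ 0. -/
/-!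
Put `I(t) = ∫₀ᵗ g` with `g(s) = s^(γ-1)/φ(s)`, which is regularly varying of index
`ρ = γ - 1 - β`. Comparing `g(l s)` with `c g(s)` on `[T, t]` shows: if `I → ∞`, then
`I(l t)/I(t) → l^(ρ+1)` (Karamata), and this forces `ρ ≥ -1`; if `I` converges, the ratio tends
to `1`, and this forces `ρ ≤ -1`. Either way `I` is regularly varying of index `max (γ - β) 0`,
so `η = t^γ / I` has index `min β γ`.

The substitution `s = t u` gives `η(t) = (∫₀¹ u^(γ-1)/φ(t u) du)⁻¹` for every `t ≥ 0`, whence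
continuity and positivity. Fatou's lemma, applied to `u^(γ-1) φ(t)/φ(t u) → u^(γ-1-β)`, keeps
`φ(t) ∫₀¹ u^(γ-1)/φ(t u) du` away from `0` for large `t`, i.e. `η ≤ C φ` eventually, and
compactness of `[0, T]` does the rest.
-/

open Filter

open Set MeasureTheory Topology Real

def IsRegularlyVarying (f : ℝ → ℝ) (ρ : ℝ) : Prop :=
  ∀ l : ℝ, 0 < l → Tendsto (fun t => f (l * t) / f t) atTop (𝓝 (l ^ ρ))

namespace IsRegularlyVarying

variable {f g : ℝ → ℝ} {ρ σ : ℝ}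

theorem congr (hf : IsRegularlyVarying f ρ) (h : f =ᶠ[atTop] g) : IsRegularlyVarying g ρ :=
  fun l hl => (hf l hl).congr' <|
    ((tendsto_id.const_mul_atTop hl).eventually h).and h |>.mono fun _ ht =>
      congrArg₂ (· / ·) ht.1 ht.2

theorem div (hf : IsRegularlyVarying f ρ) (hg : IsRegularlyVarying g σ) :
    IsRegularlyVarying (fun t => f t / g t) (ρ - σ) := fun l hl => by
  rw [rpow_sub hl]
  exact ((hf l hl).div (hg l hl) (rpow_pos_of_pos hl σ).ne').congr fun t =>
    div_div_div_comm _ _ _ _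

theorem eventually_comp_mul_le (hf : IsRegularlyVarying f ρ) (hf_pos : ∀ᶠ s in atTop, 0 < f s)
    {l c : ℝ} (hl : 0 < l) (hc : l ^ ρ < c) : ∀ᶠ s in atTop, f (l * s) ≤ c * f s := by
  filter_upwards [(hf l hl).eventually (gt_mem_nhds hc), hf_pos] with s hs hpos
  exact (div_le_iff₀ hpos).1 hs.le

end IsRegularlyVarying

theorem isRegularlyVarying_rpow (α : ℝ) : IsRegularlyVarying (fun t => t ^ α) α := fun l hl =>
  tendsto_const_nhds.congr' <| (eventually_gt_atTop 0).mono fun t ht => by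
    show l ^ α = (l * t) ^ α / t ^ α
    rw [mul_rpow hl.le ht.le, mul_div_cancel_right₀ _ (rpow_pos_of_pos ht α).ne']

noncomputable def primitive (f : ℝ → ℝ) (t : ℝ) : ℝ := ∫ s in (0 : ℝ)..t, f s

section Primitive

variable {f : ℝ → ℝ} {ρ : ℝ}

theorem intervalIntegrable_of_continuousOn_Ici (hf : ContinuousOn f (Ici 0)) {a b : ℝ}
    (ha : 0 ≤ a) (hb : 0 ≤ b) : IntervalIntegrable f volume a b :=
  (hf.mono fun _ hx => le_trans (le_min ha hb) hx.1).intervalIntegrable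

theorem primitive_sub_primitive (hf : ContinuousOn f (Ici 0)) {a b : ℝ} (ha : 0 ≤ a)
    (hb : 0 ≤ b) : primitive f b - primitive f a = ∫ s in a..b, f s :=
  intervalIntegral.integral_interval_sub_left (intervalIntegrable_of_continuousOn_Ici hf le_rfl hb)
    (intervalIntegrable_of_continuousOn_Ici hf le_rfl ha)

theorem strictMonoOn_primitive (hf : ContinuousOn f (Ici 0)) (hf_pos : ∀ s, 0 < s → 0 < f s) :
    StrictMonoOn (primitive f) (Ici 0) := by
  intro a ha b hb hab
  rw [← sub_pos, primitive_sub_primitive hf ha hb]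
  exact intervalIntegral.intervalIntegral_pos_of_pos_on
    (intervalIntegrable_of_continuousOn_Ici hf ha hb)
    (fun x hx => hf_pos x ((mem_Ici.1 ha).trans_lt hx.1)) hab

theorem primitive_pos (hf : ContinuousOn f (Ici 0)) (hf_pos : ∀ s, 0 < s → 0 < f s) {t : ℝ}
    (ht : 0 < t) : 0 < primitive f t := by
  simpa [primitive] using strictMonoOn_primitive hf hf_pos (mem_Ici.2 le_rfl) ht.le ht

theorem primitive_le_of_tendsto (hf : ContinuousOn f (Ici 0)) (hf_pos : ∀ s, 0 < s → 0 < f s)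
    {L T : ℝ} (hL : Tendsto (primitive f) atTop (𝓝 L)) (hT : 0 ≤ T) : primitive f T ≤ L :=
  ge_of_tendsto hL <| (eventually_ge_atTop T).mono fun _ ht =>
    (strictMonoOn_primitive hf hf_pos).monotoneOn hT (hT.trans ht) ht

theorem primitive_comp_mul_sub_le (hf : ContinuousOn f (Ici 0)) {l c T t : ℝ} (hl : 0 < l)
    (hT : 0 ≤ T) (hTt : T ≤ t) (hbound : ∀ s ∈ Icc T t, f (l * s) ≤ c * f s) :
    primitive f (l * t) - primitive f (l * T) ≤ l * c * (primitive f t - primitive f T) := by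
  have hmaps : MapsTo (l * ·) (uIcc T t) (Ici 0) := fun s hs =>
    mul_nonneg hl.le (hT.trans (uIcc_of_le hTt ▸ hs).1)
  rw [primitive_sub_primitive hf (mul_nonneg hl.le hT) (mul_nonneg hl.le (hT.trans hTt)),
    primitive_sub_primitive hf hT (hT.trans hTt), ← intervalIntegral.mul_integral_comp_mul_left,
    mul_assoc, ← intervalIntegral.integral_const_mul c]
  refine mul_le_mul_of_nonneg_left ?_ hl.le
  exact intervalIntegral.integral_mono_on hTt
    ((hf.comp (continuous_const_mul l).continuousOn hmaps).intervalIntegrable)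
    ((intervalIntegrable_of_continuousOn_Ici hf hT (hT.trans hTt)).const_mul c) hbound

theorem exists_primitive_comp_mul_sub_le (hf : ContinuousOn f (Ici 0))
    (hf_pos : ∀ s, 0 < s → 0 < f s) (hrv : IsRegularlyVarying f ρ) {l c : ℝ} (hl : 0 < l)
    (hc : l ^ ρ < c) : ∃ T, 1 ≤ T ∧ ∀ t, T ≤ t →
      primitive f (l * t) - primitive f (l * T) ≤ l * c * (primitive f t - primitive f T) := by
  obtain ⟨T, hT⟩ := eventually_atTop.1 <|
    hrv.eventually_comp_mul_le ((eventually_gt_atTop 0).mono hf_pos) hl hc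
  refine ⟨max T 1, le_max_right _ _, fun t ht => primitive_comp_mul_sub_le hf hl
    (zero_le_one.trans (le_max_right _ _)) ht fun s hs => hT s ((le_max_left _ _).trans hs.1)⟩

theorem eventually_primitive_comp_mul_div_lt (hf : ContinuousOn f (Ici 0))
    (hf_pos : ∀ s, 0 < s → 0 < f s) (hrv : IsRegularlyVarying f ρ)
    (htop : Tendsto (primitive f) atTop atTop) {l b : ℝ} (hl : 0 < l) (hb : l ^ (ρ + 1) < b) :
    ∀ᶠ t in atTop, primitive f (l * t) / primitive f t < b := by
  obtain ⟨c, hc, hcb⟩ : ∃ c, l ^ ρ < c ∧ c < b / l := exists_between <| by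
    rwa [lt_div_iff₀ hl, ← rpow_add_one hl.ne']
  have hlc : l * c < b := (lt_div_iff₀' hl).1 hcb
  obtain ⟨T, hT1, hT⟩ := exists_primitive_comp_mul_sub_le hf hf_pos hrv hl hc
  set K := primitive f (l * T) - l * c * primitive f T
  have hlim : Tendsto (fun t => l * c + K / primitive f t) atTop (𝓝 (l * c)) := by
    simpa using tendsto_const_nhds.add (tendsto_const_nhds.div_atTop htop)
  filter_upwards [hlim.eventually (gt_mem_nhds hlc), eventually_ge_atTop T] with t hlt hTt
  have hFt := primitive_pos hf hf_pos (zero_lt_one.trans_le (hT1.trans hTt))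
  calc primitive f (l * t) / primitive f t ≤ l * c + K / primitive f t := by
        rw [add_div' _ _ _ hFt.ne', div_le_div_iff_of_pos_right hFt]
        linarith [hT t hTt]
    _ < b := hlt

theorem isRegularlyVarying_primitive_of_tendsto_atTop (hf : ContinuousOn f (Ici 0))
    (hf_pos : ∀ s, 0 < s → 0 < f s) (hrv : IsRegularlyVarying f ρ)
    (htop : Tendsto (primitive f) atTop atTop) : IsRegularlyVarying (primitive f) (ρ + 1) := by
  intro l hl
  refine tendsto_order.2 ⟨fun a ha => ?_,
    fun b hb => eventually_primitive_comp_mul_div_lt hf hf_pos hrv htop hl hb⟩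
  rcases le_or_gt a 0 with ha0 | ha0
  · filter_upwards [eventually_gt_atTop 0] with t ht
    exact ha0.trans_lt
      (div_pos (primitive_pos hf hf_pos (mul_pos hl ht)) (primitive_pos hf hf_pos ht))
  -- the lower bound is the upper bound for the ratio `l⁻¹`, read at the point `l * t`
  have hb : l⁻¹ ^ (ρ + 1) < a⁻¹ := by
    rw [inv_rpow hl.le]
    exact inv_strictAnti₀ ha0 ha
  filter_upwards [(tendsto_id.const_mul_atTop hl).eventually
    (eventually_primitive_comp_mul_div_lt hf hf_pos hrv htop (inv_pos.2 hl) hb),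
    eventually_gt_atTop 0] with t ht ht0
  rw [id, inv_mul_cancel_left₀ hl.ne'] at ht
  rw [← inv_div]
  exact (lt_inv_comm₀ ha0 (div_pos (primitive_pos hf hf_pos ht0)
    (primitive_pos hf hf_pos (mul_pos hl ht0)))).2 ht

theorem not_tendsto_primitive_atTop_of_lt_neg_one (hf : ContinuousOn f (Ici 0))
    (hf_pos : ∀ s, 0 < s → 0 < f s) (hrv : IsRegularlyVarying f ρ) (hρ : ρ < -1) :
    ¬ Tendsto (primitive f) atTop atTop := by
  intro htop
  have h2 : (2 : ℝ) ^ ρ < 2⁻¹ := by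
    rw [← rpow_neg_one]
    exact rpow_lt_rpow_of_exponent_lt one_lt_two hρ
  obtain ⟨c, hc, hc2⟩ := exists_between h2
  have hc0 : 0 < c := (rpow_pos_of_pos two_pos ρ).trans hc
  obtain ⟨T, hT1, hT⟩ := exists_primitive_comp_mul_sub_le hf hf_pos hrv two_pos hc
  have hbdd : ∀ t, T ≤ t → (1 - 2 * c) * primitive f (2 * t) ≤ primitive f (2 * T) := by
    intro t ht
    have ht0 : 0 ≤ t := zero_le_one.trans (hT1.trans ht)
    have hmono : primitive f t ≤ primitive f (2 * t) :=
      (strictMonoOn_primitive hf hf_pos).monotoneOn ht0 (mem_Ici.2 (by linarith)) (by linarith)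
    have hFT := primitive_pos hf hf_pos (zero_lt_one.trans_le hT1)
    nlinarith [hT t ht]
  obtain ⟨t, hlarge, ht⟩ := (((htop.comp (tendsto_id.const_mul_atTop two_pos)).const_mul_atTop
    (show 0 < 1 - 2 * c by linarith)).eventually_gt_atTop (primitive f (2 * T))).and
    (eventually_ge_atTop T) |>.exists
  exact (hbdd t ht).not_gt hlarge

theorem not_tendsto_primitive_nhds_of_neg_one_lt (hf : ContinuousOn f (Ici 0))
    (hf_pos : ∀ s, 0 < s → 0 < f s) (hrv : IsRegularlyVarying f ρ) (hρ : -1 < ρ) (L : ℝ) :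
    ¬ Tendsto (primitive f) atTop (𝓝 L) := by
  intro hL
  have h2 : (2⁻¹ : ℝ) ^ ρ < 2 := by
    rw [inv_rpow zero_le_two, ← rpow_neg zero_le_two]
    simpa using rpow_lt_rpow_of_exponent_lt one_lt_two (show -ρ < 1 by linarith)
  obtain ⟨c, hc, hc2⟩ := exists_between h2
  have hc0 : 0 < c := (rpow_pos_of_pos (inv_pos.2 two_pos) ρ).trans hc
  obtain ⟨T, hT1, hT⟩ := exists_primitive_comp_mul_sub_le hf hf_pos hrv (inv_pos.2 two_pos) hc
  have hlim : L - primitive f (2⁻¹ * T) ≤ 2⁻¹ * c * (L - primitive f T) :=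
    le_of_tendsto_of_tendsto
      ((hL.comp (tendsto_id.const_mul_atTop (inv_pos.2 two_pos))).sub_const _)
      ((hL.sub_const _).const_mul _) ((eventually_ge_atTop T).mono hT)
  have hlt : primitive f (2⁻¹ * T) < primitive f T :=
    strictMonoOn_primitive hf hf_pos (mem_Ici.2 (by linarith)) (mem_Ici.2 (by linarith))
      (by linarith)
  have hFT := primitive_le_of_tendsto hf hf_pos hL (by linarith : (0 : ℝ) ≤ T)
  nlinarith

theorem isRegularlyVarying_primitive (hf : ContinuousOn f (Ici 0))
    (hf_pos : ∀ s, 0 < s → 0 < f s) (hrv : IsRegularlyVarying f ρ) :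
    IsRegularlyVarying (primitive f) (max (ρ + 1) 0) := by
  have hmono : Monotone fun t => primitive f (max t 0) := fun a b hab =>
    (strictMonoOn_primitive hf hf_pos).monotoneOn (le_max_right a 0) (le_max_right b 0)
      (max_le_max_right 0 hab)
  have hev : (fun t => primitive f (max t 0)) =ᶠ[atTop] primitive f :=
    (eventually_ge_atTop 0).mono fun t ht => by simp only [max_eq_left ht]
  rcases tendsto_atTop_of_monotone hmono with htop | ⟨L, hL⟩
  · replace htop := htop.congr' hev
    have hρ : -1 ≤ ρ := not_lt.1 fun h =>
      not_tendsto_primitive_atTop_of_lt_neg_one hf hf_pos hrv h htop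
    rw [max_eq_left (by linarith)]
    exact isRegularlyVarying_primitive_of_tendsto_atTop hf hf_pos hrv htop
  · replace hL := hL.congr' hev
    have hρ : ρ ≤ -1 := not_lt.1 fun h =>
      not_tendsto_primitive_nhds_of_neg_one_lt hf hf_pos hrv h L hL
    have hL0 : 0 < L := (primitive_pos hf hf_pos one_pos).trans_le
      (primitive_le_of_tendsto hf hf_pos hL zero_le_one)
    intro l hl
    rw [max_eq_right (by linarith), rpow_zero, ← div_self hL0.ne']
    exact (hL.comp (tendsto_id.const_mul_atTop hl)).div hL hL0.ne'

end Primitive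

theorem exists_pos_eventually_le_integral_of_tendsto {ι α : Type*} [MeasurableSpace α]
    {μ : Measure α} {l : Filter ι} [l.NeBot] [l.IsCountablyGenerated] {h : ι → α → ℝ}
    {a : α → ℝ} (hμ : μ ≠ 0) (hint : ∀ i, Integrable (h i) μ) (hnn : ∀ i, 0 ≤ᵐ[μ] h i)
    (hlim : ∀ᵐ u ∂μ, Tendsto (fun i => h i u) l (𝓝 (a u))) (ha : ∀ᵐ u ∂μ, 0 < a u) :
    ∃ c > 0, ∀ᶠ i in l, c ≤ ∫ u, h i u ∂μ := by
  have ha_meas : AEMeasurable a μ :=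
    aemeasurable_of_tendsto_metrizable_ae l (fun i => (hint i).aemeasurable) hlim
  have hpos : 0 < ∫⁻ u, ENNReal.ofReal (a u) ∂μ := by
    rw [pos_iff_ne_zero, Ne, lintegral_eq_zero_iff' ha_meas.ennreal_ofReal]
    intro h0
    refine hμ (ae_eq_bot.1 (eventually_false_iff_eq_bot.1 ?_))
    filter_upwards [h0, ha] with u hu hau
    simp only [Pi.zero_apply, ENNReal.ofReal_eq_zero] at hu
    linarith
  have hfatou : ∫⁻ u, ENNReal.ofReal (a u) ∂μ ≤
      liminf (fun i => ∫⁻ u, ENNReal.ofReal (h i u) ∂μ) l :=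
    calc ∫⁻ u, ENNReal.ofReal (a u) ∂μ
        = ∫⁻ u, liminf (fun i => ENNReal.ofReal (h i u)) l ∂μ :=
          lintegral_congr_ae <| hlim.mono fun u hu =>
            ((ENNReal.continuous_ofReal.tendsto _).comp hu).liminf_eq.symm
      _ ≤ _ := lintegral_liminf_le' fun i => (hint i).aemeasurable.ennreal_ofReal
  obtain ⟨c, -, hc0, hc⟩ := ENNReal.lt_iff_exists_real_btwn.1 hpos
  refine ⟨c, ENNReal.ofReal_pos.1 hc0, ?_⟩
  filter_upwards [eventually_lt_of_lt_liminf (hc.trans_le hfatou)] with i hi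
  rw [← ofReal_integral_eq_lintegral_ofReal (hint i) (hnn i)] at hi
  exact (ENNReal.ofReal_lt_ofReal_iff_of_nonneg (ENNReal.ofReal_pos.1 hc0).le).1 hi |>.le

theorem exists_pos_eventually_le_integral_of_tendsto' {ι α : Type*} [MeasurableSpace α]
    {μ : Measure α} {l : Filter ι} [l.NeBot] [l.IsCountablyGenerated] {h : ι → α → ℝ}
    {a : α → ℝ} (hμ : μ ≠ 0) (hint : ∀ᶠ i in l, Integrable (h i) μ)
    (hnn : ∀ᶠ i in l, 0 ≤ᵐ[μ] h i) (hlim : ∀ᵐ u ∂μ, Tendsto (fun i => h i u) l (𝓝 (a u)))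
    (ha : ∀ᵐ u ∂μ, 0 < a u) : ∃ c > 0, ∀ᶠ i in l, c ≤ ∫ u, h i u ∂μ := by
  classical
  -- Fatou's lemma wants every `h i` measurable: replace the bad ones by `0`
  set h' : ι → α → ℝ := fun i => if Integrable (h i) μ ∧ 0 ≤ᵐ[μ] h i then h i else 0
  have hev : ∀ᶠ i in l, h' i = h i := (hint.and hnn).mono fun i hi => if_pos hi
  have hgood : ∀ i, Integrable (h' i) μ ∧ 0 ≤ᵐ[μ] h' i := fun i => by
    by_cases hi : Integrable (h i) μ ∧ 0 ≤ᵐ[μ] h i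
    · rw [show h' i = h i from if_pos hi]
      exact hi
    · rw [show h' i = 0 from if_neg hi]
      exact ⟨integrable_zero _ _ _, EventuallyLE.rfl⟩
  obtain ⟨c, hc, hc'⟩ := exists_pos_eventually_le_integral_of_tendsto hμ
    (fun i => (hgood i).1) (fun i => (hgood i).2)
    (hlim.mono fun u hu => hu.congr' <| hev.mono fun i hi => by
      show h i u = h' i u
      rw [hi]) ha
  exact ⟨c, hc, (hc'.and hev).mono fun i hi => hi.2 ▸ hi.1⟩

theorem exists_forall_le_mul_of_eventually_le {f g : ℝ → ℝ} {C : ℝ}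
    (hf : ContinuousOn f (Ici 0)) (hg : ContinuousOn g (Ici 0)) (hg_pos : ∀ x, 0 ≤ x → 0 < g x)
    (h : ∀ᶠ x in atTop, f x ≤ C * g x) : ∃ C₁ : ℝ, 0 < C₁ ∧ ∀ x : ℝ, 0 ≤ x → f x ≤ C₁ * g x := by
  obtain ⟨T, hT⟩ := eventually_atTop.1 h
  obtain ⟨M, hM⟩ := (isCompact_Icc (a := 0) (b := T)).bddAbove_image
    ((hf.div hg fun x hx => (hg_pos x hx).ne').mono Icc_subset_Ici_self)
  refine ⟨max (max C M) 1, by positivity, fun x hx => ?_⟩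
  rcases le_total x T with hxT | hTx
  · have := hM ⟨x, ⟨hx, hxT⟩, rfl⟩
    rw [Pi.div_apply, div_le_iff₀ (hg_pos x hx)] at this
    exact this.trans (mul_le_mul_of_nonneg_right ((le_max_right C M).trans (le_max_left _ _))
      (hg_pos x hx).le)
  · exact (hT x hTx).trans (mul_le_mul_of_nonneg_right ((le_max_left C M).trans (le_max_left _ _))
      (hg_pos x hx).le)

section Rescaled

variable {φ : ℝ → ℝ} {γ : ℝ}

theorem isRegularlyVarying_rpow_div_primitive (hφ : ContinuousOn φ (Ici 0))
    (hφ_pos : ∀ x, 0 ≤ x → 0 < φ x) {β : ℝ} (hrv : IsRegularlyVarying φ β) (hγ : 1 ≤ γ) :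
    IsRegularlyVarying (fun t => t ^ γ / primitive (fun s => s ^ (γ - 1) / φ s) t) (min β γ) := by
  have h := (isRegularlyVarying_rpow γ).div <| isRegularlyVarying_primitive
    (f := fun s => s ^ (γ - 1) / φ s)
    ((continuous_rpow_const (sub_nonneg.2 hγ)).continuousOn.div hφ fun x hx =>
      (hφ_pos x hx).ne')
    (fun s hs => div_pos (rpow_pos_of_pos hs _) (hφ_pos s hs.le))
    ((isRegularlyVarying_rpow (γ - 1)).div hrv)
  convert h using 1
  rcases le_total β γ with hβγ | hγβ
  · rw [max_eq_left (by linarith), min_eq_left hβγ]; ring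
  · rw [max_eq_right (by linarith), min_eq_right hγβ]; ring

theorem integral_rpow_div_eq_rpow_mul_integral_comp_mul (φ : ℝ → ℝ) (γ : ℝ) {t : ℝ}
    (ht : 0 < t) : ∫ s in (0 : ℝ)..t, s ^ (γ - 1) / φ s =
      t ^ γ * ∫ u in (0 : ℝ)..1, u ^ (γ - 1) / φ (t * u) :=
  calc ∫ s in (0 : ℝ)..t, s ^ (γ - 1) / φ s
      = t * ∫ u in (0 : ℝ)..1, (t * u) ^ (γ - 1) / φ (t * u) := by
        simpa using (intervalIntegral.mul_integral_comp_mul_left (a := 0) (b := 1)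
          (f := fun s => s ^ (γ - 1) / φ s) (c := t)).symm
    _ = t * ∫ u in (0 : ℝ)..1, t ^ (γ - 1) * (u ^ (γ - 1) / φ (t * u)) := by
        congr 1
        refine intervalIntegral.integral_congr fun u hu => ?_
        rw [uIcc_of_le zero_le_one] at hu
        rw [mul_rpow ht.le hu.1, mul_div_assoc]
    _ = t ^ γ * ∫ u in (0 : ℝ)..1, u ^ (γ - 1) / φ (t * u) := by
        rw [intervalIntegral.integral_const_mul, ← mul_assoc, rpow_sub_one ht.ne',
          mul_div_cancel₀ _ ht.ne']

theorem integral_rpow_div_comp_zero_mul (φ : ℝ → ℝ) (hγ : 0 < γ) :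
    ∫ u in (0 : ℝ)..1, u ^ (γ - 1) / φ (0 * u) = (γ * φ 0)⁻¹ := by
  simp only [zero_mul, intervalIntegral.integral_div]
  rw [integral_rpow (Or.inl (by linarith)), sub_add_cancel, one_rpow, zero_rpow hγ.ne', sub_zero,
    mul_inv, one_div, div_eq_mul_inv]

theorem continuousOn_integral_rpow_div_comp_mul (hφ : ContinuousOn φ (Ici 0))
    (hφ_pos : ∀ x, 0 ≤ x → 0 < φ x) (hγ : 1 ≤ γ) :
    ContinuousOn (fun t => ∫ u in (0 : ℝ)..1, u ^ (γ - 1) / φ (t * u)) (Ici 0) := by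
  -- the parametric continuity lemma needs an integrand continuous on all of `ℝ × ℝ`
  set ψ : ℝ → ℝ := fun x => φ (max x 0)
  have hψ : Continuous ψ :=
    hφ.comp_continuous (continuous_id.max continuous_const) fun x => le_max_right x 0
  refine (intervalIntegral.continuous_parametric_intervalIntegral_of_continuous'
    (f := fun t u => u ^ (γ - 1) / ψ (t * u))
    (((continuous_rpow_const (sub_nonneg.2 hγ)).comp continuous_snd).div
      (hψ.comp (continuous_fst.mul continuous_snd)) fun _ => (hφ_pos _ (le_max_right _ 0)).ne')
    0 1).continuousOn.congr fun t ht => intervalIntegral.integral_congr fun u hu => ?_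
  rw [uIcc_of_le zero_le_one] at hu
  simp only [ψ, max_eq_left (mul_nonneg ht hu.1)]

theorem integral_rpow_div_comp_mul_pos (hφ : ContinuousOn φ (Ici 0))
    (hφ_pos : ∀ x, 0 ≤ x → 0 < φ x) (hγ : 1 ≤ γ) {t : ℝ} (ht : 0 ≤ t) :
    0 < ∫ u in (0 : ℝ)..1, u ^ (γ - 1) / φ (t * u) := by
  have hmaps : MapsTo (t * ·) (uIcc 0 1) (Ici 0) := fun u hu => by
    rw [uIcc_of_le zero_le_one] at hu
    exact mul_nonneg ht hu.1
  exact intervalIntegral.intervalIntegral_pos_of_pos_on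
    (((continuous_rpow_const (sub_nonneg.2 hγ)).continuousOn.div
      (hφ.comp (continuous_const_mul t).continuousOn hmaps)
      fun u hu => (hφ_pos _ (hmaps hu)).ne').intervalIntegrable)
    (fun _ hu => div_pos (rpow_pos_of_pos hu.1 _) (hφ_pos _ (mul_nonneg ht hu.1.le))) zero_lt_one

theorem exists_pos_eventually_le_mul_integral_rpow_div_comp_mul (hφ : ContinuousOn φ (Ici 0))
    (hφ_pos : ∀ x, 0 ≤ x → 0 < φ x) {β : ℝ} (hrv : IsRegularlyVarying φ β) (hγ : 1 ≤ γ) :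
    ∃ c > 0, ∀ᶠ x in atTop, c ≤ φ x * ∫ u in (0 : ℝ)..1, u ^ (γ - 1) / φ (x * u) := by
  set h : ℝ → ℝ → ℝ := fun x u => u ^ (γ - 1) * (φ (u * x) / φ x)⁻¹
  have hh : ∀ x, ∫ u in Ioc 0 1, h x u = φ x * ∫ u in (0 : ℝ)..1, u ^ (γ - 1) / φ (x * u) := by
    intro x
    rw [← intervalIntegral.integral_of_le zero_le_one, ← intervalIntegral.integral_const_mul]
    congr 1
    funext u
    show u ^ (γ - 1) * (φ (u * x) / φ x)⁻¹ = _
    rw [inv_div, mul_comm u x, mul_div_left_comm]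
  have hmaps : ∀ x : ℝ, 0 ≤ x → MapsTo (· * x) (Icc 0 1) (Ici 0) := fun x hx u hu =>
    mul_nonneg hu.1 hx
  have hcont : ∀ x, 0 ≤ x → ContinuousOn (h x) (Icc 0 1) := fun x hx =>
    (continuous_rpow_const (sub_nonneg.2 hγ)).continuousOn.mul
      (((hφ.comp (continuous_mul_const x).continuousOn (hmaps x hx)).div_const _).inv₀
        fun u hu => div_ne_zero (hφ_pos _ (hmaps x hx hu)).ne' (hφ_pos x hx).ne')
  obtain ⟨c, hc, hev⟩ := exists_pos_eventually_le_integral_of_tendsto' (l := atTop)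
    (μ := volume.restrict (Ioc 0 1)) (a := fun u => u ^ (γ - 1) * (u ^ β)⁻¹) (by simp)
    ((eventually_ge_atTop 0).mono fun x hx =>
      (hcont x hx).integrableOn_Icc.mono_set Ioc_subset_Icc_self)
    ((eventually_ge_atTop 0).mono fun x hx => (ae_restrict_mem measurableSet_Ioc).mono
      fun u hu => mul_nonneg (rpow_nonneg hu.1.le _) (inv_nonneg.2 (div_pos
        (hφ_pos _ (hmaps x hx (Ioc_subset_Icc_self hu))) (hφ_pos x hx)).le))
    ((ae_restrict_mem measurableSet_Ioc).mono fun u hu =>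
      tendsto_const_nhds.mul ((hrv u hu.1).inv₀ (rpow_pos_of_pos hu.1 β).ne'))
    ((ae_restrict_mem measurableSet_Ioc).mono fun u hu =>
      mul_pos (rpow_pos_of_pos hu.1 _) (inv_pos.2 (rpow_pos_of_pos hu.1 β)))
  exact ⟨c, hc, hev.mono fun x hx => hx.trans_eq (hh x)⟩

end Rescaled

theorem eta_regularly_varying_general
    (φ : ℝ → ℝ) (hφcont : ContinuousOn φ (Set.Ici (0 : ℝ)))
    (hφge : ∀ t : ℝ, 0 ≤ t → 1 ≤ φ t)
    (β : ℝ)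
    (hφrv : ∀ l : ℝ, 0 < l →
      Tendsto (fun t : ℝ => φ (l * t) / φ t) atTop (nhds (l ^ β)))
    (γ : ℝ) (hγ : 1 < γ)
    (η : ℝ → ℝ)
    (hη : ∀ t : ℝ, 0 < t → η t = t ^ γ / ∫ s in (0 : ℝ)..t, s ^ (γ - 1) / φ s)
    (hη0 : η 0 = γ * φ 0) :
    -- (a) η is continuous, positive and regularly varying of index min(β,γ)
    (ContinuousOn η (Set.Ici (0 : ℝ)) ∧ (∀ t : ℝ, 0 ≤ t → 0 < η t) ∧
      (∀ l : ℝ, 0 < l →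
        Tendsto (fun t : ℝ => η (l * t) / η t) atTop (nhds (l ^ min β γ)))) ∧
    -- (b) η ≤ C₁ φ
    (∃ C₁ : ℝ, 0 < C₁ ∧ ∀ x : ℝ, 0 ≤ x → η x ≤ C₁ * φ x) := by
  have hφ_pos : ∀ x, 0 ≤ x → 0 < φ x := fun x hx => one_pos.trans_le (hφge x hx)
  set K : ℝ → ℝ := fun t => ∫ u in (0 : ℝ)..1, u ^ (γ - 1) / φ (t * u)
  have hK_pos : ∀ t, 0 ≤ t → 0 < K t := fun t =>
    integral_rpow_div_comp_mul_pos hφcont hφ_pos hγ.le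
  have hηK : ∀ t, 0 ≤ t → η t = (K t)⁻¹ := by
    intro t ht
    rcases ht.eq_or_lt with rfl | ht
    · rw [hη0, show K 0 = (γ * φ 0)⁻¹ from integral_rpow_div_comp_zero_mul φ (by linarith),
        inv_inv]
    · rw [hη t ht, integral_rpow_div_eq_rpow_mul_integral_comp_mul φ γ ht,
        div_mul_cancel_left₀ (rpow_pos_of_pos ht γ).ne']
  have hη_cont : ContinuousOn η (Ici 0) :=
    ((continuousOn_integral_rpow_div_comp_mul hφcont hφ_pos hγ.le).inv₀
      fun t ht => (hK_pos t ht).ne').congr hηK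
  obtain ⟨c, hc, hcK⟩ :=
    exists_pos_eventually_le_mul_integral_rpow_div_comp_mul hφcont hφ_pos hφrv hγ.le
  refine ⟨⟨hη_cont, fun t ht => hηK t ht ▸ inv_pos.2 (hK_pos t ht),
    (isRegularlyVarying_rpow_div_primitive hφcont hφ_pos hφrv hγ.le).congr
      ((eventually_gt_atTop 0).mono fun t ht => (hη t ht).symm)⟩,
    exists_forall_le_mul_of_eventually_le hη_cont hφcont hφ_pos (C := c⁻¹) ?_⟩
  filter_upwards [hcK, eventually_ge_atTop 0] with x hx hx0
  rw [hηK x hx0, inv_mul_eq_div, le_div_iff₀ hc, inv_mul_le_iff₀ (hK_pos x hx0), mul_comm]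
  exact hx

/-- Lemma 3.3 (a),(b): `η(t) = t^γ / ∫₀ᵗ s^{γ-1}/φ(s) ds` is continuous, positive and
regularly varying of index `min(β,γ)`, and `η ≤ C₁ φ`. -/
theorem eta_regularly_varying
    (φ : ℝ → ℝ) (hφcont : ContinuousOn φ (Set.Ici (0 : ℝ)))
    (hφge : ∀ t : ℝ, 0 ≤ t → 1 ≤ φ t)
    (β : ℝ) (hβ : 0 < β)
    (hφrv : ∀ l : ℝ, 0 < l →
      Tendsto (fun t : ℝ => φ (l * t) / φ t) atTop (nhds (l ^ β)))
    (γ : ℝ) (hγ : 1 < γ)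
    (η : ℝ → ℝ)
    (hη : ∀ t : ℝ, 0 < t → η t = t ^ γ / ∫ s in (0 : ℝ)..t, s ^ (γ - 1) / φ s)
    (hη0 : η 0 = γ * φ 0) :
    -- (a) η is continuous, positive and regularly varying of index min(β,γ)
    (ContinuousOn η (Set.Ici (0 : ℝ)) ∧ (∀ t : ℝ, 0 ≤ t → 0 < η t) ∧
      (∀ l : ℝ, 0 < l →
        Tendsto (fun t : ℝ => η (l * t) / η t) atTop (nhds (l ^ min β γ)))) ∧
    -- (b) η ≤ C₁ φ
    (∃ C₁ : ℝ, 0 < C₁ ∧ ∀ x : ℝ, 0 ≤ x → η x ≤ C₁ * φ x) :=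
  eta_regularly_varying_general φ hφcont hφge β hφrv γ hγ η hη hη0
end

section
/- Assume the volume doubling condition: V_μ(x,2r) ≤ C_D V_μ(x,r) for all x ∈ Γ and r > 0, and let γ > 1. Then there exists C₁ > 0 (depending only on C_D and γ) such that ∑_{i=0}^∞ (e^{-u} u^i / i!) · (1/V_μ(x, i^{1/γ})) ≤ C₁ / V_μ(x, u^{1/γ}) for all x ∈ Γ and all u ≥ 0. -/
/-!
Choose `n` with `C_D ≤ 2ⁿ`. Iterated doubling gives polynomial growth,
`V(x, s ρ) ≤ (2 s)ⁿ V(x, ρ)` for `s ≥ 1`; since graph distances are integers,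
`V(x, 1/2) = V(x, 0)`, so also `V(x, (i+1)^{1/γ}) ≤ 2ⁿ V(x, i^{1/γ})` for every `i`. Hence
`V(x, u^{1/γ}) ≤ 4ⁿ (1 + (u/(i+1))^m) V(x, i^{1/γ})` with `m = ⌈n/γ⌉`. The Poisson weights
`q_i = e^{-u} uⁱ / i!` absorb the polynomial factor: `q_i (u/(i+1))^m ≤ m! q_{i+m}` because
`(i+m)! ≤ i! m! (i+1)^m`, so the Poisson average is at most `4ⁿ (1 + m!) / V(x, u^{1/γ})`.
-/

open Real
open scoped Nat

section Doubling

variable {f : ℝ → ℝ} {n : ℕ}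

theorem two_pow_mul_le_of_doubling (hd : ∀ r, 0 < r → f (2 * r) ≤ 2 ^ n * f r) {ρ : ℝ}
    (hρ : 0 < ρ) (k : ℕ) : f (2 ^ k * ρ) ≤ (2 ^ k) ^ n * f ρ := by
  induction k with
  | zero => simp
  | succ k ih =>
    calc f (2 ^ (k + 1) * ρ) = f (2 * (2 ^ k * ρ)) := by ring_nf
      _ ≤ 2 ^ n * f (2 ^ k * ρ) := hd _ (by positivity)
      _ ≤ 2 ^ n * ((2 ^ k) ^ n * f ρ) := by gcongr
      _ = (2 ^ (k + 1)) ^ n * f ρ := by ring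

theorem le_two_mul_pow_mul_of_doubling (hf : Monotone f)
    (hd : ∀ r, 0 < r → f (2 * r) ≤ 2 ^ n * f r) {ρ s : ℝ} (hρ : 0 < ρ) (hfρ : 0 ≤ f ρ)
    (hs : 1 ≤ s) : f (s * ρ) ≤ (2 * s) ^ n * f ρ := by
  obtain ⟨k, hks, hsk⟩ := exists_nat_pow_near hs one_lt_two
  calc f (s * ρ) ≤ f (2 ^ (k + 1) * ρ) := hf (by gcongr)
    _ ≤ (2 ^ (k + 1)) ^ n * f ρ := two_pow_mul_le_of_doubling hd hρ _
    _ ≤ (2 * s) ^ n * f ρ := by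
      gcongr
      rw [pow_succ']
      gcongr

theorem rpow_inv_le_pow_div_mul_of_doubling (hf : Monotone f)
    (hd : ∀ r, 0 < r → f (2 * r) ≤ 2 ^ n * f r) {γ : ℝ} (hγ : 0 < γ) {m : ℕ}
    (hm : n / γ ≤ m) {a b : ℝ} (ha : 0 < a) (hab : a ≤ b) (hfa : 0 ≤ f (a ^ γ⁻¹)) :
    f (b ^ γ⁻¹) ≤ 2 ^ n * (b / a) ^ m * f (a ^ γ⁻¹) := by
  have hba : 1 ≤ b / a := (one_le_div ha).mpr hab
  have hsplit : b ^ γ⁻¹ = (b / a) ^ γ⁻¹ * a ^ γ⁻¹ := by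
    rw [← mul_rpow (by positivity) ha.le, div_mul_cancel₀ b ha.ne']
  have hexp : ((b / a) ^ γ⁻¹) ^ n ≤ (b / a) ^ m := by
    rw [← rpow_natCast, ← rpow_mul (by positivity), ← rpow_natCast]
    exact rpow_le_rpow_of_exponent_le hba (by rwa [inv_mul_eq_div])
  calc f (b ^ γ⁻¹) ≤ (2 * (b / a) ^ γ⁻¹) ^ n * f (a ^ γ⁻¹) := by
        rw [hsplit]
        exact le_two_mul_pow_mul_of_doubling hf hd (by positivity) hfa
          (one_le_rpow hba (inv_nonneg.mpr hγ.le))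
    _ ≤ 2 ^ n * (b / a) ^ m * f (a ^ γ⁻¹) := by
        rw [mul_pow]
        gcongr

theorem natCast_succ_rpow_le_of_doubling (hf : Monotone f)
    (hd : ∀ r, 0 < r → f (2 * r) ≤ 2 ^ n * f r) (hsmall : ∀ r < 1, f r ≤ f 0)
    {γ : ℝ} (hγ : 1 ≤ γ) (i : ℕ) :
    f (((i + 1 : ℕ) : ℝ) ^ γ⁻¹) ≤ 2 ^ n * f ((i : ℝ) ^ γ⁻¹) := by
  have hγ0 : 0 < γ := zero_lt_one.trans_le hγ
  rcases Nat.eq_zero_or_pos i with rfl | hi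
  · calc f (((0 + 1 : ℕ) : ℝ) ^ γ⁻¹) = f (2 * 2⁻¹) := by norm_num
      _ ≤ 2 ^ n * f 2⁻¹ := hd _ (by norm_num)
      _ ≤ 2 ^ n * f (((0 : ℕ) : ℝ) ^ γ⁻¹) := by
        rw [Nat.cast_zero, zero_rpow (inv_ne_zero hγ0.ne')]
        gcongr
        exact hsmall _ (by norm_num)
  · have hi1 : (1 : ℝ) ≤ i := by exact_mod_cast hi
    calc f (((i + 1 : ℕ) : ℝ) ^ γ⁻¹) ≤ f (2 * (i : ℝ) ^ γ⁻¹) := hf <| by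
          calc ((i + 1 : ℕ) : ℝ) ^ γ⁻¹ ≤ (2 * (i : ℝ)) ^ γ⁻¹ := by
                gcongr
                push_cast
                linarith
            _ = 2 ^ γ⁻¹ * (i : ℝ) ^ γ⁻¹ := mul_rpow (by norm_num) (by positivity)
            _ ≤ 2 * (i : ℝ) ^ γ⁻¹ := by
                gcongr
                exact rpow_le_self_of_one_le one_le_two (inv_le_one_of_one_le₀ hγ)
      _ ≤ 2 ^ n * f ((i : ℝ) ^ γ⁻¹) := hd _ (by positivity)

theorem rpow_inv_le_mul_one_add_pow_of_doubling (hf : Monotone f)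
    (hd : ∀ r, 0 < r → f (2 * r) ≤ 2 ^ n * f r) (hsmall : ∀ r < 1, f r ≤ f 0)
    (hf0 : ∀ r, 0 ≤ f r) {γ : ℝ} (hγ : 1 ≤ γ) {m : ℕ} (hm : n / γ ≤ m) {u : ℝ}
    (hu : 0 ≤ u) (i : ℕ) :
    f (u ^ γ⁻¹) ≤ 4 ^ n * (1 + (u / (i + 1)) ^ m) * f ((i : ℝ) ^ γ⁻¹) := by
  have hstep := natCast_succ_rpow_le_of_doubling hf hd hsmall hγ i
  have h4 : (4 : ℝ) ^ n = 2 ^ n * 2 ^ n := by rw [← mul_pow]; norm_num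
  have hpow : 0 ≤ (u / (i + 1)) ^ m := by positivity
  rcases le_total u (i + 1) with hui | hiu
  · calc f (u ^ γ⁻¹) ≤ f (((i + 1 : ℕ) : ℝ) ^ γ⁻¹) := hf <| by
          gcongr
          push_cast
          exact hui
      _ ≤ 2 ^ n * f ((i : ℝ) ^ γ⁻¹) := hstep
      _ ≤ 4 ^ n * (1 + (u / (i + 1)) ^ m) * f ((i : ℝ) ^ γ⁻¹) := by
        refine mul_le_mul_of_nonneg_right ?_ (hf0 _)
        rw [h4]
        nlinarith [one_le_pow₀ (M₀ := ℝ) (a := 2) one_le_two (n := n)]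
  · calc f (u ^ γ⁻¹) ≤ 2 ^ n * (u / (i + 1)) ^ m * f (((i + 1 : ℕ) : ℝ) ^ γ⁻¹) := by
          have := rpow_inv_le_pow_div_mul_of_doubling hf hd (zero_lt_one.trans_le hγ) hm
            (a := ((i + 1 : ℕ) : ℝ)) (by positivity) (by push_cast; exact hiu) (hf0 _)
          push_cast at this ⊢
          exact this
      _ ≤ 2 ^ n * (u / (i + 1)) ^ m * (2 ^ n * f ((i : ℝ) ^ γ⁻¹)) := by gcongr
      _ ≤ 4 ^ n * (1 + (u / (i + 1)) ^ m) * f ((i : ℝ) ^ γ⁻¹) := by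
        rw [h4]
        nlinarith [hf0 ((i : ℝ) ^ γ⁻¹), pow_nonneg (zero_le_two (α := ℝ)) n]

end Doubling

namespace SimpleGraph

variable {V : Type*} {G : SimpleGraph V}

theorem Connected.finite_setOf_dist_le (hconn : G.Connected)
    (hfin : ∀ x, {y | G.Adj x y}.Finite) (x : V) (n : ℕ) :
    {y | G.dist x y ≤ n}.Finite := by
  induction n with
  | zero => simp [hconn.dist_eq_zero_iff]
  | succ n ih =>
    refine (ih.union (ih.biUnion fun z _ => hfin z)).subset fun y hy => ?_
    obtain ⟨p, hp⟩ := hconn.exists_walk_length_eq_dist y x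
    cases p with
    | nil => exact Or.inl (by simp)
    | @cons _ z _ hadj q =>
      have hq : G.dist x z ≤ n := by
        have hy : G.dist x y ≤ n + 1 := hy
        rw [Walk.length_cons, dist_comm] at hp
        rw [dist_comm]
        have := dist_le q
        omega
      exact Or.inr (Set.mem_biUnion hq hadj.symm)

theorem Connected.finite_cast_dist_le (hconn : G.Connected)
    (hfin : ∀ x, {y | G.Adj x y}.Finite) (x : V) (r : ℝ) :
    Finite {y // (G.dist x y : ℝ) ≤ r} :=
  Set.Finite.to_subtype (s := {y | (G.dist x y : ℝ) ≤ r}) <|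
    (hconn.finite_setOf_dist_le hfin x ⌈r⌉₊).subset fun _ hy =>
      Nat.cast_le.mp (hy.trans (Nat.le_ceil r))

noncomputable def ballVolume (G : SimpleGraph V) (μ : V → ℝ) (x : V) (r : ℝ) : ℝ :=
  ∑' y : {y // (G.dist x y : ℝ) ≤ r}, μ y

variable {μ : V → ℝ} {x : V} {r s : ℝ}

theorem ballVolume_nonneg (hμ : ∀ y, 0 ≤ μ y) : 0 ≤ G.ballVolume μ x r :=
  tsum_nonneg fun y => hμ y

theorem ballVolume_le_of_forall (hconn : G.Connected) (hfin : ∀ x, {y | G.Adj x y}.Finite)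
    (hμ : ∀ y, 0 ≤ μ y) (h : ∀ y, (G.dist x y : ℝ) ≤ r → (G.dist x y : ℝ) ≤ s) :
    G.ballVolume μ x r ≤ G.ballVolume μ x s := by
  have := hconn.finite_cast_dist_le hfin x s
  exact tsum_comp_le_tsum_of_inj (f := fun y : {y // (G.dist x y : ℝ) ≤ s} => μ y)
    Summable.of_finite (fun y => hμ y)
    (i := fun y : {y // (G.dist x y : ℝ) ≤ r} => ⟨y, h y y.2⟩)
    fun _ _ hab => Subtype.ext (by simpa using hab)

theorem monotone_ballVolume (hconn : G.Connected) (hfin : ∀ x, {y | G.Adj x y}.Finite)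
    (hμ : ∀ y, 0 ≤ μ y) : Monotone (G.ballVolume μ x) := fun _ _ hrs =>
  ballVolume_le_of_forall hconn hfin hμ fun _ hy => hy.trans hrs

theorem ballVolume_le_ballVolume_zero (hconn : G.Connected)
    (hfin : ∀ x, {y | G.Adj x y}.Finite) (hμ : ∀ y, 0 ≤ μ y) (hr : r < 1) :
    G.ballVolume μ x r ≤ G.ballVolume μ x 0 :=
  ballVolume_le_of_forall hconn hfin hμ fun y hy => by
    have : G.dist x y < 1 := by exact_mod_cast hy.trans_lt hr
    simp [Nat.lt_one_iff.mp this]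

theorem ballVolume_pos (hconn : G.Connected) (hfin : ∀ x, {y | G.Adj x y}.Finite)
    (hμ : ∀ y, 0 < μ y) (hr : 0 ≤ r) : 0 < G.ballVolume μ x r := by
  have := hconn.finite_cast_dist_le hfin x r
  exact (hμ x).trans_le <| Summable.le_tsum (f := fun y : {y // (G.dist x y : ℝ) ≤ r} => μ y)
    Summable.of_finite ⟨x, by simpa using hr⟩ fun y _ => (hμ y).le

theorem inv_ballVolume_natCast_rpow_le {n : ℕ} (hconn : G.Connected)
    (hfin : ∀ x, {y | G.Adj x y}.Finite) (hμ : ∀ y, 0 < μ y)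
    (hd : ∀ r, 0 < r → G.ballVolume μ x (2 * r) ≤ 2 ^ n * G.ballVolume μ x r)
    {γ : ℝ} (hγ : 1 ≤ γ) {m : ℕ} (hm : n / γ ≤ m) {u : ℝ} (hu : 0 ≤ u) (i : ℕ) :
    (G.ballVolume μ x ((i : ℝ) ^ γ⁻¹))⁻¹ ≤
      4 ^ n * (1 + (u / (i + 1)) ^ m) / G.ballVolume μ x (u ^ γ⁻¹) := by
  have hγ0 : 0 < γ := zero_lt_one.trans_le hγ
  have hμ' : ∀ y, 0 ≤ μ y := fun y => (hμ y).le
  rw [inv_eq_one_div, div_le_div_iff₀ (ballVolume_pos hconn hfin hμ (by positivity))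
    (ballVolume_pos hconn hfin hμ (by positivity)), one_mul]
  exact rpow_inv_le_mul_one_add_pow_of_doubling (monotone_ballVolume hconn hfin hμ') hd
    (fun _ => ballVolume_le_ballVolume_zero hconn hfin hμ') (fun _ => ballVolume_nonneg hμ')
    hγ hm hu i

end SimpleGraph

section Poisson

noncomputable def poissonWeight (u : ℝ) (i : ℕ) : ℝ := exp (-u) * u ^ i / i !

variable {u : ℝ}

theorem poissonWeight_nonneg (hu : 0 ≤ u) (i : ℕ) : 0 ≤ poissonWeight u i := by
  unfold poissonWeight
  positivity

theorem hasSum_poissonWeight (hu : 0 ≤ u) : HasSum (poissonWeight u) 1 :=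
  ProbabilityTheory.hasSum_one_poissonMeasure ⟨u, hu⟩

theorem poissonWeight_mul_div_pow_le (hu : 0 ≤ u) (i m : ℕ) :
    poissonWeight u i * (u / (i + 1)) ^ m ≤ m ! * poissonWeight u (i + m) := by
  have hfact : (i + m)! ≤ m ! * (i ! * (i + 1) ^ m) := by
    rw [← Nat.factorial_mul_ascFactorial, mul_left_comm]
    exact Nat.mul_le_mul_left _ (Nat.ascFactorial_le_factorial_mul_pow _ _)
  calc poissonWeight u i * (u / (i + 1)) ^ m
      = m ! * (exp (-u) * u ^ (i + m)) / (m ! * (i ! * (i + 1) ^ m)) := by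
        unfold poissonWeight
        rw [div_pow, pow_add]
        field_simp
    _ ≤ m ! * (exp (-u) * u ^ (i + m)) / (i + m)! :=
        div_le_div_of_nonneg_left (by positivity) (by positivity) (by exact_mod_cast hfact)
    _ = m ! * poissonWeight u (i + m) := by
        unfold poissonWeight
        ring

theorem tsum_le_of_le_poissonWeight_mul (hu : 0 ≤ u) {m : ℕ} {c : ℝ} (hc : 0 ≤ c)
    {a : ℕ → ℝ} (ha0 : ∀ i, 0 ≤ a i)
    (ha : ∀ i, a i ≤ c * (poissonWeight u i * (1 + (u / (i + 1)) ^ m))) :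
    ∑' i, a i ≤ c * (1 + m !) := by
  have hq := hasSum_poissonWeight hu
  have hshift : Summable fun i => poissonWeight u (i + m) :=
    (summable_nat_add_iff m).mpr hq.summable
  have htail : ∑' i, poissonWeight u (i + m) ≤ 1 :=
    hq.tsum_eq ▸ tsum_comp_le_tsum_of_inj hq.summable (poissonWeight_nonneg hu)
      (add_left_injective m)
  have hg : Summable fun i => c * (poissonWeight u i + m ! * poissonWeight u (i + m)) :=
    (hq.summable.add (hshift.mul_left _)).mul_left c
  have hle : ∀ i, a i ≤ c * (poissonWeight u i + m ! * poissonWeight u (i + m)) := fun i =>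
    (ha i).trans <| mul_le_mul_of_nonneg_left (by
      linarith [poissonWeight_mul_div_pow_le hu i m]) hc
  calc ∑' i, a i ≤ ∑' i, c * (poissonWeight u i + m ! * poissonWeight u (i + m)) :=
        (Summable.of_nonneg_of_le ha0 hle hg).tsum_le_tsum hle hg
    _ = c * (1 + m ! * ∑' i, poissonWeight u (i + m)) := by
        rw [tsum_mul_left, hq.summable.tsum_add (hshift.mul_left _), tsum_mul_left,
          hq.tsum_eq]
    _ ≤ c * (1 + m !) := by
        gcongr
        exact mul_le_of_le_one_right (by positivity) htail

end Poisson

theorem poisson_volume_bound_general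
    {Γ : Type*}
    (G : SimpleGraph Γ) (hconn : G.Connected)
    (hlocfin : ∀ x : Γ, {y : Γ | G.Adj x y}.Finite)
    -- vertex measure, positive at every point
    (μ : Γ → ℝ)
    (hμpos : ∀ x, 0 < μ x)
    -- volume of balls
    (Vb : Γ → ℝ → ℝ)
    (hVb : ∀ x r, Vb x r = ∑' y : {y : Γ // (G.dist x y : ℝ) ≤ r}, μ (y : Γ))
    -- volume doubling
    (C_D : ℝ)
    (hdoub : ∀ (x : Γ) (r : ℝ), 0 < r → Vb x (2 * r) ≤ C_D * Vb x r)
    (γ : ℝ) (hγ : 1 < γ) :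
    ∃ C₁ : ℝ, 0 < C₁ ∧ ∀ (x : Γ) (u : ℝ), 0 ≤ u →
      (∑' i : ℕ, Real.exp (-u) * u ^ i / (Nat.factorial i : ℝ) *
          (1 / Vb x ((i : ℝ) ^ (1 / γ)))) ≤
        C₁ / Vb x (u ^ (1 / γ)) := by
  obtain rfl : Vb = G.ballVolume μ := funext₂ hVb
  obtain ⟨n, hn⟩ := pow_unbounded_of_one_lt C_D one_lt_two
  set m := ⌈n / γ⌉₊
  refine ⟨4 ^ n * (1 + m !), by positivity, fun x u hu => ?_⟩
  have hμ : ∀ y, 0 ≤ μ y := fun y => (hμpos y).le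
  have hd : ∀ r, 0 < r → G.ballVolume μ x (2 * r) ≤ 2 ^ n * G.ballVolume μ x r := fun r hr =>
    (hdoub x r hr).trans (by gcongr; exact G.ballVolume_nonneg hμ)
  simp only [one_div]
  calc _ ≤ 4 ^ n / G.ballVolume μ x (u ^ γ⁻¹) * (1 + m !) :=
        tsum_le_of_le_poissonWeight_mul hu
          (div_nonneg (by positivity) (G.ballVolume_nonneg hμ))
          (fun i => mul_nonneg (poissonWeight_nonneg hu i)
            (inv_nonneg.mpr (G.ballVolume_nonneg hμ)))
          fun i => (mul_le_mul_of_nonneg_left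
            (G.inv_ballVolume_natCast_rpow_le hconn hlocfin hμpos hd hγ.le (Nat.le_ceil _) hu i)
            (poissonWeight_nonneg hu i)).trans_eq (by ring)
    _ = 4 ^ n * (1 + m !) / G.ballVolume μ x (u ^ γ⁻¹) := by ring

/-- Lemma 5.2: under volume doubling, the Poisson average of `1/V_μ(x, i^{1/γ})`
is bounded by `C₁ / V_μ(x, u^{1/γ})`. -/
theorem poisson_volume_bound
    {Γ : Type*} [Countable Γ] [Infinite Γ]
    (G : SimpleGraph Γ) (hconn : G.Connected)
    (hlocfin : ∀ x : Γ, {y : Γ | G.Adj x y}.Finite)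
    -- edge weights
    (w : Γ → Γ → ℝ) (hw_symm : ∀ x y, w x y = w y x)
    (hw_nonneg : ∀ x y, 0 ≤ w x y)
    (hw_pos : ∀ x y, 0 < w x y ↔ G.Adj x y)
    -- vertex measure, positive at every point
    (μ : Γ → ℝ) (hμ : ∀ x, μ x = ∑' y : Γ, w x y)
    (hμpos : ∀ x, 0 < μ x)
    -- volume of balls
    (Vb : Γ → ℝ → ℝ)
    (hVb : ∀ x r, Vb x r = ∑' y : {y : Γ // (G.dist x y : ℝ) ≤ r}, μ (y : Γ))
    -- volume doubling
    (C_D : ℝ) (hC_D : 0 < C_D)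
    (hdoub : ∀ (x : Γ) (r : ℝ), 0 < r → Vb x (2 * r) ≤ C_D * Vb x r)
    (γ : ℝ) (hγ : 1 < γ) :
    ∃ C₁ : ℝ, 0 < C₁ ∧ ∀ (x : Γ) (u : ℝ), 0 ≤ u →
      (∑' i : ℕ, Real.exp (-u) * u ^ i / (Nat.factorial i : ℝ) *
          (1 / Vb x ((i : ℝ) ^ (1 / γ)))) ≤
        C₁ / Vb x (u ^ (1 / γ)) :=
  poisson_volume_bound_general G hconn hlocfin μ hμpos Vb hVb C_D hdoub γ hγ
end

section
/- Let β₀ ∈ (0,1) and C₁ > 0. There exists C₂ > 0 (depending only on β₀ and C₁) such that for every t > 0, every integer i ≥ 1, and every measurable f : (0,∞) → [0,∞) with f(u) ≤ C₁ t u^{-1-β₀} for all u > 0, one has ∫₀^∞ f(u) e^{-u} u^i / i! du ≤ C₂ t / i^{1+β₀}. -/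
/-!
Bounding `f` by `C₁ t u^{-1-β₀}` turns the integral into `C₁ t Γ(i - β₀) / i!`. Log-convexity of
`Γ` between `i - 1` and `i`, combined with `Γ(i - 1) = Γ(i) / (i - 1)`, gives
`Γ(i - β₀) ≤ Γ(i) (i - 1)^{-β₀}`, hence `Γ(i - β₀) / i! ≤ 2^{β₀} / i^{1+β₀}` for `i ≥ 2`;
the case `i = 1` only costs the constant `Γ(1 - β₀)`.
-/

open MeasureTheory Set
open scoped Nat

namespace Real

theorem Gamma_sub_le_Gamma_mul_rpow {β x : ℝ} (hβ₀ : 0 < β) (hβ₁ : β < 1) (hx : 1 < x) :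
    Gamma (x - β) ≤ Gamma x * (x - 1) ^ (-β) := by
  have hx₁ : 0 < x - 1 := by linarith
  have hx₀ : 0 < x := by linarith
  have hΓ : 0 < Gamma x := Gamma_pos_of_pos hx₀
  have hrec : Gamma (x - 1) = Gamma x / (x - 1) := by
    rw [eq_div_iff hx₁.ne', mul_comm, ← Gamma_add_one hx₁.ne', sub_add_cancel]
  calc Gamma (x - β) = Gamma (β * (x - 1) + (1 - β) * x) := by ring_nf
    _ ≤ Gamma (x - 1) ^ β * Gamma x ^ (1 - β) :=
      Gamma_mul_add_mul_le_rpow_Gamma_mul_rpow_Gamma hx₁ hx₀ hβ₀ (by linarith) (by ring)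
    _ = Gamma x * (x - 1) ^ (-β) := by
      rw [hrec, div_rpow hΓ.le hx₁.le, rpow_neg hx₁.le, div_mul_eq_mul_div, ← rpow_add hΓ,
        add_sub_cancel, rpow_one, div_eq_mul_inv]

theorem Gamma_sub_mul_rpow_le {β x : ℝ} (hβ₀ : 0 < β) (hβ₁ : β < 1) (hx : 2 ≤ x) :
    Gamma (x - β) * x ^ (1 + β) ≤ 2 ^ β * Gamma (x + 1) := by
  have hx₁ : 0 < x - 1 := by linarith
  have hx₀ : 0 < x := by linarith
  have hratio : x ^ β * (x - 1) ^ (-β) ≤ 2 ^ β := by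
    rw [rpow_neg hx₁.le, ← div_eq_mul_inv, ← div_rpow hx₀.le hx₁.le]
    exact rpow_le_rpow (by positivity) ((div_le_iff₀ hx₁).2 (by linarith)) hβ₀.le
  calc Gamma (x - β) * x ^ (1 + β)
      ≤ Gamma x * (x - 1) ^ (-β) * (x * x ^ β) := by
        rw [rpow_add hx₀, rpow_one]
        gcongr
        exact Gamma_sub_le_Gamma_mul_rpow hβ₀ hβ₁ (by linarith)
    _ = x ^ β * (x - 1) ^ (-β) * Gamma (x + 1) := by
        rw [Gamma_add_one hx₀.ne']
        ring
    _ ≤ 2 ^ β * Gamma (x + 1) := by gcongr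

theorem Gamma_natCast_sub_div_factorial_le {β : ℝ} (hβ₀ : 0 < β) (hβ₁ : β < 1) {i : ℕ}
    (hi : 1 ≤ i) :
    Gamma (i - β) / i ! ≤ (2 ^ β + Gamma (1 - β)) / (i : ℝ) ^ (1 + β) := by
  have h2 : 0 < (2 : ℝ) ^ β := by positivity
  have hΓ : 0 < Gamma (1 - β) := Gamma_pos_of_pos (by linarith)
  rw [div_le_div_iff₀ (by positivity) (by positivity)]
  obtain rfl | hi₂ := hi.eq_or_lt
  · simpa using h2.le
  · have key := Gamma_sub_mul_rpow_le hβ₀ hβ₁ (x := i) (by exact_mod_cast hi₂)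
    rw [Gamma_nat_eq_factorial] at key
    exact key.trans (by gcongr; linarith)

end Real

theorem setLIntegral_ofReal_mul_exp_neg_le {f : ℝ → ℝ} {c s : ℝ} (hc : 0 ≤ c) (hs : 0 < s)
    (hf : ∀ u, 0 < u → f u ≤ c * u ^ (s - 1)) :
    ∫⁻ u in Ioi (0 : ℝ), ENNReal.ofReal (f u * Real.exp (-u)) ≤
      ENNReal.ofReal (c * Real.Gamma s) := by
  have hnonneg : 0 ≤ᵐ[volume.restrict (Ioi (0 : ℝ))] fun u => Real.exp (-u) * u ^ (s - 1) := by
    filter_upwards [self_mem_ae_restrict measurableSet_Ioi] with u hu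
    have : 0 < u := hu
    positivity
  calc ∫⁻ u in Ioi (0 : ℝ), ENNReal.ofReal (f u * Real.exp (-u))
      ≤ ∫⁻ u in Ioi (0 : ℝ), ENNReal.ofReal c * ENNReal.ofReal (Real.exp (-u) * u ^ (s - 1)) := by
        refine setLIntegral_mono' measurableSet_Ioi fun u hu => ?_
        rw [← ENNReal.ofReal_mul hc]
        refine ENNReal.ofReal_le_ofReal ?_
        calc f u * Real.exp (-u) ≤ c * u ^ (s - 1) * Real.exp (-u) := by
              gcongr
              exact hf u hu
          _ = c * (Real.exp (-u) * u ^ (s - 1)) := by ring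
    _ = ENNReal.ofReal (c * Real.Gamma s) := by
        rw [lintegral_const_mul' _ _ ENNReal.ofReal_ne_top,
          ← ofReal_integral_eq_lintegral_ofReal (Real.GammaIntegral_convergent hs) hnonneg,
          ← Real.Gamma_eq_integral hs, ENNReal.ofReal_mul hc]

/-- Estimate (5.9): upper bound `A_{β₀}(t,i) ≤ C₂ t / i^{1+β₀}` for the Poisson–Gamma
integral of a density bounded by `C₁ t u^{-1-β₀}`. -/
theorem A_upper_estimate
    (β₀ : ℝ) (hβ₀ : 0 < β₀) (hβ₀1 : β₀ < 1) (C₁ : ℝ) (hC₁ : 0 < C₁) :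
    ∃ C₂ : ℝ, 0 < C₂ ∧ ∀ (t : ℝ), 0 < t → ∀ (i : ℕ), 1 ≤ i →
      ∀ f : ℝ → ℝ, Measurable f → (∀ u : ℝ, 0 < u → 0 ≤ f u) →
        (∀ u : ℝ, 0 < u → f u ≤ C₁ * t * u ^ (-(1 + β₀))) →
        (∫⁻ u in Set.Ioi (0 : ℝ),
            ENNReal.ofReal (f u * (Real.exp (-u) * u ^ i / (Nat.factorial i : ℝ)))) ≤
          ENNReal.ofReal (C₂ * t / (i : ℝ) ^ (1 + β₀)) := by
  have hK : 0 < 2 ^ β₀ + Real.Gamma (1 - β₀) :=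
    add_pos (by positivity) (Real.Gamma_pos_of_pos (by linarith))
  refine ⟨C₁ * (2 ^ β₀ + Real.Gamma (1 - β₀)), by positivity, fun t ht i hi f _ _ hf => ?_⟩
  have hi₁ : (1 : ℝ) ≤ i := by exact_mod_cast hi
  have hf' : ∀ u, 0 < u → f u * (u ^ i / i !) ≤ C₁ * t / i ! * u ^ ((i - β₀) - 1) := by
    intro u hu
    have hpow : u ^ (-(1 + β₀)) * u ^ i = u ^ ((i - β₀) - 1) := by
      rw [← Real.rpow_natCast, ← Real.rpow_add hu]
      ring_nf
    calc f u * (u ^ i / i !) ≤ C₁ * t * u ^ (-(1 + β₀)) * (u ^ i / i !) := by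
          gcongr
          exact hf u hu
      _ = C₁ * t / i ! * (u ^ (-(1 + β₀)) * u ^ i) := by ring
      _ = C₁ * t / i ! * u ^ ((i - β₀) - 1) := by rw [hpow]
  calc ∫⁻ u in Ioi (0 : ℝ), ENNReal.ofReal (f u * (Real.exp (-u) * u ^ i / i !))
      = ∫⁻ u in Ioi (0 : ℝ), ENNReal.ofReal (f u * (u ^ i / i !) * Real.exp (-u)) := by
        exact lintegral_congr fun u => congrArg ENNReal.ofReal (by ring)
    _ ≤ ENNReal.ofReal (C₁ * t / i ! * Real.Gamma (i - β₀)) :=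
        setLIntegral_ofReal_mul_exp_neg_le (by positivity) (by linarith) hf'
    _ ≤ ENNReal.ofReal (C₁ * (2 ^ β₀ + Real.Gamma (1 - β₀)) * t / (i : ℝ) ^ (1 + β₀)) := by
        refine ENNReal.ofReal_le_ofReal ?_
        have hΓ := Real.Gamma_natCast_sub_div_factorial_le hβ₀ hβ₀1 hi
        calc C₁ * t / i ! * Real.Gamma (i - β₀) = C₁ * t * (Real.Gamma (i - β₀) / i !) := by ring
          _ ≤ C₁ * t * ((2 ^ β₀ + Real.Gamma (1 - β₀)) / (i : ℝ) ^ (1 + β₀)) := by gcongr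
          _ = _ := by ring
end

section
/- Let β₀ ∈ (0,1) and c₁ > 0. There exists c₂ > 0 (depending only on β₀ and c₁) such that for every t > 0, every integer i ≥ max(6, 4 t^{1/β₀}), and every measurable f : (0,∞) → [0,∞) with f(u) ≥ c₁ t u^{-1-β₀} for all u > t^{1/β₀}, one has ∫₀^∞ f(u) e^{-u} u^i / i! du ≥ c₂ t / i^{1+β₀}. -/
/-!
On the window `(i, i + √i]`, which lies beyond `t^{1/β₀}` because `i ≥ 4 t^{1/β₀}`, the
density is at least `c₁ t (2i)^{-1-β₀} ≥ c₁ t i^{-1-β₀} / 4`, while the Gamma weight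
`e^{-u} u^i / i!` loses at most a factor `e` against its value at the mode `u = i`, which
Stirling bounds below by `1 / (e √i)`. Multiplying by the length `√i` of the window gives the
estimate with `c₂ = c₁ e^{-2} / 4`.
-/

open MeasureTheory Real

theorem factorial_le_exp_one_mul_sqrt_mul_pow {n : ℕ} (hn : n ≠ 0) :
    (n.factorial : ℝ) ≤ exp 1 * √n * (n / exp 1) ^ n := by
  obtain ⟨m, rfl⟩ : ∃ m, n = m + 1 := Nat.exists_eq_add_one.2 (Nat.pos_of_ne_zero hn)
  have h : Stirling.stirlingSeq (m + 1) ≤ Stirling.stirlingSeq 1 :=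
    Stirling.stirlingSeq'_antitone (Nat.zero_le m)
  rw [Stirling.stirlingSeq_one, Stirling.stirlingSeq,
    div_le_div_iff₀ (by positivity) (by positivity), sqrt_mul zero_le_two] at h
  exact le_of_mul_le_mul_right (h.trans_eq (by ring)) (by positivity)

theorem exp_neg_one_mul_exp_neg_mul_pow_le {n : ℕ} {u : ℝ} (hn : n ≠ 0) (hnu : n ≤ u)
    (hsq : (u - n) ^ 2 ≤ n) :
    exp (-1) * (exp (-n) * (n : ℝ) ^ n) ≤ exp (-u) * u ^ n := by
  have hn0 : (0 : ℝ) < n := by positivity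
  have hu : 0 < u := hn0.trans_le hnu
  -- `log x ≥ 1 - 1/x` at `x = u/n`, then `(u - n)^2 ≤ n ≤ u`
  have hlog : u - n - 1 ≤ n * log (u / n) := by
    calc u - n - 1 ≤ n * (1 - (u / n)⁻¹) := by
          rw [inv_div, mul_one_sub, mul_div_assoc', le_sub_iff_add_le, ← le_sub_iff_add_le',
            div_le_iff₀ hu]
          nlinarith
      _ ≤ n * log (u / n) := by gcongr; exact one_sub_inv_le_log_of_pos (by positivity)
  have hpow : exp (u - n - 1) ≤ (u / n) ^ n := by
    rw [← exp_log (by positivity : 0 < u / n), ← exp_nat_mul]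
    exact exp_le_exp.2 hlog
  calc exp (-1) * (exp (-n) * (n : ℝ) ^ n) = exp (-u) * (exp (u - n - 1) * n ^ n) := by
        rw [← mul_assoc, ← mul_assoc, ← exp_add, ← exp_add]; ring_nf
    _ ≤ exp (-u) * ((u / n) ^ n * n ^ n) := by gcongr
    _ = exp (-u) * u ^ n := by rw [← mul_pow, div_mul_cancel₀ _ hn0.ne']

theorem exp_neg_two_div_sqrt_le_exp_neg_mul_pow_div_factorial {n : ℕ} {u : ℝ} (hn : n ≠ 0)
    (hnu : n ≤ u) (hu : u ≤ n + √n) :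
    exp (-2) / √n ≤ exp (-u) * u ^ n / n.factorial := by
  have hsq : (u - n) ^ 2 ≤ n := by
    calc (u - n) ^ 2 ≤ √(n : ℝ) ^ 2 := by gcongr; linarith
      _ = (n : ℝ) := sq_sqrt n.cast_nonneg
  calc exp (-2) / √n = exp (-1) * exp (-1) * n.factorial / (√n * n.factorial) := by
        rw [← exp_add]; field_simp; norm_num
    _ ≤ exp (-1) * exp (-1) * (exp 1 * √n * (n / exp 1) ^ n) / (√n * n.factorial) := by
        gcongr; exact factorial_le_exp_one_mul_sqrt_mul_pow hn
    _ = √n * (exp (-1) * (exp (-n) * (n : ℝ) ^ n)) / (√n * n.factorial) := by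
        rw [div_pow, ← exp_nat_mul, mul_one, exp_neg, exp_neg]; field_simp
    _ ≤ √n * (exp (-u) * u ^ n) / (√n * n.factorial) := by
        gcongr √n * ?_ / _; exact exp_neg_one_mul_exp_neg_mul_pow_le hn hnu hsq
    _ = exp (-u) * u ^ n / n.factorial := by
        rw [mul_div_mul_left _ _ (by positivity)]

theorem div_four_le_rpow_neg {p x u : ℝ} (hp0 : 0 ≤ p) (hp2 : p ≤ 2) (hx : 0 < x)
    (hxu : x ≤ u) (hu : u ≤ 2 * x) :
    x ^ (-p) / 4 ≤ u ^ (-p) := by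
  calc x ^ (-p) / 4 ≤ 2 ^ (-p) * x ^ (-p) := by
        rw [div_eq_inv_mul]
        gcongr
        calc (4 : ℝ)⁻¹ = 2 ^ (-2 : ℝ) := by norm_num
          _ ≤ 2 ^ (-p) := by gcongr; norm_num [hp2]
    _ = (2 * x) ^ (-p) := (mul_rpow zero_le_two hx.le).symm
    _ ≤ u ^ (-p) := rpow_le_rpow_of_nonpos (hx.trans_le hxu) hu (neg_nonpos.2 hp0)

theorem ofReal_mul_measure_le_setLIntegral_ofReal {α : Type*} [MeasurableSpace α]
    {μ : Measure α} {s : Set α} {g : α → ℝ} {L : ℝ} (hs : MeasurableSet s) (hg : ∀ u ∈ s, L ≤ g u) :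
    ENNReal.ofReal L * μ s ≤ ∫⁻ u in s, ENNReal.ofReal (g u) ∂μ := by
  rw [← setLIntegral_const]
  exact setLIntegral_mono' hs fun u hu => ENNReal.ofReal_le_ofReal (hg u hu)

/-- Estimate (5.12): lower bound `A_{β₀}(t,i) ≥ c₂ t / i^{1+β₀}` for
`i ≥ max(6, 4 t^{1/β₀})`, for a density bounded below by `c₁ t u^{-1-β₀}` on
`u > t^{1/β₀}`. -/
theorem A_lower_estimate
    (β₀ : ℝ) (hβ₀ : 0 < β₀) (hβ₀1 : β₀ < 1) (c₁ : ℝ) (hc₁ : 0 < c₁) :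
    ∃ c₂ : ℝ, 0 < c₂ ∧ ∀ (t : ℝ), 0 < t → ∀ (i : ℕ),
      (6 : ℝ) ≤ i → 4 * t ^ (1 / β₀) ≤ i →
      ∀ f : ℝ → ℝ, Measurable f → (∀ u : ℝ, 0 < u → 0 ≤ f u) →
        (∀ u : ℝ, t ^ (1 / β₀) < u → c₁ * t * u ^ (-(1 + β₀)) ≤ f u) →
        ENNReal.ofReal (c₂ * t / (i : ℝ) ^ (1 + β₀)) ≤
          (∫⁻ u in Set.Ioi (0 : ℝ),
            ENNReal.ofReal (f u * (Real.exp (-u) * u ^ i / (Nat.factorial i : ℝ)))) := by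
  refine ⟨c₁ * exp (-2) / 4, by positivity, fun t ht i hi6 hi4 f _ _ hf => ?_⟩
  have hi : (0 : ℝ) < i := by linarith
  have hsqrt : √(i : ℝ) ≤ i := sqrt_le_self_iff.2 (Or.inr (by linarith))
  set L := c₁ * t * ((i : ℝ) ^ (-(1 + β₀)) / 4) * (exp (-2) / √i) with hL_def
  have hL : ∀ u ∈ Set.Ioc (i : ℝ) (i + √i),
      L ≤ f u * (exp (-u) * u ^ i / (Nat.factorial i : ℝ)) := by
    rintro u ⟨hiu, hui⟩
    have hu0 : 0 < u := hi.trans hiu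
    have hu : t ^ (1 / β₀) < u := by linarith [rpow_pos_of_pos ht (1 / β₀)]
    calc L ≤ c₁ * t * u ^ (-(1 + β₀)) * (exp (-u) * u ^ i / (Nat.factorial i : ℝ)) := by
          rw [hL_def]
          refine mul_le_mul (mul_le_mul_of_nonneg_left ?_ (by positivity)) ?_ (by positivity)
            (by positivity)
          · exact div_four_le_rpow_neg (by linarith) (by linarith) hi hiu.le (by linarith)
          · exact exp_neg_two_div_sqrt_le_exp_neg_mul_pow_div_factorial
              (Nat.cast_pos.1 hi).ne' hiu.le hui
      _ ≤ f u * (exp (-u) * u ^ i / (Nat.factorial i : ℝ)) :=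
          mul_le_mul_of_nonneg_right (hf u hu) (by positivity)
  calc ENNReal.ofReal (c₁ * exp (-2) / 4 * t / (i : ℝ) ^ (1 + β₀))
      = ENNReal.ofReal L * volume (Set.Ioc (i : ℝ) (i + √i)) := by
        rw [Real.volume_Ioc, add_sub_cancel_left, ← ENNReal.ofReal_mul (by positivity), hL_def,
          rpow_neg hi.le]
        congr 1
        field_simp
    _ ≤ ∫⁻ u in Set.Ioc (i : ℝ) (i + √i),
          ENNReal.ofReal (f u * (exp (-u) * u ^ i / (Nat.factorial i : ℝ))) :=
        ofReal_mul_measure_le_setLIntegral_ofReal measurableSet_Ioc hL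
    _ ≤ _ := lintegral_mono_set fun u hu => hi.trans hu.1
end

section
/- Let K be a Markov operator symmetric with respect to μ on a countable weighted graph (Γ,μ), with nonnegative kernels k_n(x,y) of K^n relative to μ. For a nonempty finite set A ⊆ Γ, let λ(A) = sup{ ‖Kf‖₂²/‖f‖₂² : f ∈ ℓ²(Γ,μ), f ≠ 0, supp(f) ⊆ A }. Then for every nonempty finite A ⊆ Γ and every n ∈ ℕ, sup_{x,y∈Γ} k_{2n}(x,y) ≥ λ(A)^n / μ(A). -/
/-!
For `f` supported in `A` put `aⱼ = ‖Kʲ f‖²`. Since `K` is self-adjoint,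
`aⱼ₊₁ = ⟨Kʲ f, Kʲ⁺² f⟩`, so Cauchy–Schwarz makes `(aⱼ)` log-convex and hence
`(a₁ / a₀)ⁿ ≤ aₙ / a₀`. On the other hand, by Cauchy–Schwarz on `A`,
`aₙ = ⟨f, K²ⁿ f⟩ = ∑_{u,v ∈ A} k₂ₙ(u,v) f(u) f(v) μ(u) μ(v) ≤ sup k₂ₙ · (∑_A |f| μ)²`
`≤ sup k₂ₙ · μ(A) · a₀`. As `a₁ / a₀` is the Rayleigh quotient of `f`, taking the
supremum over `f` gives the claim.

The kernels `k_n` are first composed in `ℝ≥0∞`, where sums of nonnegative terms can be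
reordered freely, and then shown to be finite.
-/

open scoped BigOperators ENNReal
open Classical

noncomputable section

open scoped NNReal

section ennIterKernel

variable {Γ : Type*} (ν : Γ → ℝ≥0) (κ : Γ → Γ → ℝ≥0∞)

def ennIterKernel : ℕ → Γ → Γ → ℝ≥0∞
  | 0 => fun x y => if x = y then (ν x : ℝ≥0∞)⁻¹ else 0
  | n + 1 => fun x y => ∑' z, ennIterKernel n x z * κ z y * ν z

variable {ν κ}

lemma ennIterKernel_zero_comm (x y : Γ) :
    ennIterKernel ν κ 0 x y = ennIterKernel ν κ 0 y x := by
  by_cases h : x = y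
  · rw [h]
  · simp [ennIterKernel, h, Ne.symm h]

lemma tsum_ennIterKernel_zero_mul {x : Γ} (hx : ν x ≠ 0) (F : Γ → ℝ≥0∞) :
    ∑' z, ennIterKernel ν κ 0 x z * F z * ν z = F x := by
  rw [tsum_eq_single x fun z hz => by simp [ennIterKernel, Ne.symm hz]]
  simp [ennIterKernel, mul_right_comm _ (F x), ENNReal.inv_mul_cancel, hx]

lemma tsum_mul_ennIterKernel_zero {y : Γ} (hy : ν y ≠ 0) (F : Γ → ℝ≥0∞) :
    ∑' z, F z * ennIterKernel ν κ 0 z y * ν z = F y := by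
  simp_rw [mul_comm (F _), ennIterKernel_zero_comm _ y]
  exact tsum_ennIterKernel_zero_mul hy F

lemma ennIterKernel_one {x : Γ} (hx : ν x ≠ 0) (y : Γ) : ennIterKernel ν κ 1 x y = κ x y :=
  tsum_ennIterKernel_zero_mul hx (κ · y)

lemma ennIterKernel_add (hν : ∀ x, ν x ≠ 0) (p q : ℕ) (x y : Γ) :
    ennIterKernel ν κ (p + q) x y =
      ∑' z, ennIterKernel ν κ p x z * ennIterKernel ν κ q z y * ν z := by
  induction q generalizing y with
  | zero => exact (tsum_mul_ennIterKernel_zero (hν y) _).symm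
  | succ q ih =>
    calc ennIterKernel ν κ (p + q + 1) x y
        = ∑' w, ∑' z,
            ennIterKernel ν κ p x z * ennIterKernel ν κ q z w * ν z * κ w y * ν w := by
          simp_rw [ennIterKernel, ih, ENNReal.tsum_mul_right]
      _ = ∑' z, ennIterKernel ν κ p x z * ennIterKernel ν κ (q + 1) z y * ν z := by
          rw [ENNReal.tsum_comm]
          simp_rw [ennIterKernel, ← ENNReal.tsum_mul_left, ← ENNReal.tsum_mul_right]
          exact tsum_congr fun z => tsum_congr fun w => by ring

lemma ennIterKernel_comm (hν : ∀ x, ν x ≠ 0) (hκ : ∀ x y, κ x y = κ y x)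
    (n : ℕ) (x y : Γ) :
    ennIterKernel ν κ n x y = ennIterKernel ν κ n y x := by
  induction n generalizing x y with
  | zero => exact ennIterKernel_zero_comm x y
  | succ n ih =>
    conv_lhs => rw [add_comm, ennIterKernel_add hν]
    simp_rw [ennIterKernel_one (hν x)]
    rw [ennIterKernel]
    refine tsum_congr fun z => ?_
    rw [ih, hκ, mul_comm (κ _ _)]

lemma tsum_ennIterKernel_mul (hν : ∀ x, ν x ≠ 0) (hκ : ∀ x, ∑' y, κ x y * ν y = 1)
    (n : ℕ) (x : Γ) : ∑' y, ennIterKernel ν κ n x y * ν y = 1 := by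
  induction n with
  | zero => simpa using tsum_ennIterKernel_zero_mul (κ := κ) (hν x) 1
  | succ n ih =>
    calc ∑' y, ennIterKernel ν κ (n + 1) x y * ν y
        = ∑' z, ennIterKernel ν κ n x z * ν z * ∑' y, κ z y * ν y := by
          simp_rw [ennIterKernel, ← ENNReal.tsum_mul_right, ← ENNReal.tsum_mul_left]
          rw [ENNReal.tsum_comm]
          exact tsum_congr fun z => tsum_congr fun w => by ring
      _ = 1 := by simp_rw [hκ, mul_one, ih]

lemma ennIterKernel_ne_top (hν : ∀ x, ν x ≠ 0) (hκ : ∀ x, ∑' y, κ x y * ν y = 1)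
    (n : ℕ) (x y : Γ) : ennIterKernel ν κ n x y ≠ ⊤ := by
  have h : ennIterKernel ν κ n x y * ν y ≠ ⊤ := by
    refine ne_top_of_le_ne_top ENNReal.one_ne_top ?_
    rw [← tsum_ennIterKernel_mul hν hκ n x]
    exact ENNReal.le_tsum (f := fun y => ennIterKernel ν κ n x y * ν y) y
  simpa [ENNReal.mul_eq_top, hν y] using h

end ennIterKernel

section iterKernel

variable {Γ : Type*} {μ : Γ → ℝ} {k : Γ → Γ → ℝ}

lemma tsum_ofReal_mul_toNNReal_eq_one (hμ : ∀ x, 0 < μ x) (hk : ∀ x y, 0 ≤ k x y)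
    (hkm : ∀ x, ∑' y, k x y * μ y = 1) (x : Γ) :
    ∑' y, ENNReal.ofReal (k x y) * ((μ y).toNNReal : ℝ≥0∞) = 1 := by
  have hs : Summable (fun y => k x y * μ y) := by
    by_contra h
    simpa [tsum_eq_zero_of_not_summable h] using hkm x
  rw [← ENNReal.ofReal_one, ← hkm x, ENNReal.ofReal_tsum_of_nonneg
    (fun y => mul_nonneg (hk x y) (hμ y).le) hs]
  exact tsum_congr fun y => (ENNReal.ofReal_mul (hk x y)).symm

lemma iterKernel_eq_toReal (hμ : ∀ x, 0 < μ x) (hk : ∀ x y, 0 ≤ k x y)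
    (hkm : ∀ x, ∑' y, k x y * μ y = 1) (n : ℕ) (x y : Γ) :
    iterKernel μ k n x y = (ennIterKernel (fun x => (μ x).toNNReal)
      (fun x y => ENNReal.ofReal (k x y)) n x y).toReal := by
  induction n generalizing y with
  | zero =>
    by_cases h : x = y
    · simp [iterKernel, ennIterKernel, h, (hμ y).le]
    · simp [iterKernel, ennIterKernel, h]
  | succ n ih =>
    have hν : ∀ x, (μ x).toNNReal ≠ 0 := fun x => (Real.toNNReal_pos.2 (hμ x)).ne'
    have hfin := ennIterKernel_ne_top hν (tsum_ofReal_mul_toNNReal_eq_one hμ hk hkm) n x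
    rw [iterKernel, ennIterKernel, ENNReal.tsum_toReal_eq fun z =>
      ENNReal.mul_ne_top (ENNReal.mul_ne_top (hfin z) ENNReal.ofReal_ne_top) ENNReal.coe_ne_top]
    refine tsum_congr fun z => ?_
    simp [ih, hk z y, (hμ z).le]

lemma iterKernel_nonneg (hμ : ∀ x, 0 < μ x) (hk : ∀ x y, 0 ≤ k x y)
    (hkm : ∀ x, ∑' y, k x y * μ y = 1) (n : ℕ) (x y : Γ) : 0 ≤ iterKernel μ k n x y := by
  rw [iterKernel_eq_toReal hμ hk hkm]
  exact ENNReal.toReal_nonneg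

lemma iterKernel_one (hμ : ∀ x, 0 < μ x) (hk : ∀ x y, 0 ≤ k x y)
    (hkm : ∀ x, ∑' y, k x y * μ y = 1) (x y : Γ) : iterKernel μ k 1 x y = k x y := by
  rw [iterKernel_eq_toReal hμ hk hkm, ennIterKernel_one (ν := fun x => (μ x).toNNReal)
    (Real.toNNReal_pos.2 (hμ x)).ne',
    ENNReal.toReal_ofReal (hk x y)]

lemma hasSum_iterKernel_mul_iterKernel (hμ : ∀ x, 0 < μ x) (hk : ∀ x y, 0 ≤ k x y)
    (hkm : ∀ x, ∑' y, k x y * μ y = 1) (hks : ∀ x y, k x y = k y x) (p q : ℕ) (u v : Γ) :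
    HasSum (fun x => iterKernel μ k p x u * iterKernel μ k q x v * μ x)
      (iterKernel μ k (p + q) u v) := by
  have hν : ∀ x, (μ x).toNNReal ≠ 0 := fun x => (Real.toNNReal_pos.2 (hμ x)).ne'
  have hsymm : ∀ x y, ENNReal.ofReal (k x y) = ENNReal.ofReal (k y x) := fun x y => by rw [hks]
  have hE := ennIterKernel_add hν (κ := fun x y => ENNReal.ofReal (k x y)) p q u v
  simp_rw [ennIterKernel_comm hν hsymm p u] at hE
  have hfin := ennIterKernel_ne_top hν (tsum_ofReal_mul_toNNReal_eq_one hμ hk hkm) (p + q) u v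
  rw [hE] at hfin
  rw [iterKernel_eq_toReal hμ hk hkm, hE,
    ENNReal.tsum_toReal_eq (ENNReal.ne_top_of_tsum_ne_top hfin)]
  convert (ENNReal.summable_toReal hfin).hasSum using 2 with x
  simp [iterKernel_eq_toReal hμ hk hkm, (hμ x).le]

end iterKernel

lemma div_pow_le_div_of_sq_le_mul {a : ℕ → ℝ} (ha₀ : 0 < a 0) (ha : ∀ j, 0 ≤ a j)
    (hconv : ∀ j, a (j + 1) ^ 2 ≤ a j * a (j + 2)) (n : ℕ) :
    (a 1 / a 0) ^ n ≤ a n / a 0 := by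
  rcases (ha 1).eq_or_lt with ha₁ | ha₁
  · rcases n with _ | n
    · simp [ha₀.ne']
    · rw [← ha₁, zero_div, zero_pow n.succ_ne_zero]
      exact div_nonneg (ha _) ha₀.le
  have hpos : ∀ j, 0 < a j ∧ 0 < a (j + 1) := by
    intro j
    induction j with
    | zero => exact ⟨ha₀, ha₁⟩
    | succ j ih =>
      refine ⟨ih.2, pos_of_mul_pos_right ?_ ih.1.le⟩
      exact (pow_pos ih.2 2).trans_le (hconv j)
  have hratio : Monotone fun j => a (j + 1) / a j := by
    refine monotone_nat_of_le_succ fun j => ?_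
    rw [div_le_div_iff₀ (hpos j).1 (hpos j).2, ← sq, mul_comm]
    exact hconv j
  induction n with
  | zero => simp [ha₀.ne']
  | succ n ih =>
    calc (a 1 / a 0) ^ (n + 1) = (a 1 / a 0) ^ n * (a 1 / a 0) := pow_succ _ _
      _ ≤ a n / a 0 * (a (n + 1) / a n) :=
        mul_le_mul ih (hratio (Nat.zero_le n)) (div_nonneg ha₁.le ha₀.le)
          (div_nonneg (ha n) ha₀.le)
      _ = a (n + 1) / a 0 := by field_simp [(hpos n).1.ne']

lemma csSup_pow_le {S : Set ℝ} (hne : S.Nonempty) (hS : ∀ r ∈ S, 0 ≤ r) {C : ℝ} {n : ℕ}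
    (hC : ∀ r ∈ S, r ^ n ≤ C) : sSup S ^ n ≤ C := by
  obtain ⟨r₀, hr₀⟩ := hne
  rcases n.eq_zero_or_pos with rfl | hn
  · simpa using hC r₀ hr₀
  have hC₀ : 0 ≤ C := (pow_nonneg (hS r₀ hr₀) n).trans (hC r₀ hr₀)
  have hroot : (C ^ (n⁻¹ : ℝ)) ^ n = C := Real.rpow_inv_natCast_pow hC₀ hn.ne'
  have hSup : sSup S ≤ C ^ (n⁻¹ : ℝ) := by
    refine csSup_le ⟨r₀, hr₀⟩ fun r hr => ?_
    rw [← pow_le_pow_iff_left₀ (hS r hr) (by positivity) hn.ne', hroot]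
    exact hC r hr
  calc sSup S ^ n ≤ (C ^ (n⁻¹ : ℝ)) ^ n :=
        pow_le_pow_left₀ (Real.sSup_nonneg hS) hSup n
    _ = C := hroot

section testFunction

variable {Γ : Type*} (μ : Γ → ℝ) (k : Γ → Γ → ℝ) (A : Finset Γ) (f : Γ → ℝ)

def rayleighQuotient : ℝ :=
  (∑' x, (∑' y, k x y * f y * μ y) ^ 2 * μ x) / ∑' x, f x ^ 2 * μ x

-- For `f` supported in `A`, `iterApply μ k A f j = Kʲ f` and `iterInner μ k A f j = ⟨f, Kʲ f⟩`.
def iterApply (j : ℕ) (x : Γ) : ℝ := ∑ u ∈ A, iterKernel μ k j x u * f u * μ u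

def iterInner (j : ℕ) : ℝ :=
  ∑ u ∈ A, ∑ v ∈ A, iterKernel μ k j u v * f u * f v * (μ u * μ v)

variable {μ k A f}

lemma hasSum_iterApply_mul_iterApply (hμ : ∀ x, 0 < μ x) (hk : ∀ x y, 0 ≤ k x y)
    (hkm : ∀ x, ∑' y, k x y * μ y = 1) (hks : ∀ x y, k x y = k y x) (p q : ℕ) :
    HasSum (fun x => iterApply μ k A f p x * iterApply μ k A f q x * μ x)
      (iterInner μ k A f (p + q)) := by
  have h : ∀ x, iterApply μ k A f p x * iterApply μ k A f q x * μ x = ∑ u ∈ A, ∑ v ∈ A,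
      iterKernel μ k p x u * iterKernel μ k q x v * μ x * (f u * f v * (μ u * μ v)) := by
    intro x
    simp_rw [iterApply, Finset.sum_mul_sum, Finset.sum_mul]
    exact Finset.sum_congr rfl fun u _ => Finset.sum_congr rfl fun v _ => by ring
  simp_rw [h, iterInner]
  refine hasSum_sum fun u _ => hasSum_sum fun v _ => ?_
  rw [show ∀ c : ℝ, c * f u * f v * (μ u * μ v) = c * (f u * f v * (μ u * μ v)) by
    intro; ring]
  exact (hasSum_iterKernel_mul_iterKernel hμ hk hkm hks p q u v).mul_right _

lemma iterInner_add_sq_le (hμ : ∀ x, 0 < μ x) (hk : ∀ x y, 0 ≤ k x y)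
    (hkm : ∀ x, ∑' y, k x y * μ y = 1) (hks : ∀ x y, k x y = k y x) (p q : ℕ) :
    iterInner μ k A f (p + q) ^ 2 ≤ iterInner μ k A f (p + p) * iterInner μ k A f (q + q) := by
  have hsum := hasSum_iterApply_mul_iterApply (A := A) (f := f) hμ hk hkm hks
  -- `t ↦ ‖t • Kᵖ f + K^q f‖²` is a nonnegative quadratic polynomial
  have hquad : ∀ t : ℝ, 0 ≤ iterInner μ k A f (p + p) * (t * t) +
      2 * iterInner μ k A f (p + q) * t + iterInner μ k A f (q + q) := by
    intro t
    have h := (((hsum p p).mul_left (t * t)).add ((hsum p q).mul_left (2 * t))).add (hsum q q)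
    have := h.nonneg fun x => by
      nlinarith [mul_nonneg (sq_nonneg (t * iterApply μ k A f p x + iterApply μ k A f q x))
        (hμ x).le]
    linarith
  have := discrim_le_zero hquad
  rw [discrim] at this
  nlinarith

lemma iterInner_zero : iterInner μ k A f 0 = ∑ u ∈ A, f u ^ 2 * μ u := by
  refine Finset.sum_congr rfl fun u hu => ?_
  rw [Finset.sum_eq_single_of_mem u hu fun v _ hvu => by simp [iterKernel, Ne.symm hvu]]
  simp only [iterKernel, if_true]
  field_simp

lemma iterInner_zero_pos (hμ : ∀ x, 0 < μ x) (hf : f ≠ 0) (hfA : ∀ x ∉ A, f x = 0) :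
    0 < iterInner μ k A f 0 := by
  obtain ⟨x, hx⟩ := Function.ne_iff.1 hf
  have hxA : x ∈ A := by
    by_contra h
    exact hx (hfA x h)
  rw [iterInner_zero]
  exact Finset.sum_pos' (fun u _ => by have := hμ u; positivity)
    ⟨x, hxA, mul_pos (pow_two_pos_of_ne_zero hx) (hμ x)⟩

lemma iterInner_le (hμ : ∀ x, 0 < μ x) (hk : ∀ x y, 0 ≤ k x y)
    (hkm : ∀ x, ∑' y, k x y * μ y = 1) {j : ℕ} {m : ℝ}
    (hm : ∀ u ∈ A, ∀ v ∈ A, iterKernel μ k j u v ≤ m) :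
    iterInner μ k A f j ≤ m * (∑ u ∈ A, μ u) * iterInner μ k A f 0 := by
  rcases A.eq_empty_or_nonempty with rfl | ⟨a, ha⟩
  · simp [iterInner]
  have hm₀ : 0 ≤ m := (iterKernel_nonneg hμ hk hkm j a a).trans (hm a ha a ha)
  calc iterInner μ k A f j
        ≤ ∑ u ∈ A, ∑ v ∈ A, m * ((|f u| * μ u) * (|f v| * μ v)) := by
        refine Finset.sum_le_sum fun u hu => Finset.sum_le_sum fun v hv => ?_
        have hfuv : f u * f v ≤ |f u| * |f v| := by
          rw [← abs_mul]
          exact le_abs_self _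
        calc iterKernel μ k j u v * f u * f v * (μ u * μ v)
            = iterKernel μ k j u v * (f u * f v) * (μ u * μ v) := by ring
          _ ≤ iterKernel μ k j u v * (|f u| * |f v|) * (μ u * μ v) := by
            have := iterKernel_nonneg hμ hk hkm j u v
            have := mul_pos (hμ u) (hμ v)
            gcongr
          _ ≤ m * (|f u| * |f v|) * (μ u * μ v) := by
            have := mul_pos (hμ u) (hμ v)
            gcongr
            exact hm u hu v hv
          _ = m * ((|f u| * μ u) * (|f v| * μ v)) := by ring
    _ = m * (∑ u ∈ A, |f u| * μ u) ^ 2 := by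
        rw [sq, Finset.sum_mul_sum, Finset.mul_sum]
        simp_rw [Finset.mul_sum]
    _ ≤ m * ((∑ u ∈ A, μ u) * ∑ u ∈ A, f u ^ 2 * μ u) := by
        gcongr
        refine Finset.sum_sq_le_sum_mul_sum_of_sq_le_mul A (fun u _ => (hμ u).le)
          (fun u _ => by have := hμ u; positivity) fun u _ => ?_
        rw [mul_pow, sq_abs]
        exact le_of_eq (by ring)
    _ = m * (∑ u ∈ A, μ u) * iterInner μ k A f 0 := by rw [iterInner_zero, mul_assoc]

lemma iterInner_add_self_nonneg (hμ : ∀ x, 0 < μ x) (hk : ∀ x y, 0 ≤ k x y)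
    (hkm : ∀ x, ∑' y, k x y * μ y = 1) (hks : ∀ x y, k x y = k y x) (j : ℕ) :
    0 ≤ iterInner μ k A f (j + j) :=
  (hasSum_iterApply_mul_iterApply hμ hk hkm hks j j).nonneg fun x =>
    mul_nonneg (mul_self_nonneg _) (hμ x).le

lemma rayleighQuotient_eq (hμ : ∀ x, 0 < μ x) (hk : ∀ x y, 0 ≤ k x y)
    (hkm : ∀ x, ∑' y, k x y * μ y = 1) (hks : ∀ x y, k x y = k y x)
    (hfA : ∀ x ∉ A, f x = 0) :
    rayleighQuotient μ k f = iterInner μ k A f 2 / iterInner μ k A f 0 := by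
  have happly : ∀ x, ∑' y, k x y * f y * μ y = iterApply μ k A f 1 x := by
    intro x
    rw [tsum_eq_sum (s := A) fun y hy => by simp [hfA y hy]]
    simp_rw [iterApply, iterKernel_one hμ hk hkm]
  have hnum : ∑' x, (∑' y, k x y * f y * μ y) ^ 2 * μ x = iterInner μ k A f 2 := by
    simp_rw [happly, sq]
    exact (hasSum_iterApply_mul_iterApply hμ hk hkm hks 1 1).tsum_eq
  have hden : ∑' x, f x ^ 2 * μ x = iterInner μ k A f 0 := by
    rw [iterInner_zero]
    exact tsum_eq_sum fun x hx => by simp [hfA x hx]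
  rw [rayleighQuotient, hnum, hden]

lemma rayleighQuotient_nonneg (hμ : ∀ x, 0 < μ x) : 0 ≤ rayleighQuotient μ k f :=
  div_nonneg (tsum_nonneg fun x => mul_nonneg (sq_nonneg _) (hμ x).le)
    (tsum_nonneg fun x => mul_nonneg (sq_nonneg _) (hμ x).le)

lemma rayleighQuotient_pow_le (hμ : ∀ x, 0 < μ x) (hk : ∀ x y, 0 ≤ k x y)
    (hkm : ∀ x, ∑' y, k x y * μ y = 1) (hks : ∀ x y, k x y = k y x) (hf : f ≠ 0)
    (hfA : ∀ x ∉ A, f x = 0) {n : ℕ} {m : ℝ}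
    (hm : ∀ u v, iterKernel μ k (2 * n) u v ≤ m) :
    rayleighQuotient μ k f ^ n ≤ m * ∑ u ∈ A, μ u := by
  set a : ℕ → ℝ := fun j => iterInner μ k A f (j + j)
  have ha₀ : 0 < a 0 := iterInner_zero_pos hμ hf hfA
  have hconv : ∀ j, a (j + 1) ^ 2 ≤ a j * a (j + 2) := fun j => by
    simpa [a, show j + (j + 2) = j + 1 + (j + 1) by ring] using
      iterInner_add_sq_le hμ hk hkm hks j (j + 2)
  calc rayleighQuotient μ k f ^ n = (a 1 / a 0) ^ n := by
        rw [rayleighQuotient_eq hμ hk hkm hks hfA]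
    _ ≤ a n / a 0 :=
      div_pow_le_div_of_sq_le_mul ha₀ (iterInner_add_self_nonneg hμ hk hkm hks) hconv n
    _ ≤ m * ∑ u ∈ A, μ u := by
      rw [div_le_iff₀ ha₀]
      refine iterInner_le hμ hk hkm fun u _ v _ => ?_
      rw [← two_mul]
      exact hm u v

end testFunction

theorem test_function_lower_bound_general
    {Γ : Type*}
    (μ : Γ → ℝ) (hμpos : ∀ x, 0 < μ x)
    (k : Γ → Γ → ℝ)
    (hk_symm : ∀ x y, k x y = k y x)
    (hk_nonneg : ∀ x y, 0 ≤ k x y)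
    (hk_markov : ∀ x, ∑' y : Γ, k x y * μ y = 1)
    (A : Finset Γ) (hA : A.Nonempty) (n : ℕ) :
    ENNReal.ofReal
        ((sSup {r : ℝ | ∃ f : Γ → ℝ, f ≠ 0 ∧ (∀ x ∉ A, f x = 0) ∧
            r = (∑' x : Γ, (∑' y : Γ, k x y * f y * μ y) ^ 2 * μ x) /
                (∑' x : Γ, f x ^ 2 * μ x)}) ^ n /
          (∑ x ∈ A, μ x)) ≤
      ⨆ x : Γ, ⨆ y : Γ, ENNReal.ofReal (iterKernel μ k (2 * n) x y) := by
  set M := ⨆ x : Γ, ⨆ y : Γ, ENNReal.ofReal (iterKernel μ k (2 * n) x y)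
  rcases eq_top_or_lt_top M with hM | hM
  · exact hM ▸ le_top
  have hm : ∀ u v, iterKernel μ k (2 * n) u v ≤ M.toReal := fun u v =>
    (ENNReal.ofReal_le_iff_le_toReal hM.ne).1 (le_iSup₂
      (f := fun x y => ENNReal.ofReal (iterKernel μ k (2 * n) x y)) u v)
  obtain ⟨a, ha⟩ := hA
  have hsup : sSup {r : ℝ | ∃ f : Γ → ℝ, f ≠ 0 ∧ (∀ x ∉ A, f x = 0) ∧
      r = rayleighQuotient μ k f} ^ n ≤ M.toReal * ∑ x ∈ A, μ x := by
    apply csSup_pow_le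
    · exact ⟨_, Pi.single a 1, by simp,
        fun x hx => Pi.single_eq_of_ne (ne_of_mem_of_not_mem ha hx).symm 1, rfl⟩
    · rintro r ⟨f, -, -, rfl⟩
      exact rayleighQuotient_nonneg hμpos
    · rintro r ⟨f, hf, hfA, rfl⟩
      exact rayleighQuotient_pow_le hμpos hk_nonneg hk_markov hk_symm hf hfA hm
  rw [← ENNReal.ofReal_toReal hM.ne]
  exact ENNReal.ofReal_le_ofReal <| div_le_of_le_mul₀
    (Finset.sum_nonneg fun x _ => (hμpos x).le) ENNReal.toReal_nonneg hsup

/-- Inequality (4.2): `sup_{x,y} k_{2n}(x,y) ≥ λ(A)ⁿ/μ(A)` where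
`λ(A) = sup { ‖Kf‖₂²/‖f‖₂² : supp f ⊆ A, f ≠ 0 }`. -/
theorem test_function_lower_bound
    {Γ : Type*} [Countable Γ]
    (μ : Γ → ℝ) (hμpos : ∀ x, 0 < μ x)
    (k : Γ → Γ → ℝ)
    (hk_symm : ∀ x y, k x y = k y x)
    (hk_nonneg : ∀ x y, 0 ≤ k x y)
    (hk_markov : ∀ x, ∑' y : Γ, k x y * μ y = 1)
    (A : Finset Γ) (hA : A.Nonempty) (n : ℕ) :
    ENNReal.ofReal
        ((sSup {r : ℝ | ∃ f : Γ → ℝ, f ≠ 0 ∧ (∀ x ∉ A, f x = 0) ∧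
            r = (∑' x : Γ, (∑' y : Γ, k x y * f y * μ y) ^ 2 * μ x) /
                (∑' x : Γ, f x ^ 2 * μ x)}) ^ n /
          (∑ x ∈ A, μ x)) ≤
      ⨆ x : Γ, ⨆ y : Γ, ENNReal.ofReal (iterKernel μ k (2 * n) x y) :=
  test_function_lower_bound_general μ hμpos k hk_symm hk_nonneg hk_markov A hA n
end
end

section
/- Let K be a Markov operator symmetric with respect to μ on a countable weighted graph (Γ,μ), with kernel k₁, and suppose there is α > 0 such that k₁(x,x) μ(x) ≥ α for all x ∈ Γ. Then E_K(f,f) ≤ α^{-1} E_{K²}(f,f) for all f ∈ ℓ²(Γ,μ). -/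
open scoped BigOperators
open Classical

noncomputable section

/-! Since `k₂(x,y) ≥ k₁(x,y) k₁(y,y) μ(y) ≥ α k₁(x,y)`, the kernel `k₂ - α k₁` is nonnegative and
symmetric, with row sums `1 - α`. For any such kernel `s` with row sums `c`, the bound
`2 |f x f y| ≤ f x ^ 2 + f y ^ 2` together with symmetry gives `⟨S f, f⟩ ≤ c ‖f‖²`, and the same
majorant makes the double series `∑ₓ∑_y s x y f x f y μ x μ y` absolutely summable (Tonelli for
its nonnegative majorant). Applied to `k₂ - α k₁` this reads
`⟨K² f, f⟩ - α ⟨K f, f⟩ ≤ (1 - α) ‖f‖²`, i.e. `α E_K(f,f) ≤ E_{K²}(f,f)`. -/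

theorem hasSum_prod_of_nonneg {α β : Type*} {F : α × β → ℝ} {g : α → ℝ} {t : ℝ} (hF : 0 ≤ F)
    (hrow : ∀ a, HasSum (fun b => F (a, b)) (g a)) (hg : HasSum g t) : HasSum F t := by
  have hFs : Summable F := by
    refine (summable_prod_of_nonneg hF).2 ⟨fun a => (hrow a).summable, ?_⟩
    simpa only [fun a => (hrow a).tsum_eq] using hg.summable
  rw [hg.unique (hFs.hasSum.prod_fiberwise hrow)]
  exact hFs.hasSum

theorem hasSum_of_tsum_eq_of_ne_zero {ι M : Type*} [AddCommMonoid M] [TopologicalSpace M]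
    {f : ι → M} {a : M} (h : ∑' i, f i = a) (ha : a ≠ 0) : HasSum f a := by
  have hf : Summable f := by
    by_contra hf
    exact ha (h ▸ tsum_eq_zero_of_not_summable hf)
  exact h ▸ hf.hasSum

theorem hasSum_prod_swap {α β M : Type*} [AddCommMonoid M] [TopologicalSpace M] {F : α × β → M}
    {t : M} (hF : HasSum F t) :
    HasSum (fun p : β × α => F p.swap) t :=
  (Equiv.prodComm β α).hasSum_iff.2 hF

namespace DiscreteKernel

variable {Γ : Type*} {μ : Γ → ℝ}

theorem hasSum_mul_kernel {s : Γ → Γ → ℝ} {c : ℝ} (hμ : ∀ x, 0 ≤ μ x)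
    (hs : ∀ x y, 0 ≤ s x y) (hrow : ∀ x, HasSum (fun y => s x y * μ y) c)
    {g : Γ → ℝ} {a : ℝ} (hg0 : 0 ≤ g) (hg : HasSum g a) :
    HasSum (fun p : Γ × Γ => g p.1 * (s p.1 p.2 * μ p.2)) (a * c) :=
  hasSum_prod_of_nonneg (fun _ => mul_nonneg (hg0 _) (mul_nonneg (hs _ _) (hμ _)))
    (fun x => (hrow x).mul_left (g x)) (hg.mul_right c)

/-- The kernel of the product of the operators with kernels `k` and `l`. -/
def comp (μ : Γ → ℝ) (k l : Γ → Γ → ℝ) (x y : Γ) : ℝ :=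
  ∑' z, k x z * l z y * μ z

theorem comp_nonneg {k l : Γ → Γ → ℝ} (hμ : ∀ x, 0 ≤ μ x) (hk : ∀ x y, 0 ≤ k x y)
    (hl : ∀ x y, 0 ≤ l x y) (x y : Γ) : 0 ≤ comp μ k l x y :=
  tsum_nonneg fun z => mul_nonneg (mul_nonneg (hk x z) (hl z y)) (hμ z)

theorem comp_self_symm {k : Γ → Γ → ℝ} (hk_symm : ∀ x y, k x y = k y x) (x y : Γ) :
    comp μ k k x y = comp μ k k y x :=
  tsum_congr fun z => by rw [hk_symm x z, hk_symm z y]; ring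

section comp

variable {k l : Γ → Γ → ℝ} {a b : ℝ}
  (hμ : ∀ x, 0 < μ x) (hk : ∀ x y, 0 ≤ k x y) (hl : ∀ x y, 0 ≤ l x y)
  (hk_row : ∀ x, HasSum (fun y => k x y * μ y) a) (hl_row : ∀ x, HasSum (fun y => l x y * μ y) b)
include hμ hk hl hk_row hl_row

theorem hasSum_comp_mul_swap (x : Γ) :
    HasSum (fun p : Γ × Γ => k x p.2 * μ p.2 * (l p.2 p.1 * μ p.1)) (a * b) :=
  hasSum_prod_swap (hasSum_mul_kernel (fun y => (hμ y).le) hl hl_row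
    (fun z => mul_nonneg (hk x z) (hμ z).le) (hk_row x))

theorem summable_comp_term (x y : Γ) : Summable fun z => k x z * l z y * μ z := by
  have hcol := (hasSum_comp_mul_swap hμ hk hl hk_row hl_row x).summable.prod_factor y
  refine (hcol.mul_right (μ y)⁻¹).congr fun z => ?_
  field_simp [(hμ y).ne']

theorem hasSum_comp_row (x : Γ) : HasSum (fun y => comp μ k l x y * μ y) (a * b) := by
  refine (hasSum_comp_mul_swap hμ hk hl hk_row hl_row x).prod_fiberwise fun y => ?_
  have h : HasSum (fun z => k x z * l z y * μ z * μ y) (comp μ k l x y * μ y) := by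
    rw [comp, ← tsum_mul_right]
    exact ((summable_comp_term hμ hk hl hk_row hl_row x y).mul_right (μ y)).hasSum
  exact h.congr_fun fun z => by ring

theorem mul_diag_le_comp (x y : Γ) : k x y * (l y y * μ y) ≤ comp μ k l x y := by
  have hle := (summable_comp_term hμ hk hl hk_row hl_row x y).le_tsum y fun z _ =>
    mul_nonneg (mul_nonneg (hk x z) (hl z y)) (hμ z).le
  rw [comp]
  linarith [hle]

end comp

/-- The quadratic form `⟨S f, f⟩` in `ℓ²(Γ, μ)` of the operator `S` with kernel `s`. -/
def quadForm (μ : Γ → ℝ) (s : Γ → Γ → ℝ) (f : Γ → ℝ) : ℝ :=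
  ∑' x, (∑' y, s x y * f y * μ y) * f x * μ x

def quadFormTerm (μ : Γ → ℝ) (s : Γ → Γ → ℝ) (f : Γ → ℝ) (p : Γ × Γ) : ℝ :=
  s p.1 p.2 * (f p.1 * μ p.1) * (f p.2 * μ p.2)

section quadForm

variable {s : Γ → Γ → ℝ} {c : ℝ} {f : Γ → ℝ}

theorem abs_quadFormTerm_le (hμ : ∀ x, 0 ≤ μ x) (hs : ∀ x y, 0 ≤ s x y)
    (hs_symm : ∀ x y, s x y = s y x) (x y : Γ) :
    |quadFormTerm μ s f (x, y)| ≤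
      (f x ^ 2 * μ x * (s x y * μ y) + f y ^ 2 * μ y * (s y x * μ x)) / 2 := by
  have hw : 0 ≤ s x y * μ x * μ y := mul_nonneg (mul_nonneg (hs x y) (hμ x)) (hμ y)
  rw [quadFormTerm, hs_symm y x, abs_le]
  constructor
  · nlinarith [mul_nonneg hw (sq_nonneg (f x + f y))]
  · nlinarith [mul_nonneg hw (sq_nonneg (f x - f y))]

variable (hμ : ∀ x, 0 < μ x) (hs : ∀ x y, 0 ≤ s x y) (hs_symm : ∀ x y, s x y = s y x)
  (hrow : ∀ x, HasSum (fun y => s x y * μ y) c) (hf : Summable fun x => f x ^ 2 * μ x)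
include hμ hs hrow hf

theorem hasSum_quadFormTerm_bound :
    HasSum (fun p : Γ × Γ => (f p.1 ^ 2 * μ p.1 * (s p.1 p.2 * μ p.2) +
      f p.2 ^ 2 * μ p.2 * (s p.2 p.1 * μ p.1)) / 2) (c * ∑' x, f x ^ 2 * μ x) := by
  have h := hasSum_mul_kernel (fun x => (hμ x).le) hs hrow
    (fun x => mul_nonneg (sq_nonneg (f x)) (hμ x).le) hf.hasSum
  have h2 := (h.add (hasSum_prod_swap h)).div_const 2
  rwa [add_self_div_two, mul_comm] at h2

include hs_symm

theorem summable_quadFormTerm :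
    Summable (quadFormTerm μ s f) :=
  (hasSum_quadFormTerm_bound hμ hs hrow hf).summable.of_norm_bounded fun p =>
    abs_quadFormTerm_le (fun x => (hμ x).le) hs hs_symm p.1 p.2

theorem hasSum_quadFormTerm_row (x : Γ) :
    HasSum (fun y => quadFormTerm μ s f (x, y)) ((∑' y, s x y * f y * μ y) * f x * μ x) := by
  by_cases hfx : f x = 0
  · simpa only [quadFormTerm, hfx, zero_mul, mul_zero] using hasSum_zero
  have hinner : Summable fun y => s x y * f y * μ y :=
    (((summable_quadFormTerm hμ hs hs_symm hrow hf).prod_factor x).div_const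
      (f x * μ x)).congr fun y => by
        simp only [quadFormTerm]
        field_simp [(hμ x).ne']
  rw [mul_assoc]
  exact (hinner.hasSum.mul_right (f x * μ x)).congr_fun fun y => by simp only [quadFormTerm]; ring

theorem hasSum_quadForm_rowSum :
    HasSum (fun x => (∑' y, s x y * f y * μ y) * f x * μ x)
      (∑' p, quadFormTerm μ s f p) :=
  (summable_quadFormTerm hμ hs hs_symm hrow hf).hasSum.prod_fiberwise
    (hasSum_quadFormTerm_row hμ hs hs_symm hrow hf)

theorem hasSum_quadFormTerm :
    HasSum (quadFormTerm μ s f) (quadForm μ s f) := by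
  rw [quadForm, (hasSum_quadForm_rowSum hμ hs hs_symm hrow hf).tsum_eq]
  exact (summable_quadFormTerm hμ hs hs_symm hrow hf).hasSum

theorem quadForm_le : quadForm μ s f ≤ c * ∑' x, f x ^ 2 * μ x := by
  refine hasSum_le (fun p => ?_) (hasSum_quadFormTerm hμ hs hs_symm hrow hf)
    (hasSum_quadFormTerm_bound hμ hs hrow hf)
  exact (le_abs_self _).trans (abs_quadFormTerm_le (fun x => (hμ x).le) hs hs_symm p.1 p.2)

theorem dirichletForm_eq_sub_quadForm :
    dirichletForm μ s f = ∑' x, f x ^ 2 * μ x - quadForm μ s f := by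
  rw [dirichletForm, quadForm,
    ← hf.tsum_sub (hasSum_quadForm_rowSum hμ hs hs_symm hrow hf).summable]
  exact tsum_congr fun x => by ring

theorem quadForm_sub_mul_le {t : Γ → Γ → ℝ} {a d : ℝ} (ht : ∀ x y, 0 ≤ t x y)
    (ht_symm : ∀ x y, t x y = t y x) (ht_row : ∀ x, HasSum (fun y => t x y * μ y) d)
    (hts : ∀ x y, a * t x y ≤ s x y) :
    quadForm μ s f - a * quadForm μ t f ≤ (c - a * d) * ∑' x, f x ^ 2 * μ x := by
  set u : Γ → Γ → ℝ := fun x y => s x y - a * t x y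
  have hu : ∀ x y, 0 ≤ u x y := fun x y => sub_nonneg.2 (hts x y)
  have hu_symm : ∀ x y, u x y = u y x := fun x y => by simp only [u, hs_symm x y, ht_symm x y]
  have hu_row : ∀ x, HasSum (fun y => u x y * μ y) (c - a * d) := fun x =>
    ((hrow x).sub ((ht_row x).mul_left a)).congr_fun fun y => by simp only [u]; ring
  have hQu : quadForm μ u f = quadForm μ s f - a * quadForm μ t f :=
    (hasSum_quadFormTerm hμ hu hu_symm hu_row hf).unique <|
      ((hasSum_quadFormTerm hμ hs hs_symm hrow hf).sub
        ((hasSum_quadFormTerm hμ ht ht_symm ht_row hf).mul_left a)).congr_fun fun p => by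
          simp only [quadFormTerm, u]; ring
  exact hQu ▸ quadForm_le hμ hu hu_symm hu_row hf

end quadForm

end DiscreteKernel

open DiscreteKernel in
theorem dirichlet_K_le_dirichlet_K_sq_general
    {Γ : Type*}
    (μ : Γ → ℝ) (hμpos : ∀ x, 0 < μ x)
    (k : Γ → Γ → ℝ)
    (hk_symm : ∀ x y, k x y = k y x)
    (hk_nonneg : ∀ x y, 0 ≤ k x y)
    (hk_markov : ∀ x, ∑' y : Γ, k x y * μ y = 1)
    (α : ℝ) (hα : 0 < α) (hdiag : ∀ x, α ≤ k x x * μ x) :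
    ∀ f : Γ → ℝ, Summable (fun x : Γ => f x ^ 2 * μ x) →
      dirichletForm μ k f ≤
        α⁻¹ * dirichletForm μ (fun x y => ∑' z : Γ, k x z * k z y * μ z) f := by
  intro f hf
  have hk_row x := hasSum_of_tsum_eq_of_ne_zero (hk_markov x) one_ne_zero
  change _ ≤ α⁻¹ * dirichletForm μ (comp μ k k) f
  have hk₂_nonneg := comp_nonneg (fun x => (hμpos x).le) hk_nonneg hk_nonneg
  have hk₂_symm := comp_self_symm (μ := μ) hk_symm
  have hk₂_row : ∀ x, HasSum (fun y => comp μ k k x y * μ y) 1 := fun x => by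
    simpa using hasSum_comp_row hμpos hk_nonneg hk_nonneg hk_row hk_row x
  have hαk : ∀ x y, α * k x y ≤ comp μ k k x y := fun x y => by
    nlinarith [mul_diag_le_comp hμpos hk_nonneg hk_nonneg hk_row hk_row x y,
      mul_le_mul_of_nonneg_left (hdiag y) (hk_nonneg x y)]
  have hQ := quadForm_sub_mul_le hμpos hk₂_nonneg hk₂_symm hk₂_row hf hk_nonneg hk_symm hk_row hαk
  rw [dirichletForm_eq_sub_quadForm hμpos hk_nonneg hk_symm hk_row hf,
    dirichletForm_eq_sub_quadForm hμpos hk₂_nonneg hk₂_symm hk₂_row hf, le_inv_mul_iff₀ hα]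
  linarith

/-- If `k₁(x,x) μ(x) ≥ α > 0` for all `x`, then `E_K(f,f) ≤ α⁻¹ E_{K²}(f,f)`. -/
theorem dirichlet_K_le_dirichlet_K_sq
    {Γ : Type*} [Countable Γ]
    (μ : Γ → ℝ) (hμpos : ∀ x, 0 < μ x)
    (k : Γ → Γ → ℝ)
    (hk_symm : ∀ x y, k x y = k y x)
    (hk_nonneg : ∀ x y, 0 ≤ k x y)
    (hk_markov : ∀ x, ∑' y : Γ, k x y * μ y = 1)
    (α : ℝ) (hα : 0 < α) (hdiag : ∀ x, α ≤ k x x * μ x) :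
    ∀ f : Γ → ℝ, Summable (fun x : Γ => f x ^ 2 * μ x) →
      dirichletForm μ k f ≤
        α⁻¹ * dirichletForm μ (fun x y => ∑' z : Γ, k x z * k z y * μ z) f :=
  dirichlet_K_le_dirichlet_K_sq_general μ hμpos k hk_symm hk_nonneg hk_markov α hα hdiag
end
end
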